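/- arXiv:2204.04414 — 16 statements merged into one kernel-verified Lean document; each statement's English description precedes it below -/
import Mathlib

section
/- Let E and F be normed spaces over 𝕂 (ℝ or ℂ), T : E → F a linear map (not necessarily continuous), and β > 0. Then ‖Tx‖ ≥ β‖x‖ for all x ∈ E if and only if for every continuous linear functional x* on E there exists a continuous linear functional y* on F such that x* = y* ∘ T and ‖y*‖ ≤ ‖x*‖/β. -/
/-!
If `‖T x‖ ≥ β ‖x‖`, then `T` is injective and `T x ↦ x* x` is a functional on the range of `T`
of norm at most `‖x*‖ / β`; Hahn–Banach extends it to `F` without increasing the norm.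
Conversely, testing the factorization on a norming functional `x*` of `x` (`‖x*‖ ≤ 1`,
`x* x = ‖x‖`) gives `‖x‖ = ‖y* (T x)‖ ≤ ‖T x‖ / β`.
-/

namespace LinearMap

theorem injective_of_mul_norm_le {R E F : Type*} [Ring R]
    [NormedAddCommGroup E] [Module R E] [SeminormedAddCommGroup F] [Module R F]
    {T : E →ₗ[R] F} {β : ℝ} (hβ : 0 < β) (hT : ∀ x, β * ‖x‖ ≤ ‖T x‖) :
    Function.Injective T := by
  refine (injective_iff_map_eq_zero T).2 fun x hx => norm_le_zero_iff.1 ?_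
  have := hT x
  rw [hx, norm_zero] at this
  exact nonpos_of_mul_nonpos_right this hβ

variable {𝕜 E F : Type*} [RCLike 𝕜]
  [NormedAddCommGroup E] [NormedSpace 𝕜 E] [NormedAddCommGroup F] [NormedSpace 𝕜 F]
  {T : E →ₗ[𝕜] F} {β : ℝ}

theorem exists_dual_factor_of_mul_norm_le (hβ : 0 < β) (hT : ∀ x, β * ‖x‖ ≤ ‖T x‖)
    (f : E →L[𝕜] 𝕜) :
    ∃ g : F →L[𝕜] 𝕜, (∀ x, f x = g (T x)) ∧ ‖g‖ ≤ ‖f‖ / β := by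
  set e := LinearEquiv.ofInjective T (injective_of_mul_norm_le hβ hT)
  set φ : range T →ₗ[𝕜] 𝕜 := f.toLinearMap ∘ₗ e.symm.toLinearMap
  have hφe : ∀ x, φ (e x) = f x := fun x => by simp [φ]
  have hφ : ∀ y, ‖φ y‖ ≤ ‖f‖ / β * ‖y‖ := by
    intro y
    obtain ⟨x, rfl⟩ := e.surjective y
    have hx : ‖x‖ ≤ ‖T x‖ / β := by rw [le_div_iff₀ hβ, mul_comm]; exact hT x
    calc ‖φ (e x)‖ = ‖f x‖ := by rw [hφe]
      _ ≤ ‖f‖ * ‖x‖ := f.le_opNorm x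
      _ ≤ ‖f‖ * (‖T x‖ / β) := by gcongr
      _ = ‖f‖ / β * ‖e x‖ := by rw [Submodule.coe_norm, LinearEquiv.ofInjective_apply]; ring
  obtain ⟨g, hg, hgnorm⟩ := exists_extension_norm_eq (range T) (φ.mkContinuous _ hφ)
  refine ⟨g, fun x => ?_, hgnorm ▸ φ.mkContinuous_norm_le (by positivity) hφ⟩
  have hex : e x = ⟨T x, mem_range_self T x⟩ := Subtype.ext (LinearEquiv.ofInjective_apply T x)
  rw [← hφe, ← φ.mkContinuous_apply _ hφ, ← hg, hex]

theorem mul_norm_le_of_forall_exists_dual_factor (hβ : 0 < β)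
    (h : ∀ f : E →L[𝕜] 𝕜, ∃ g : F →L[𝕜] 𝕜, (∀ x, f x = g (T x)) ∧ ‖g‖ ≤ ‖f‖ / β) (x : E) :
    β * ‖x‖ ≤ ‖T x‖ := by
  obtain ⟨f, hf, hfx⟩ := exists_dual_vector'' 𝕜 x
  obtain ⟨g, hfg, hg⟩ := h f
  have hg1 : ‖g‖ ≤ 1 / β := hg.trans (by gcongr)
  have hx : ‖x‖ ≤ 1 / β * ‖T x‖ :=
    calc ‖x‖ = ‖f x‖ := by simp [hfx]
      _ = ‖g (T x)‖ := by rw [hfg]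
      _ ≤ ‖g‖ * ‖T x‖ := g.le_opNorm _
      _ ≤ 1 / β * ‖T x‖ := by gcongr
  calc β * ‖x‖ ≤ β * (1 / β * ‖T x‖) := by gcongr
    _ = ‖T x‖ := by field_simp

end LinearMap

/-- Theorem 1.2 (operator version of the Representation Theorem of Lions):
for a linear (not necessarily continuous) map `T : E → F` between normed
spaces and `β > 0`, one has `‖Tx‖ ≥ β‖x‖` for all `x` iff every continuous
linear functional on `E` factors through `T` by a continuous linear
functional on `F` of norm at most `‖x*‖/β`. -/
theorem stmt0 {𝕜 E F : Type*} [RCLike 𝕜]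
    [NormedAddCommGroup E] [NormedSpace 𝕜 E]
    [NormedAddCommGroup F] [NormedSpace 𝕜 F]
    (T : E →ₗ[𝕜] F) (β : ℝ) (hβ : 0 < β) :
    (∀ x : E, β * ‖x‖ ≤ ‖T x‖) ↔
      ∀ xstar : E →L[𝕜] 𝕜, ∃ ystar : F →L[𝕜] 𝕜,
        (∀ x : E, xstar x = ystar (T x)) ∧ ‖ystar‖ ≤ ‖xstar‖ / β :=
  ⟨fun hT => T.exists_dual_factor_of_mul_norm_le hβ hT,
    T.mul_norm_le_of_forall_exists_dual_factor hβ⟩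
end

section
/- Let X be a reflexive Banach space and Y a normed space over ℂ. Let a : X × Y → ℂ be sesquilinear such that for each y ∈ Y the map x ↦ a(x,y) is continuous on X. Let β > 0. Then the following are equivalent: (i) sup over x with ‖x‖ ≤ 1 of |a(x,y)| ≥ β‖y‖ for all y ∈ Y; (ii) for every continuous antilinear functional L on Y there exists x_L ∈ X with ‖x_L‖ ≤ ‖L‖/β and L(y) = a(x_L, y) for all y ∈ Y. -/
/-!
Write `A y := a (·, y)`, an antilinear map from `Y` into the dual `X'`; the sup in (i) is `‖A y‖`.
If (i) holds, `A` is bounded below, hence injective, so `A y ↦ L y` is a well-defined linear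
functional on `range A` of norm at most `‖L‖ / β`. Hahn–Banach extends it to `X'` with the same
bound, and reflexivity represents the extension by some `x_L ∈ X` with `‖x_L‖ ≤ ‖L‖ / β`.
Conversely, applying (ii) to the conjugate of a norming functional of `y` yields
`‖y‖ = |a(x, y)| ≤ ‖A y‖ ‖x‖ ≤ ‖A y‖ / β`.
-/

theorem ContinuousLinearMap.iSup_norm_le_one_apply_eq_opNorm {𝕜 𝕜₂ E F : Type*}
    [DenselyNormedField 𝕜] [NontriviallyNormedField 𝕜₂] {σ₁₂ : 𝕜 →+* 𝕜₂} [RingHomIsometric σ₁₂]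
    [NormedAddCommGroup E] [NormedSpace 𝕜 E] [SeminormedAddCommGroup F] [NormedSpace 𝕜₂ F]
    (f : E →SL[σ₁₂] F) :
    ⨆ x : {x : E // ‖x‖ ≤ 1}, ‖f x‖ = ‖f‖ := by
  rw [← f.sSup_unitClosedBall_eq_norm, sSup_image']
  exact (Equiv.subtypeEquivRight fun _ => mem_closedBall_zero_iff.symm).iSup_congr fun _ => rfl

section

variable {𝕜 E X Y : Type*} [RCLike 𝕜] [NormedAddCommGroup Y] [NormedSpace 𝕜 Y]

def LinearMap.flipStrongDual [NormedAddCommGroup X] [NormedSpace 𝕜 X]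
    (a : X →ₗ[𝕜] Y →ₛₗ[starRingEnd 𝕜] 𝕜) (ha : ∀ y, Continuous fun x => a x y) :
    Y →ₛₗ[starRingEnd 𝕜] StrongDual 𝕜 X where
  toFun y := ⟨a.flip y, ha y⟩
  map_add' _ _ := ContinuousLinearMap.ext fun x => map_add (a x) _ _
  map_smul' _ _ := ContinuousLinearMap.ext fun x => map_smulₛₗ (a x) _ _

theorem LinearMap.injective_of_mul_norm_le_s1 [SeminormedAddCommGroup E] [NormedSpace 𝕜 E]
    (A : Y →ₛₗ[starRingEnd 𝕜] E) {β : ℝ} (hβ : 0 < β) (hA : ∀ y, β * ‖y‖ ≤ ‖A y‖) :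
    Function.Injective A := by
  refine (injective_iff_map_eq_zero A).2 fun y hy => norm_le_zero_iff.1 ?_
  have hbound := hA y
  rw [hy, norm_zero] at hbound
  nlinarith [norm_nonneg y]

theorem LinearMap.exists_strongDual_apply_eq_of_mul_norm_le [SeminormedAddCommGroup E]
    [NormedSpace 𝕜 E] (A : Y →ₛₗ[starRingEnd 𝕜] E) (L : Y →SL[starRingEnd 𝕜] 𝕜) {β : ℝ}
    (hβ : 0 < β) (hA : ∀ y, β * ‖y‖ ≤ ‖A y‖) :
    ∃ g : StrongDual 𝕜 E, ‖g‖ ≤ ‖L‖ / β ∧ ∀ y, g (A y) = L y := by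
  let e := LinearEquiv.ofInjective A (A.injective_of_mul_norm_le_s1 hβ hA)
  have hbound : ∀ m, ‖L (e.symm m)‖ ≤ ‖L‖ / β * ‖m‖ := fun m => by
    have hm : β * ‖e.symm m‖ ≤ ‖m‖ := by
      simpa [← LinearEquiv.ofInjective_apply, e] using hA (e.symm m)
    calc ‖L (e.symm m)‖ ≤ ‖L‖ * ‖e.symm m‖ := L.le_opNorm _
      _ ≤ ‖L‖ * (‖m‖ / β) := by gcongr; rwa [le_div_iff₀' hβ]
      _ = ‖L‖ / β * ‖m‖ := by ring
  let ℓ : StrongDual 𝕜 (LinearMap.range A) :=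
    (L.toLinearMap.comp e.symm.toLinearMap).mkContinuous (‖L‖ / β) hbound
  obtain ⟨g, hgℓ, hg⟩ := exists_extension_norm_eq _ ℓ
  refine ⟨g, hg ▸ LinearMap.mkContinuous_norm_le _ (by positivity) hbound, fun y => ?_⟩
  simpa [ℓ, e] using hgℓ (e y)

theorem LinearMap.exists_apply_eq_of_mul_norm_le [NormedAddCommGroup X] [NormedSpace 𝕜 X]
    (hrefl : Function.Surjective (NormedSpace.inclusionInDoubleDual 𝕜 X))
    (A : Y →ₛₗ[starRingEnd 𝕜] StrongDual 𝕜 X) (L : Y →SL[starRingEnd 𝕜] 𝕜) {β : ℝ}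
    (hβ : 0 < β) (hA : ∀ y, β * ‖y‖ ≤ ‖A y‖) :
    ∃ x : X, ‖x‖ ≤ ‖L‖ / β ∧ ∀ y, L y = A y x := by
  obtain ⟨g, hg, hgA⟩ := A.exists_strongDual_apply_eq_of_mul_norm_le L hβ hA
  obtain ⟨x, rfl⟩ := hrefl g
  refine ⟨x, ?_, fun y => (hgA y).symm⟩
  rwa [← (NormedSpace.inclusionInDoubleDualLi 𝕜).norm_map x]

theorem LinearMap.mul_norm_le_of_forall_exists_apply_eq [NormedAddCommGroup X] [NormedSpace 𝕜 X]
    (A : Y →ₛₗ[starRingEnd 𝕜] StrongDual 𝕜 X) {β : ℝ} (hβ : 0 < β)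
    (hrep : ∀ L : Y →SL[starRingEnd 𝕜] 𝕜, ∃ x : X, ‖x‖ ≤ ‖L‖ / β ∧ ∀ y, L y = A y x) (y : Y) :
    β * ‖y‖ ≤ ‖A y‖ := by
  obtain ⟨g, hg, hgy⟩ := exists_dual_vector'' 𝕜 y
  let L : Y →SL[starRingEnd 𝕜] 𝕜 := (starₗᵢ 𝕜).toLinearIsometry.toContinuousLinearMap.comp g
  have hL : ‖L‖ ≤ 1 := by rwa [LinearIsometry.norm_toContinuousLinearMap_comp]
  obtain ⟨x, hx, hxL⟩ := hrep L
  have hLy : ‖y‖ = ‖A y x‖ := by simp [← hxL, L, hgy]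
  calc β * ‖y‖ ≤ β * (‖A y‖ * ‖x‖) := by gcongr; exact hLy ▸ (A y).le_opNorm x
    _ ≤ β * (‖A y‖ * (1 / β)) := by gcongr; exact hx.trans (by gcongr)
    _ = ‖A y‖ := by field_simp

end

theorem stmt1_general {X Y : Type*}
    [NormedAddCommGroup X] [NormedSpace ℂ X]
    [NormedAddCommGroup Y] [NormedSpace ℂ Y]
    (hrefl : Function.Surjective (NormedSpace.inclusionInDoubleDual ℂ X))
    (a : X →ₗ[ℂ] (Y →ₛₗ[starRingEnd ℂ] ℂ))
    (hacont : ∀ y : Y, Continuous fun x : X => a x y)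
    (β : ℝ) (hβ : 0 < β) :
    (∀ y : Y, β * ‖y‖ ≤ ⨆ x : {x : X // ‖x‖ ≤ 1}, ‖a x.1 y‖) ↔
      ∀ L : Y →SL[starRingEnd ℂ] ℂ, ∃ xL : X,
        ‖xL‖ ≤ ‖L‖ / β ∧ ∀ y : Y, L y = a xL y := by
  let A := a.flipStrongDual hacont
  have hsup (y : Y) : ⨆ x : {x : X // ‖x‖ ≤ 1}, ‖a x.1 y‖ = ‖A y‖ :=
    (A y).iSup_norm_le_one_apply_eq_opNorm
  simp only [hsup]
  exact ⟨fun hA L => A.exists_apply_eq_of_mul_norm_le hrefl L hβ hA,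
    A.mul_norm_le_of_forall_exists_apply_eq hβ⟩

/-- Representation Theorem of Lions, complex version. `X` is a reflexive
complex Banach space (reflexivity expressed as surjectivity of the canonical
inclusion into the double dual), `Y` a complex normed space, and
`a : X × Y → ℂ` is sesquilinear (linear in `x`, antilinear in `y`) and
continuous in `x` for each fixed `y`. -/
theorem stmt1 {X Y : Type*}
    [NormedAddCommGroup X] [NormedSpace ℂ X] [CompleteSpace X]
    [NormedAddCommGroup Y] [NormedSpace ℂ Y]
    (hrefl : Function.Surjective (NormedSpace.inclusionInDoubleDual ℂ X))
    (a : X →ₗ[ℂ] (Y →ₛₗ[starRingEnd ℂ] ℂ))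
    (hacont : ∀ y : Y, Continuous fun x : X => a x y)
    (β : ℝ) (hβ : 0 < β) :
    (∀ y : Y, β * ‖y‖ ≤ ⨆ x : {x : X // ‖x‖ ≤ 1}, ‖a x.1 y‖) ↔
      ∀ L : Y →SL[starRingEnd ℂ] ℂ, ∃ xL : X,
        ‖xL‖ ≤ ‖L‖ / β ∧ ∀ y : Y, L y = a xL y :=
  stmt1_general hrefl a hacont β hβ
end

section
/- Let X be a reflexive Banach space and Y a normed space continuously embedded in X. Let β > 0 and let a be a sesquilinear form on X × Y such that |a(y,y)| ≥ β‖y‖_Y² for all y ∈ Y and such that x ↦ a(x,y) is continuous on X for each y ∈ Y. Then for every continuous antilinear functional L on Y there exists x_L ∈ X with a(x_L, y) = L(y) for all y ∈ Y. -/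
/-! Coercivity makes `y ↦ a(·, y)` a conjugate-linear embedding of `Y` into the dual of `X` with a
bounded inverse, so `L` transported to its range is a bounded linear functional there. Hahn–Banach
extends it to all of the dual, and reflexivity represents the extension by a point `x_L ∈ X`. -/

section

variable {𝕜 X Y E : Type*} [RCLike 𝕜]
  [NormedAddCommGroup X] [NormedSpace 𝕜 X] [NormedAddCommGroup Y] [NormedSpace 𝕜 Y]
  [NormedAddCommGroup E] [NormedSpace 𝕜 E]

namespace LinearMap

def toStrongDualOfContinuousLeft {σ : 𝕜 →+* 𝕜} (a : X →ₗ[𝕜] Y →ₛₗ[σ] 𝕜)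
    (ha : ∀ y, Continuous fun x => a x y) : Y →ₛₗ[σ] StrongDual 𝕜 X where
  toFun y := ⟨a.flip y, ha y⟩
  map_add' y₁ y₂ := by ext x; exact (a x).map_add y₁ y₂
  map_smul' c y := by ext x; exact (a x).map_smulₛₗ c y

end LinearMap

theorem norm_le_of_coercive (F : Y → StrongDual 𝕜 X) (J : Y →L[𝕜] X) {β : ℝ} (hβ : 0 < β)
    (hF : ∀ y, β * ‖y‖ ^ 2 ≤ ‖F y (J y)‖) (y : Y) : ‖y‖ ≤ ‖J‖ / β * ‖F y‖ := by
  rcases (norm_nonneg y).eq_or_lt with hy | hy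
  · rw [← hy]; positivity
  rw [div_mul_eq_mul_div, le_div_iff₀ hβ, ← mul_le_mul_iff_left₀ hy]
  calc ‖y‖ * β * ‖y‖ = β * ‖y‖ ^ 2 := by ring
    _ ≤ ‖F y‖ * ‖J y‖ := (hF y).trans ((F y).le_opNorm _)
    _ ≤ ‖F y‖ * (‖J‖ * ‖y‖) := by gcongr; exact J.le_opNorm y
    _ = ‖J‖ * ‖F y‖ * ‖y‖ := by ring

theorem exists_strongDual_apply_eq_of_norm_le (T : Y →ₛₗ[starRingEnd 𝕜] E) (C : ℝ)
    (hT : ∀ y, ‖y‖ ≤ C * ‖T y‖) (L : Y →SL[starRingEnd 𝕜] 𝕜) :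
    ∃ g : StrongDual 𝕜 E, ∀ y, g (T y) = L y := by
  have hTinj : Function.Injective T := by
    refine (injective_iff_map_eq_zero T).2 fun y hy => norm_le_zero_iff.1 ?_
    simpa [hy] using hT y
  let e := LinearEquiv.ofInjective T hTinj
  let φ : StrongDual 𝕜 (LinearMap.range T) :=
    (L.toLinearMap.comp e.symm.toLinearMap).mkContinuous (‖L‖ * C) fun w => by
      obtain ⟨y, rfl⟩ := e.surjective w
      calc ‖L (e.symm (e y))‖ = ‖L y‖ := by rw [e.symm_apply_apply]
        _ ≤ ‖L‖ * ‖y‖ := L.le_opNorm y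
        _ ≤ ‖L‖ * (C * ‖e y‖) := by gcongr; exact hT y
        _ = ‖L‖ * C * ‖e y‖ := by ring
  obtain ⟨g, hg, -⟩ := exists_extension_norm_eq _ φ
  refine ⟨g, fun y => ?_⟩
  simpa [φ, e] using hg (e y)

end

theorem stmt2_general {𝕜 X Y : Type*} [RCLike 𝕜]
    [NormedAddCommGroup X] [NormedSpace 𝕜 X]
    [NormedAddCommGroup Y] [NormedSpace 𝕜 Y]
    (hrefl : Function.Surjective (NormedSpace.inclusionInDoubleDual 𝕜 X))
    (J : Y →L[𝕜] X)
    (a : X →ₗ[𝕜] (Y →ₛₗ[starRingEnd 𝕜] 𝕜))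
    (hacont : ∀ y : Y, Continuous fun x : X => a x y)
    (β : ℝ) (hβ : 0 < β)
    (hcoer : ∀ y : Y, β * ‖y‖ ^ 2 ≤ ‖a (J y) y‖) :
    ∀ L : Y →SL[starRingEnd 𝕜] 𝕜, ∃ xL : X, ∀ y : Y, a xL y = L y := by
  intro L
  let A := a.toStrongDualOfContinuousLeft hacont
  obtain ⟨g, hg⟩ := exists_strongDual_apply_eq_of_norm_le A _ (norm_le_of_coercive A J hβ hcoer) L
  obtain ⟨x, rfl⟩ := hrefl g
  exact ⟨x, hg⟩

/-- Corollary 2.3: RTL for a form which is coercive on the diagonal of a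
normed space `Y` continuously embedded (via `J`) in a reflexive Banach
space `X`. -/
theorem stmt2 {𝕜 X Y : Type*} [RCLike 𝕜]
    [NormedAddCommGroup X] [NormedSpace 𝕜 X] [CompleteSpace X]
    [NormedAddCommGroup Y] [NormedSpace 𝕜 Y]
    (hrefl : Function.Surjective (NormedSpace.inclusionInDoubleDual 𝕜 X))
    (J : Y →L[𝕜] X) (hJ : Function.Injective J)
    (a : X →ₗ[𝕜] (Y →ₛₗ[starRingEnd 𝕜] 𝕜))
    (hacont : ∀ y : Y, Continuous fun x : X => a x y)
    (β : ℝ) (hβ : 0 < β)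
    (hcoer : ∀ y : Y, β * ‖y‖ ^ 2 ≤ ‖a (J y) y‖) :
    ∀ L : Y →SL[starRingEnd 𝕜] 𝕜, ∃ xL : X, ∀ y : Y, a xL y = L y :=
  stmt2_general hrefl J a hacont β hβ hcoer
end

section
/- Let B be a densely defined linear operator on a Banach space X. Then B is dissipative (i.e. ‖x − tBx‖ ≥ ‖x‖ for all x ∈ dom(B) and all t > 0) if and only if for all t > 0 and all y* ∈ X* there exists x* ∈ dom(B*) such that x* − t B* x* = y* and ‖x*‖ ≤ ‖y*‖. -/
/-!
Write `S = I - tB` on `dom(B)`. Dissipativity says `‖x‖ ≤ ‖S x‖`, so `S` is injective and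
`y* ∘ S⁻¹` is a functional on `range S` of norm at most `‖y*‖`; a Hahn–Banach extension `x*`
satisfies `x* ∘ S = y*` on `dom(B)`, i.e. `x* ∈ dom(B*)` with `B* x* = t⁻¹ (x* - y*)`.
Conversely, `y*(x) = x*(x - tBx)` gives `‖y*(x)‖ ≤ ‖y*‖ ‖x - tBx‖` for every `y*`, and the norm
of `x` is the supremum of `‖y*(x)‖` over the unit ball of `X*`.
-/

section BoundedBelow

variable {𝕜 E F : Type*} [RCLike 𝕜] [NormedAddCommGroup E] [NormedSpace 𝕜 E]
  [SeminormedAddCommGroup F] [NormedSpace 𝕜 F]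

theorem LinearMap.injective_of_norm_le_norm_apply {S : E →ₗ[𝕜] F}
    (hS : ∀ x, ‖x‖ ≤ ‖S x‖) : Function.Injective S :=
  (injective_iff_map_eq_zero S).2 fun x hx =>
    norm_le_zero_iff.1 (by simpa [hx] using hS x)

theorem LinearMap.exists_dual_comp_eq_of_norm_le_norm_apply (S : E →ₗ[𝕜] F)
    (hS : ∀ x, ‖x‖ ≤ ‖S x‖) (φ : StrongDual 𝕜 E) :
    ∃ g : StrongDual 𝕜 F, (∀ x, g (S x) = φ x) ∧ ‖g‖ ≤ ‖φ‖ := by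
  let e : E ≃ₗ[𝕜] LinearMap.range S :=
    LinearEquiv.ofInjective S (injective_of_norm_le_norm_apply hS)
  let f : LinearMap.range S →ₗ[𝕜] 𝕜 := (φ : E →ₗ[𝕜] 𝕜) ∘ₗ (e.symm : LinearMap.range S →ₗ[𝕜] E)
  have hf : ∀ r, ‖f r‖ ≤ ‖φ‖ * ‖r‖ := fun r =>
    calc ‖φ (e.symm r)‖ ≤ ‖φ‖ * ‖e.symm r‖ := φ.le_opNorm _
      _ ≤ ‖φ‖ * ‖S (e.symm r)‖ := by gcongr; exact hS _
      _ = ‖φ‖ * ‖r‖ := by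
        rw [show S (e.symm r) = (e (e.symm r) : F) from rfl, e.apply_symm_apply]; rfl
  obtain ⟨g, hg, hg_norm⟩ := exists_extension_norm_eq _ (f.mkContinuous ‖φ‖ hf)
  refine ⟨g, fun x => ?_, hg_norm ▸ f.mkContinuous_norm_le (norm_nonneg _) hf⟩
  have hSx : (⟨S x, LinearMap.mem_range_self S x⟩ : LinearMap.range S) = e x := rfl
  rw [← Submodule.coe_mk (S x) (LinearMap.mem_range_self S x), hg, hSx]
  exact congrArg φ (e.symm_apply_apply x)

end BoundedBelow

section Dissipative

variable {𝕜 X : Type*} [RCLike 𝕜] [NormedAddCommGroup X] [NormedSpace 𝕜 X]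
  {D : Submodule 𝕜 X} (B : D →ₗ[𝕜] X)

theorem exists_dual_resolvent_solution_of_dissipative
    (hB : ∀ x : D, ∀ t : ℝ, 0 < t → ‖(x : X)‖ ≤ ‖(x : X) - (t : 𝕜) • B x‖)
    {t : ℝ} (ht : 0 < t) (ystar : StrongDual 𝕜 X) :
    ∃ xstar zstar : StrongDual 𝕜 X, (∀ x : D, xstar (B x) = zstar x) ∧
      xstar - (t : 𝕜) • zstar = ystar ∧ ‖xstar‖ ≤ ‖ystar‖ := by
  have ht' : (t : 𝕜) ≠ 0 := RCLike.ofReal_ne_zero.2 ht.ne'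
  obtain ⟨g, hg, hg_norm⟩ := (D.subtype - (t : 𝕜) • B).exists_dual_comp_eq_of_norm_le_norm_apply
    (fun x => hB x t ht) (ystar.comp D.subtypeL)
  refine ⟨g, (t : 𝕜)⁻¹ • (g - ystar), fun x => ?_, ?_, ?_⟩
  · have hgx : g x - t * g (B x) = ystar x := by simpa using hg x
    simp only [smul_apply, sub_apply, smul_eq_mul]
    rw [eq_inv_mul_iff_mul_eq₀ ht']
    linear_combination -hgx
  · rw [smul_smul, mul_inv_cancel₀ ht', one_smul, sub_sub_cancel]
  · calc ‖g‖ ≤ ‖ystar.comp D.subtypeL‖ := hg_norm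
      _ ≤ ‖ystar‖ * ‖D.subtypeL‖ := ystar.opNorm_comp_le _
      _ ≤ ‖ystar‖ := mul_le_of_le_one_right (norm_nonneg _) D.norm_subtypeL_le

theorem norm_le_norm_sub_smul_of_dual_resolvent_solution {t : ℝ}
    (h : ∀ ystar : StrongDual 𝕜 X, ∃ xstar zstar : StrongDual 𝕜 X,
      (∀ x : D, xstar (B x) = zstar x) ∧ xstar - (t : 𝕜) • zstar = ystar ∧ ‖xstar‖ ≤ ‖ystar‖)
    (x : D) : ‖(x : X)‖ ≤ ‖(x : X) - (t : 𝕜) • B x‖ := by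
  refine NormedSpace.norm_le_dual_bound 𝕜 _ (norm_nonneg _) fun ystar => ?_
  obtain ⟨xstar, zstar, hadj, rfl, hnorm⟩ := h ystar
  have hy : (xstar - (t : 𝕜) • zstar) x = xstar ((x : X) - (t : 𝕜) • B x) := by
    simp [hadj]
  calc ‖(xstar - (t : 𝕜) • zstar) x‖ = ‖xstar ((x : X) - (t : 𝕜) • B x)‖ := by rw [hy]
    _ ≤ ‖xstar‖ * ‖(x : X) - (t : 𝕜) • B x‖ := xstar.le_opNorm _
    _ ≤ ‖xstar - (t : 𝕜) • zstar‖ * ‖(x : X) - (t : 𝕜) • B x‖ := by gcongr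
    _ = _ := mul_comm _ _

end Dissipative

theorem stmt3_general {𝕜 X : Type*} [RCLike 𝕜]
    [NormedAddCommGroup X] [NormedSpace 𝕜 X]
    (D : Submodule 𝕜 X) (B : D →ₗ[𝕜] X) :
    (∀ x : D, ∀ t : ℝ, 0 < t → ‖(x : X)‖ ≤ ‖(x : X) - (t : 𝕜) • B x‖) ↔
      ∀ t : ℝ, 0 < t → ∀ ystar : X →L[𝕜] 𝕜, ∃ xstar zstar : X →L[𝕜] 𝕜,
        (∀ x : D, xstar (B x) = zstar (x : X)) ∧
        xstar - (t : 𝕜) • zstar = ystar ∧ ‖xstar‖ ≤ ‖ystar‖ :=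
  ⟨fun hB _ ht => exists_dual_resolvent_solution_of_dissipative B hB ht,
    fun h x _ ht => norm_le_norm_sub_smul_of_dual_resolvent_solution B (h _ ht) x⟩

/-- Theorem 2.5: dual characterization of dissipativity. `B` is a densely
defined operator on a Banach space `X`, with domain the submodule `D`.
`B` is dissipative iff for every `t > 0` and every `y* ∈ X*` there is
`x* ∈ dom(B*)` (witnessed by `z* = B* x*`, i.e. `x*(Bx) = z*(x)` on `D`)
with `x* - t B* x* = y*` and `‖x*‖ ≤ ‖y*‖`. -/
theorem stmt3 {𝕜 X : Type*} [RCLike 𝕜]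
    [NormedAddCommGroup X] [NormedSpace 𝕜 X] [CompleteSpace X]
    (D : Submodule 𝕜 X) (hD : Dense (D : Set X)) (B : D →ₗ[𝕜] X) :
    (∀ x : D, ∀ t : ℝ, 0 < t → ‖(x : X)‖ ≤ ‖(x : X) - (t : 𝕜) • B x‖) ↔
      ∀ t : ℝ, 0 < t → ∀ ystar : X →L[𝕜] 𝕜, ∃ xstar zstar : X →L[𝕜] 𝕜,
        (∀ x : D, xstar (B x) = zstar (x : X)) ∧
        xstar - (t : 𝕜) • zstar = ystar ∧ ‖xstar‖ ≤ ‖ystar‖ :=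
  stmt3_general D B
end

section
/- Let B be a densely defined dissipative operator on a Hilbert space V and let A ∈ L(V) be coercive, i.e. Re⟨Av, v⟩ ≥ α‖v‖² for all v ∈ V with some α > 0. Then there exists β > 0 such that ‖Av − Bv‖ ≥ β(‖v‖ + ‖Bv‖) for all v ∈ dom(B). -/
/-!
Pairing `Av - Bv` with `v`, coercivity of `A` and dissipativity of `B` give
`α‖v‖² ≤ Re⟨Av - Bv, v⟩ ≤ ‖Av - Bv‖ ‖v‖`, hence `α‖v‖ ≤ ‖Av - Bv‖`. The graph part then follows
from `‖Bv‖ ≤ ‖Av - Bv‖ + ‖A‖ ‖v‖`, and `β = α / (1 + α + ‖A‖)` works.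
-/

theorem mul_norm_le_norm_of_mul_sq_le_re_inner {𝕜 E : Type*} [RCLike 𝕜]
    [SeminormedAddCommGroup E] [InnerProductSpace 𝕜 E] {α : ℝ} {x y : E}
    (h : α * ‖x‖ ^ 2 ≤ RCLike.re (inner 𝕜 y x)) : α * ‖x‖ ≤ ‖y‖ := by
  rcases (norm_nonneg x).eq_or_lt with hx | hx
  · simp [← hx]
  · refine le_of_mul_le_mul_right ?_ hx
    calc α * ‖x‖ * ‖x‖ = α * ‖x‖ ^ 2 := by ring
      _ ≤ RCLike.re (inner 𝕜 y x) := h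
      _ ≤ ‖y‖ * ‖x‖ := re_inner_le_norm y x

theorem mul_norm_le_norm_sub_of_coercive_of_dissipative {𝕜 V : Type*} [RCLike 𝕜]
    [NormedAddCommGroup V] [InnerProductSpace 𝕜 V] {D : Submodule 𝕜 V} {B : D →ₗ[𝕜] V}
    (hdiss : ∀ v : D, RCLike.re (inner 𝕜 (B v) (v : V) : 𝕜) ≤ 0)
    {A : V → V} {α : ℝ} (hcoer : ∀ v : V, α * ‖v‖ ^ 2 ≤ RCLike.re (inner 𝕜 (A v) v : 𝕜))
    (v : D) : α * ‖(v : V)‖ ≤ ‖A v - B v‖ := by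
  refine mul_norm_le_norm_of_mul_sq_le_re_inner (𝕜 := 𝕜) ?_
  rw [inner_sub_left, map_sub]
  linarith [hcoer v, hdiss v]

theorem stmt5_general {𝕜 V : Type*} [RCLike 𝕜]
    [NormedAddCommGroup V] [InnerProductSpace 𝕜 V]
    (D : Submodule 𝕜 V) (B : D →ₗ[𝕜] V)
    (hdiss : ∀ v : D, RCLike.re (inner 𝕜 (B v) (v : V) : 𝕜) ≤ 0)
    (A : V →L[𝕜] V) (α : ℝ) (hα : 0 < α)
    (hcoer : ∀ v : V, α * ‖v‖ ^ 2 ≤ RCLike.re (inner 𝕜 (A v) v : 𝕜)) :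
    ∃ β : ℝ, 0 < β ∧ ∀ v : D, β * (‖(v : V)‖ + ‖B v‖) ≤ ‖A (v : V) - B v‖ := by
  have hC : 0 < 1 + α + ‖A‖ := by positivity
  refine ⟨α / (1 + α + ‖A‖), by positivity, fun v => ?_⟩
  have hv : α * ‖(v : V)‖ ≤ ‖A v - B v‖ :=
    mul_norm_le_norm_sub_of_coercive_of_dissipative hdiss hcoer v
  have hBv : ‖B v‖ ≤ ‖A v‖ + ‖A v - B v‖ := norm_le_norm_add_norm_sub _ _
  have hAv : ‖A v‖ ≤ ‖A‖ * ‖(v : V)‖ := A.le_opNorm v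
  rw [div_mul_eq_mul_div, div_le_iff₀ hC]
  nlinarith [norm_nonneg A]

/-- Proposition 3.7: if `B` is a densely defined dissipative operator on a
Hilbert space `V` and `A` is bounded and coercive with constant `α > 0`,
then `‖Av - Bv‖ ≥ β(‖v‖ + ‖Bv‖)` on `dom(B)` for some `β > 0`. -/
theorem stmt5 {𝕜 V : Type*} [RCLike 𝕜]
    [NormedAddCommGroup V] [InnerProductSpace 𝕜 V] [CompleteSpace V]
    (D : Submodule 𝕜 V) (hD : Dense (D : Set V)) (B : D →ₗ[𝕜] V)
    (hdiss : ∀ v : D, RCLike.re (inner 𝕜 (B v) (v : V) : 𝕜) ≤ 0)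
    (A : V →L[𝕜] V) (α : ℝ) (hα : 0 < α)
    (hcoer : ∀ v : V, α * ‖v‖ ^ 2 ≤ RCLike.re (inner 𝕜 (A v) v : 𝕜)) :
    ∃ β : ℝ, 0 < β ∧ ∀ v : D, β * (‖(v : V)‖ + ‖B v‖) ≤ ‖A (v : V) - B v‖ :=
  stmt5_general D B hdiss A α hα hcoer
end

section
/- Let B be a densely defined dissipative operator on a Hilbert space V and A ∈ L(V) coercive with constant α > 0. Decompose A = A₊ + A₋ with A₊ = (A + A*)/2 and A₋ = (A − A*)/2, and let S = √(A₊). Then for all v ∈ dom(B), ‖(A − B)v‖² ≥ β²(‖Bv‖² + ‖v‖²) where β² = min{ α²/2 , α²/((α + 2‖S⁻¹A₋‖²)‖A₊‖) }; in particular the constant β depends only on A and α, not on B. -/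
/-!
Put w = (A - B)v and z = S⁻¹w. Since Re⟪Ax, x⟫ = ‖Sx‖², coercivity reads α‖x‖² ≤ ‖Sx‖², and
dissipativity of B gives ‖Sv‖² ≤ Re⟪z, Sv⟫, i.e. ‖Sv - z‖² + ‖Sv‖² ≤ ‖z‖². The factorisation
A = S(S + S⁻¹A₋) gives Bv = S(Sv - z + S⁻¹A₋v), hence ‖Bv‖ ≤ ‖S‖(‖Sv - z‖ + ‖S⁻¹A₋‖‖v‖) with
‖S‖² = ‖A₊‖. Together with ‖w‖² ≥ α‖z‖² this reduces the estimate to real arithmetic, whose one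
idea is Young's inequality 2kst ≤ (2k²/α)s² + (α/2)t².
-/

open ContinuousLinearMap

theorem mul_add_mul_sq_le (α k s t : ℝ) :
    α * (s + k * t) ^ 2 ≤ (α + 2 * k ^ 2) * (s ^ 2 + α * t ^ 2 / 2) := by
  nlinarith [sq_nonneg (2 * k * s - α * t)]

theorem min_mul_sq_add_sq_le {α k c s t b Z W : ℝ} (hα : 0 < α)
    (hb₀ : 0 ≤ b) (hb : b ≤ c * (s + k * t)) (hZ : s ^ 2 + α * t ^ 2 ≤ Z ^ 2)
    (hW : α * Z ^ 2 ≤ W ^ 2) :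
    min (α ^ 2 / 2) (α ^ 2 / ((α + 2 * k ^ 2) * c ^ 2)) * (b ^ 2 + t ^ 2) ≤ W ^ 2 := by
  set d := (α + 2 * k ^ 2) * c ^ 2
  set m := min (α ^ 2 / 2) (α ^ 2 / d)
  have hd : 0 ≤ d := by positivity
  have hm : 0 ≤ m := le_min (by positivity) (by positivity)
  have hmd : m * d ≤ α ^ 2 := by
    rcases hd.eq_or_lt with hd0 | hdpos
    · rw [← hd0, mul_zero]; positivity
    · calc m * d ≤ α ^ 2 / d * d := by gcongr; exact min_le_right _ _
        _ = α ^ 2 := div_mul_cancel₀ _ hdpos.ne'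
  have hmb : α * (m * b ^ 2) ≤ α * (α * (s ^ 2 + α * t ^ 2 / 2)) :=
    calc α * (m * b ^ 2) ≤ α * m * (c ^ 2 * (s + k * t) ^ 2) := by
          rw [← mul_assoc, ← mul_pow]; gcongr
      _ = m * c ^ 2 * (α * (s + k * t) ^ 2) := by ring
      _ ≤ m * c ^ 2 * ((α + 2 * k ^ 2) * (s ^ 2 + α * t ^ 2 / 2)) :=
          mul_le_mul_of_nonneg_left (mul_add_mul_sq_le α k s t) (by positivity)
      _ = m * d * (s ^ 2 + α * t ^ 2 / 2) := by ring
      _ ≤ α ^ 2 * (s ^ 2 + α * t ^ 2 / 2) := by gcongr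
      _ = α * (α * (s ^ 2 + α * t ^ 2 / 2)) := by ring
  have hmt : m * t ^ 2 ≤ α ^ 2 / 2 * t ^ 2 := by gcongr; exact min_le_left _ _
  nlinarith [le_of_mul_le_mul_left hmb hα]

section

variable {𝕜 E : Type*} [RCLike 𝕜] [NormedAddCommGroup E] [InnerProductSpace 𝕜 E]

open RCLike in
theorem norm_sub_sq_add_norm_sq_le {u z : E} (h : ‖u‖ ^ 2 ≤ re (inner 𝕜 z u)) :
    ‖u - z‖ ^ 2 + ‖u‖ ^ 2 ≤ ‖z‖ ^ 2 := by
  rw [norm_sub_sq (𝕜 := 𝕜), inner_re_symm (𝕜 := 𝕜)]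
  linarith

theorem eq_comp_add_comp_of_comp_self_add_eq {S Sinv T A : E →L[𝕜] E}
    (hA : S ∘L S + T = A) (hS : S ∘L Sinv = 1) : A = S ∘L (S + Sinv ∘L T) := by
  rw [← hA, comp_add, ← comp_assoc, hS, one_def, id_comp]

theorem norm_apply_sub_le_of_eq_comp_add {S K A : E →L[𝕜] E} (hA : A = S ∘L (S + K)) (u z : E) :
    ‖A u - S z‖ ≤ ‖S‖ * (‖S u - z‖ + ‖K‖ * ‖u‖) := by
  rw [hA, comp_apply, add_apply, ← map_sub, add_sub_right_comm]
  refine (S.le_opNorm _).trans (mul_le_mul_of_nonneg_left ?_ (norm_nonneg S))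
  exact (norm_add_le _ _).trans (by gcongr; exact K.le_opNorm _)

variable [CompleteSpace E]

open RCLike in
theorem re_inner_half_smul_add_adjoint_apply (A : E →L[𝕜] E) (x : E) :
    re (inner 𝕜 (((1 / 2 : 𝕜) • (A + adjoint A)) x) x) = re (inner 𝕜 (A x) x) := by
  have : re (inner 𝕜 (adjoint A x) x) = re (inner 𝕜 (A x) x) := by
    rw [adjoint_inner_left, inner_re_symm]
  have hhalf : starRingEnd 𝕜 (1 / 2) = ((1 / 2 : ℝ) : 𝕜) := by simp [map_ofNat]
  rw [smul_apply, inner_smul_left, hhalf, re_ofReal_mul, add_apply, inner_add_left, map_add, this]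
  ring

open RCLike in
theorem re_inner_apply_self_eq_norm_sq {A S : E →L[𝕜] E} (hS : IsSelfAdjoint S)
    (hSsq : S ∘L S = (1 / 2 : 𝕜) • (A + adjoint A)) (x : E) :
    re (inner 𝕜 (A x) x) = ‖S x‖ ^ 2 := by
  rw [apply_norm_sq_eq_inner_adjoint_left, hS.adjoint_eq, hSsq,
    re_inner_half_smul_add_adjoint_apply]

end

theorem stmt6_general {V : Type*}
    [NormedAddCommGroup V] [InnerProductSpace ℂ V] [CompleteSpace V]
    (D : Submodule ℂ V) (B : D →ₗ[ℂ] V)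
    (hdiss : ∀ v : D, RCLike.re (inner ℂ (B v) (v : V) : ℂ) ≤ 0)
    (A : V →L[ℂ] V) (α : ℝ) (hα : 0 < α)
    (hcoer : ∀ v : V, α * ‖v‖ ^ 2 ≤ RCLike.re (inner ℂ (A v) v : ℂ))
    (S Sinv : V →L[ℂ] V)
    (hSpos : S.IsPositive)
    (hSsq : S ∘L S = (1 / 2 : ℂ) • (A + ContinuousLinearMap.adjoint A))
    (hSinv₂ : S ∘L Sinv = 1) :
    ∀ v : D,
      min (α ^ 2 / 2)
          (α ^ 2 /
            ((α + 2 * ‖Sinv ∘L ((1 / 2 : ℂ) • (A - ContinuousLinearMap.adjoint A))‖ ^ 2) *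
              ‖(1 / 2 : ℂ) • (A + ContinuousLinearMap.adjoint A)‖)) *
        (‖B v‖ ^ 2 + ‖(v : V)‖ ^ 2) ≤ ‖A (v : V) - B v‖ ^ 2 := by
  intro v
  set K := Sinv ∘L ((1 / 2 : ℂ) • (A - adjoint A))
  set w := A v - B v
  set z := Sinv w
  have hS : IsSelfAdjoint S := hSpos.isSelfAdjoint
  have hre := re_inner_apply_self_eq_norm_sq hS hSsq
  have hSz : S z = w := by rw [← comp_apply, hSinv₂]; rfl
  have hA : A = S ∘L (S + K) :=
    eq_comp_add_comp_of_comp_self_add_eq (by rw [hSsq, ← smul_add]; module) hSinv₂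
  have hB : ‖B v‖ ≤ ‖S‖ * (‖S v - z‖ + ‖K‖ * ‖(v : V)‖) := by
    simpa only [hSz, w, sub_sub_cancel] using norm_apply_sub_le_of_eq_comp_add hA v z
  have hdissip : ‖S v‖ ^ 2 ≤ RCLike.re (inner ℂ z (S v)) := by
    have hzS : inner ℂ z (S v) = inner ℂ (S z) (v : V) := by
      rw [← adjoint_inner_right S, hS.adjoint_eq]
    rw [hzS, hSz, inner_sub_left, map_sub, ← hre]
    linarith [hdiss v]
  have hnorm : ‖(1 / 2 : ℂ) • (A + adjoint A)‖ = ‖S‖ ^ 2 := by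
    rw [← hSsq, sq, ← norm_adjoint_comp_self, hS.adjoint_eq]
  rw [hnorm]
  refine min_mul_sq_add_sq_le hα (norm_nonneg _) hB (Z := ‖z‖) ?_ ?_
  · linarith [norm_sub_sq_add_norm_sq_le hdissip, hre v, hcoer v]
  · simpa only [hre, hSz] using hcoer z

/-- Second proof of Proposition 3.7, with an explicit constant: for a densely
defined dissipative operator `B` on a complex Hilbert space `V` and a
coercive bounded operator `A` with constant `α > 0`, writing
`A₊ = (A + A*)/2`, `A₋ = (A - A*)/2` and `S = √A₊` (a positive selfadjoint
invertible square root of `A₊`, with inverse `Sinv`), one has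
`‖(A-B)v‖² ≥ β²(‖Bv‖² + ‖v‖²)` with
`β² = min{α²/2, α²/((α + 2‖S⁻¹A₋‖²)‖A₊‖)}`, a constant depending only on
`A` and `α`, not on `B`. -/
theorem stmt6 {V : Type*}
    [NormedAddCommGroup V] [InnerProductSpace ℂ V] [CompleteSpace V]
    (D : Submodule ℂ V) (hD : Dense (D : Set V)) (B : D →ₗ[ℂ] V)
    (hdiss : ∀ v : D, RCLike.re (inner ℂ (B v) (v : V) : ℂ) ≤ 0)
    (A : V →L[ℂ] V) (α : ℝ) (hα : 0 < α)
    (hcoer : ∀ v : V, α * ‖v‖ ^ 2 ≤ RCLike.re (inner ℂ (A v) v : ℂ))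
    (S Sinv : V →L[ℂ] V)
    (hSpos : S.IsPositive)
    (hSsq : S ∘L S = (1 / 2 : ℂ) • (A + ContinuousLinearMap.adjoint A))
    (hSinv₁ : Sinv ∘L S = 1) (hSinv₂ : S ∘L Sinv = 1) :
    ∀ v : D,
      min (α ^ 2 / 2)
          (α ^ 2 /
            ((α + 2 * ‖Sinv ∘L ((1 / 2 : ℂ) • (A - ContinuousLinearMap.adjoint A))‖ ^ 2) *
              ‖(1 / 2 : ℂ) • (A + ContinuousLinearMap.adjoint A)‖)) *
        (‖B v‖ ^ 2 + ‖(v : V)‖ ^ 2) ≤ ‖A (v : V) - B v‖ ^ 2 :=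
  stmt6_general D B hdiss A α hα hcoer S Sinv hSpos hSsq hSinv₂
end

section
/- Let V be a Hilbert space, R a dense subspace, and 𝒟₀ : R → V' a derivation, i.e. ⟨𝒟₀u, v⟩ + conj(⟨𝒟₀v, u⟩) = 0 for all u, v ∈ R. Define W = { v ∈ V : ∃ f ∈ V' such that ⟨f, r⟩ + conj(⟨𝒟₀r, v⟩) = 0 for all r ∈ R } with 𝒟v := f. Then W is a Hilbert space for the inner product ⟨v,w⟩_W = ⟨v,w⟩_V + ⟨𝒟v, 𝒟w⟩_{V'}, and R ⊆ W with 𝒟r = 𝒟₀r for all r ∈ R. -/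
/-!
The defining identity of `W` is a family of equations `f r + conj (𝒟₀ r v) = 0`, each continuous
and linear in the pair `(v, f) ∈ V × V'`. Density of `R` makes `f` unique, the derivation identity
says exactly that `(r, 𝒟₀ r)` satisfies it, and since the graph of `𝒟` is closed in the complete
space `V × V'`, a sequence that is Cauchy for `‖v‖ + ‖𝒟v‖` converges inside the graph.
-/

open Filter Topology

section WeakDerivation

variable {𝕜 V : Type*} [RCLike 𝕜] [NormedAddCommGroup V] [NormedSpace 𝕜 V]
  {R : Submodule 𝕜 V} (D0 : R →ₗ[𝕜] (V →SL[starRingEnd 𝕜] 𝕜))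

def HasWeakDerivation (v : V) (f : V →SL[starRingEnd 𝕜] 𝕜) : Prop :=
  ∀ r : R, f (r : V) + starRingEnd 𝕜 (D0 r v) = 0

variable {D0}

theorem HasWeakDerivation.unique (hR : Dense (R : Set V)) {v : V}
    {f g : V →SL[starRingEnd 𝕜] 𝕜} (hf : HasWeakDerivation D0 v f)
    (hg : HasWeakDerivation D0 v g) : f = g :=
  ContinuousLinearMap.ext_on (by rwa [Submodule.span_eq]) fun x hx =>
    add_right_cancel ((hf ⟨x, hx⟩).trans (hg ⟨x, hx⟩).symm)

theorem HasWeakDerivation.add {v w : V} {f g : V →SL[starRingEnd 𝕜] 𝕜}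
    (hf : HasWeakDerivation D0 v f) (hg : HasWeakDerivation D0 w g) :
    HasWeakDerivation D0 (v + w) (f + g) := fun r => by
  simp only [add_apply, map_add]
  linear_combination hf r + hg r

theorem HasWeakDerivation.smul {v : V} {f : V →SL[starRingEnd 𝕜] 𝕜}
    (hf : HasWeakDerivation D0 v f) (c : 𝕜) : HasWeakDerivation D0 (c • v) (c • f) := fun r => by
  simp only [smul_apply, ContinuousLinearMap.map_smulₛₗ, smul_eq_mul,
    map_mul, RCLike.conj_conj]
  linear_combination c * hf r

variable (D0) in
theorem isClosed_setOf_hasWeakDerivation :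
    IsClosed {p : V × (V →SL[starRingEnd 𝕜] 𝕜) | HasWeakDerivation D0 p.1 p.2} := by
  simp only [HasWeakDerivation, Set.ofPred_forall]
  refine isClosed_iInter fun r => isClosed_eq ?_ continuous_const
  exact ((continuous_eval_const (r : V)).comp continuous_snd).add
    (RCLike.continuous_conj.comp ((D0 r).continuous.comp continuous_fst))

end WeakDerivation

theorem cauchySeq_prodMk_of_norm_add_norm {E F : Type*} [SeminormedAddCommGroup E]
    [SeminormedAddCommGroup F] {x : ℕ → E} {y : ℕ → F}
    (h : ∀ ε : ℝ, 0 < ε → ∃ N : ℕ, ∀ m ≥ N, ∀ n ≥ N, ‖x m - x n‖ + ‖y m - y n‖ < ε) :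
    CauchySeq fun n => (x n, y n) := by
  refine Metric.cauchySeq_iff.2 fun ε hε => (h ε hε).imp fun N hN m hm n hn => ?_
  rw [Prod.dist_eq, dist_eq_norm, dist_eq_norm]
  have := hN m hm n hn
  exact max_lt (by linarith [norm_nonneg (y m - y n)]) (by linarith [norm_nonneg (x m - x n)])

/-- Lemma 3.1 (and the construction of the extended domain): given a
derivation `D0 : R → V'` (`V'` = continuous antilinear functionals on `V`)
on a dense subspace `R` of a Hilbert space `V`, the extended domain
`W = {v ∈ V : ∃ f ∈ V', ⟨f,r⟩ + conj ⟨D0 r, v⟩ = 0 ∀ r ∈ R}` satisfies: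
the witness `f =: 𝒟v` is unique, `R ⊆ W` with `𝒟r = D0 r`, `W` is a
subspace on which `𝒟` is linear, and `W` is complete for the norm coming
from the inner product `⟨v,w⟩_V + ⟨𝒟v,𝒟w⟩_{V'}` (equivalently, for the
norm `‖v‖ + ‖𝒟v‖`), i.e. `W` is a Hilbert space. -/
theorem stmt7 {𝕜 V : Type*} [RCLike 𝕜]
    [NormedAddCommGroup V] [InnerProductSpace 𝕜 V] [CompleteSpace V]
    (R : Submodule 𝕜 V) (hR : Dense (R : Set V))
    (D0 : R →ₗ[𝕜] (V →SL[starRingEnd 𝕜] 𝕜))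
    (hder : ∀ u v : R, D0 u (v : V) + (starRingEnd 𝕜) (D0 v (u : V)) = 0)
    (Wset : Set V)
    (hWset : Wset = {v : V | ∃ f : V →SL[starRingEnd 𝕜] 𝕜,
        ∀ r : R, f (r : V) + (starRingEnd 𝕜) (D0 r v) = 0})
    (DD : V → (V →SL[starRingEnd 𝕜] 𝕜))
    (hDD : ∀ v ∈ Wset, ∀ r : R, DD v (r : V) + (starRingEnd 𝕜) (D0 r v) = 0) :
    (∀ v ∈ Wset, ∀ f g : V →SL[starRingEnd 𝕜] 𝕜,
        (∀ r : R, f (r : V) + (starRingEnd 𝕜) (D0 r v) = 0) →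
        (∀ r : R, g (r : V) + (starRingEnd 𝕜) (D0 r v) = 0) → f = g) ∧
    (∀ r : R, (r : V) ∈ Wset ∧ DD (r : V) = D0 r) ∧
    (∀ v ∈ Wset, ∀ w ∈ Wset, ∀ c : 𝕜,
        v + w ∈ Wset ∧ c • v ∈ Wset ∧
        DD (v + w) = DD v + DD w ∧ DD (c • v) = c • DD v) ∧
    (∀ u : ℕ → V, (∀ n, u n ∈ Wset) →
      (∀ ε : ℝ, 0 < ε → ∃ N : ℕ, ∀ m ≥ N, ∀ n ≥ N,
          ‖u m - u n‖ + ‖DD (u m) - DD (u n)‖ < ε) →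
      ∃ w ∈ Wset, Filter.Tendsto (fun n => ‖u n - w‖ + ‖DD (u n) - DD w‖)
          Filter.atTop (nhds 0)) := by
  have mem : ∀ {v f}, HasWeakDerivation D0 v f → v ∈ Wset := fun h => hWset ▸ ⟨_, h⟩
  have hD : ∀ v ∈ Wset, HasWeakDerivation D0 v (DD v) := hDD
  have DD_eq : ∀ {v f}, HasWeakDerivation D0 v f → DD v = f :=
    fun h => (hD _ (mem h)).unique hR h
  have hD0 : ∀ r : R, HasWeakDerivation D0 r (D0 r) := hder
  refine ⟨fun v _ f g hf hg => HasWeakDerivation.unique hR hf hg,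
    fun r => ⟨mem (hD0 r), DD_eq (hD0 r)⟩,
    fun v hv w hw c => ⟨mem ((hD v hv).add (hD w hw)), mem ((hD v hv).smul c),
      DD_eq ((hD v hv).add (hD w hw)), DD_eq ((hD v hv).smul c)⟩,
    fun u hu hcau => ?_⟩
  obtain ⟨⟨w, F⟩, hlim⟩ := cauchySeq_tendsto_of_complete (cauchySeq_prodMk_of_norm_add_norm hcau)
  have hwF : HasWeakDerivation D0 w F := (isClosed_setOf_hasWeakDerivation D0).mem_of_tendsto hlim
    (Eventually.of_forall fun n => hD _ (hu n))
  refine ⟨w, mem hwF, DD_eq hwF ▸ ?_⟩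
  simpa using (tendsto_iff_norm_sub_tendsto_zero.1 hlim.fst_nhds).add
    (tendsto_iff_norm_sub_tendsto_zero.1 hlim.snd_nhds)
end

section
/- With V, R, 𝒟, W, b, a closed admissible subspace Z, coercive 𝒜 ∈ L(V,V'), and L = f + g with f ∈ V' and g a continuous antilinear functional on Z vanishing on R: for u ∈ V, u solves the weak problem (−conj(⟨𝒟z,u⟩) + ⟨𝒜u,z⟩ = ⟨f,z⟩ + ⟨g,z⟩ for all z ∈ Z) if and only if u ∈ W, 𝒟u + 𝒜u = f in V', and b(u,z) = −⟨g,z⟩ for all z ∈ Z. -/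
/-!
Testing the weak formulation against the dense core `R ⊆ Z` (where `g` vanishes and `𝒟 = 𝒟₀`)
says exactly that `f - 𝒜u` is a weak derivative of `u`, i.e. `u ∈ W` and `𝒟u = f - 𝒜u`;
continuous antilinear functionals agreeing on a dense subspace coincide.
Given this, the weak equation on all of `Z` and the boundary condition `b(u, z) = -⟨g, z⟩`
differ by the identity `⟨𝒟u, z⟩ + ⟨𝒜u, z⟩ = ⟨f, z⟩`.
-/

theorem ContinuousLinearMap.ext_on_dense_submodule {R₁ R₂ M₁ M₂ : Type*} [Semiring R₁]
    [Semiring R₂] {σ : R₁ →+* R₂} [TopologicalSpace M₁] [AddCommMonoid M₁] [Module R₁ M₁]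
    [TopologicalSpace M₂] [T2Space M₂] [AddCommMonoid M₂] [Module R₂ M₂]
    {p : Submodule R₁ M₁} (hp : Dense (p : Set M₁)) {φ ψ : M₁ →SL[σ] M₂}
    (h : ∀ x : p, φ x = ψ x) : φ = ψ :=
  DFunLike.coe_injective <| (map_continuous φ).ext_on hp (map_continuous ψ) fun x hx => h ⟨x, hx⟩

section DerivationFramework

variable {𝕜 V : Type*} [RCLike 𝕜] [NormedAddCommGroup V] [NormedSpace 𝕜 V]
  {R : Submodule 𝕜 V} {D0 : R →ₗ[𝕜] (V →SL[starRingEnd 𝕜] 𝕜)} {Wset : Set V}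
  {DD : V → (V →SL[starRingEnd 𝕜] 𝕜)}

theorem extension_eq_on_core (hR : Dense (R : Set V))
    (hder : ∀ u v : R, D0 u (v : V) + (starRingEnd 𝕜) (D0 v (u : V)) = 0)
    (hDD : ∀ v ∈ Wset, ∀ r : R, DD v (r : V) + (starRingEnd 𝕜) (D0 r v) = 0)
    (hRW : (R : Set V) ⊆ Wset) (r : R) : DD r = D0 r :=
  ContinuousLinearMap.ext_on_dense_submodule hR fun s => by
    linear_combination hDD r (hRW r.2) s - hder r s

theorem mem_extendedDomain_and_extension_eq_iff (hR : Dense (R : Set V))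
    (hWset : Wset = {v : V | ∃ f : V →SL[starRingEnd 𝕜] 𝕜,
        ∀ r : R, f (r : V) + (starRingEnd 𝕜) (D0 r v) = 0})
    (hDD : ∀ v ∈ Wset, ∀ r : R, DD v (r : V) + (starRingEnd 𝕜) (D0 r v) = 0)
    {u : V} {φ : V →SL[starRingEnd 𝕜] 𝕜} :
    u ∈ Wset ∧ DD u = φ ↔ ∀ r : R, φ r + (starRingEnd 𝕜) (D0 r u) = 0 := by
  constructor
  · rintro ⟨huW, rfl⟩
    exact hDD u huW
  · intro hφ
    have huW : u ∈ Wset := hWset ▸ ⟨φ, hφ⟩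
    refine ⟨huW, ContinuousLinearMap.ext_on_dense_submodule hR fun r => ?_⟩
    linear_combination hDD u huW r - hφ r

end DerivationFramework

theorem stmt9_general {𝕜 V : Type*} [RCLike 𝕜]
    [NormedAddCommGroup V] [InnerProductSpace 𝕜 V]
    (R : Submodule 𝕜 V) (hR : Dense (R : Set V))
    (D0 : R →ₗ[𝕜] (V →SL[starRingEnd 𝕜] 𝕜))
    (hder : ∀ u v : R, D0 u (v : V) + (starRingEnd 𝕜) (D0 v (u : V)) = 0)
    (Wset : Set V)
    (hWset : Wset = {v : V | ∃ f : V →SL[starRingEnd 𝕜] 𝕜,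
        ∀ r : R, f (r : V) + (starRingEnd 𝕜) (D0 r v) = 0})
    (DD : V → (V →SL[starRingEnd 𝕜] 𝕜))
    (hDD : ∀ v ∈ Wset, ∀ r : R, DD v (r : V) + (starRingEnd 𝕜) (D0 r v) = 0)
    (Z : Submodule 𝕜 V) (hZW : (Z : Set V) ⊆ Wset) (hRZ : R ≤ Z)
    (𝒜 : V →L[𝕜] (V →SL[starRingEnd 𝕜] 𝕜))
    (f : V →SL[starRingEnd 𝕜] 𝕜) (g : V → 𝕜)
    (hgR : ∀ r : R, g (r : V) = 0) :
    ∀ u : V,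
      (∀ z ∈ Z, -(starRingEnd 𝕜) (DD z u) + 𝒜 u z = f z + g z) ↔
      (u ∈ Wset ∧ DD u + 𝒜 u = f ∧
        ∀ z ∈ Z, DD u z + (starRingEnd 𝕜) (DD z u) = -g z) := by
  intro u
  have hDr := extension_eq_on_core hR hder hDD fun r hr => hZW (hRZ hr)
  constructor
  · intro hweak
    obtain ⟨huW, hDu⟩ := (mem_extendedDomain_and_extension_eq_iff (φ := f - 𝒜 u) hR hWset
      hDD).2 fun r => by
        have hr := hweak r (hRZ r.2)
        rw [hgR r, hDr r] at hr
        rw [sub_apply]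
        linear_combination -hr
    refine ⟨huW, by rw [hDu]; abel, fun z hz => ?_⟩
    rw [hDu, sub_apply]
    linear_combination -hweak z hz
  · rintro ⟨-, hstrong, hbdry⟩ z hz
    have hstrong_z : DD u z + 𝒜 u z = f z := by rw [← hstrong, add_apply]
    linear_combination hstrong_z - hbdry z hz

/-- Theorem 3.9: equivalence of the Weak and Strong Derivation Problems.
Setting as in the derivation framework; `Z` is a closed admissible subspace,
`𝒜 ∈ L(V,V')` coercive, and `L = f + g` with `f ∈ V'` and `g` a continuous
antilinear functional on `Z` (for the `W`-norm) vanishing on `R`.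
Then `u ∈ V` solves the weak problem iff `u ∈ W`, `𝒟u + 𝒜u = f` in `V'`,
and `b(u,z) = -⟨g,z⟩` for all `z ∈ Z`. -/
theorem stmt9 {𝕜 V : Type*} [RCLike 𝕜]
    [NormedAddCommGroup V] [InnerProductSpace 𝕜 V] [CompleteSpace V]
    (R : Submodule 𝕜 V) (hR : Dense (R : Set V))
    (D0 : R →ₗ[𝕜] (V →SL[starRingEnd 𝕜] 𝕜))
    (hder : ∀ u v : R, D0 u (v : V) + (starRingEnd 𝕜) (D0 v (u : V)) = 0)
    (Wset : Set V)
    (hWset : Wset = {v : V | ∃ f : V →SL[starRingEnd 𝕜] 𝕜,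
        ∀ r : R, f (r : V) + (starRingEnd 𝕜) (D0 r v) = 0})
    (DD : V → (V →SL[starRingEnd 𝕜] 𝕜))
    (hDD : ∀ v ∈ Wset, ∀ r : R, DD v (r : V) + (starRingEnd 𝕜) (D0 r v) = 0)
    (Z : Submodule 𝕜 V) (hZW : (Z : Set V) ⊆ Wset) (hRZ : R ≤ Z)
    (hZadm : ∀ z ∈ Z, RCLike.re (DD z z) ≤ 0)
    (hZclosed : ∀ u : ℕ → V, (∀ n, u n ∈ Z) → ∀ v ∈ Wset,
        Filter.Tendsto (fun n => ‖u n - v‖ + ‖DD (u n) - DD v‖)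
          Filter.atTop (nhds 0) → v ∈ Z)
    (𝒜 : V →L[𝕜] (V →SL[starRingEnd 𝕜] 𝕜)) (α : ℝ) (hα : 0 < α)
    (hcoer : ∀ u : V, α * ‖u‖ ^ 2 ≤ RCLike.re (𝒜 u u))
    (f : V →SL[starRingEnd 𝕜] 𝕜) (g : V → 𝕜)
    (hgadd : ∀ z₁ ∈ Z, ∀ z₂ ∈ Z, g (z₁ + z₂) = g z₁ + g z₂)
    (hgsmul : ∀ c : 𝕜, ∀ z ∈ Z, g (c • z) = (starRingEnd 𝕜) c * g z)
    (hgbdd : ∃ C : ℝ, ∀ z ∈ Z, ‖g z‖ ≤ C * (‖z‖ + ‖DD z‖))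
    (hgR : ∀ r : R, g (r : V) = 0) :
    ∀ u : V,
      (∀ z ∈ Z, -(starRingEnd 𝕜) (DD z u) + 𝒜 u z = f z + g z) ↔
      (u ∈ Wset ∧ DD u + 𝒜 u = f ∧
        ∀ z ∈ Z, DD u z + (starRingEnd 𝕜) (DD z u) = -g z) :=
  stmt9_general R hR D0 hder Wset hWset DD hDD Z hZW hRZ 𝒜 f g hgR
end

section
/- Every admissible subspace Z₀ of W is contained in a maximal admissible subspace, and every maximal admissible subspace of W is strongly admissible. -/
/-- A subspace `Z` of the extended domain `Wset` of a derivation is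
admissible if it contains `R` and the boundary form
`b(w,w) = 2 Re⟨DD w, w⟩` is `≤ 0` on `Z`. -/
def IsAdmissible {𝕜 V : Type*} [RCLike 𝕜]
    [NormedAddCommGroup V] [InnerProductSpace 𝕜 V]
    (R : Submodule 𝕜 V) (Wset : Set V)
    (DD : V → (V →SL[starRingEnd 𝕜] 𝕜)) (Z : Submodule 𝕜 V) : Prop :=
  (Z : Set V) ⊆ Wset ∧ R ≤ Z ∧ ∀ w ∈ Z, RCLike.re (DD w w) ≤ 0

/-!
Zorn's lemma applies because admissibility is a condition on single vectors, so it passes to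
unions of chains. For strong admissibility, the boundary functional `DD` is additive on `W`
(a continuous functional is determined by its values on the dense subspace `R`), so for `u`
`b`-orthogonal to `Z` and `z ∈ Z` the boundary form splits as
`Re b(z + c u, z + c u) = Re b(z, z) + ‖c‖² Re b(u, u)`. Hence if `Re b(u, u) < 0`, the space
`Z + 𝕜 u` is admissible; by maximality `u ∈ Z`, and then `b(u, u) = 0`.
-/

open ComplexConjugate

section Admissible

variable {𝕜 V : Type*} [RCLike 𝕜] [NormedAddCommGroup V] [InnerProductSpace 𝕜 V]
  {R : Submodule 𝕜 V} {Wset : Set V} {DD : V → (V →SL[starRingEnd 𝕜] 𝕜)}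

theorem IsAdmissible.sSup_of_isChain {c : Set (Submodule 𝕜 V)}
    (hc : ∀ Z ∈ c, IsAdmissible R Wset DD Z) (hchain : IsChain (· ≤ ·) c) (hne : c.Nonempty) :
    IsAdmissible R Wset DD (sSup c) := by
  have hmem : ∀ w ∈ sSup c, ∃ Z ∈ c, w ∈ Z := fun w hw =>
    (Submodule.mem_sSup_of_directed hne hchain.directedOn).1 hw
  obtain ⟨Z, hZ⟩ := hne
  refine ⟨fun w hw => ?_, (hc Z hZ).2.1.trans (le_sSup hZ), fun w hw => ?_⟩
  · obtain ⟨M, hM, hwM⟩ := hmem w hw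
    exact (hc M hM).1 hwM
  · obtain ⟨M, hM, hwM⟩ := hmem w hw
    exact (hc M hM).2.2 w hwM

theorem exists_maximal_isAdmissible_ge {Z₀ : Submodule 𝕜 V} (h₀ : IsAdmissible R Wset DD Z₀) :
    ∃ Z₁, Z₀ ≤ Z₁ ∧ Maximal (IsAdmissible R Wset DD) Z₁ :=
  zorn_le_nonempty₀ {Z | IsAdmissible R Wset DD Z}
    (fun c hc hchain Z hZ => ⟨sSup c, IsAdmissible.sSup_of_isChain hc hchain ⟨Z, hZ⟩,
      fun _ => le_sSup⟩) Z₀ h₀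

end Admissible

section ExtendedDomain

variable {𝕜 V : Type*} [RCLike 𝕜] [NormedAddCommGroup V] [InnerProductSpace 𝕜 V]
  {R : Submodule 𝕜 V} (D0 : R → (V →SL[starRingEnd 𝕜] 𝕜))

def extendedDomain : Submodule 𝕜 V where
  carrier := {v | ∃ f : V →SL[starRingEnd 𝕜] 𝕜, ∀ r : R, f r + conj (D0 r v) = 0}
  add_mem' := by
    rintro v v' ⟨f, hf⟩ ⟨f', hf'⟩
    refine ⟨f + f', fun r => ?_⟩
    simp only [add_apply, map_add]
    linear_combination hf r + hf' r
  zero_mem' := ⟨0, by simp⟩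
  smul_mem' := by
    rintro c v ⟨f, hf⟩
    refine ⟨c • f, fun r => ?_⟩
    simp only [smul_apply, map_smulₛₗ, smul_eq_mul, map_mul, RCLike.conj_conj]
    linear_combination c * hf r

variable {D0} (hR : Dense (R : Set V)) {DD : V → (V →SL[starRingEnd 𝕜] 𝕜)}
  (hDD : ∀ v ∈ extendedDomain D0, ∀ r : R, DD v r + conj (D0 r v) = 0)
include hR

theorem boundaryFunctional_unique {v : V} {f g : V →SL[starRingEnd 𝕜] 𝕜}
    (hf : ∀ r : R, f r + conj (D0 r v) = 0) (hg : ∀ r : R, g r + conj (D0 r v) = 0) :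
    f = g :=
  ContinuousLinearMap.coeFn_injective <|
    Continuous.ext_on hR f.continuous g.continuous fun r hr =>
      add_right_cancel ((hf ⟨r, hr⟩).trans (hg ⟨r, hr⟩).symm)

include hDD

theorem boundary_add_smul {v w : V} (hv : v ∈ extendedDomain D0) (hw : w ∈ extendedDomain D0)
    (c : 𝕜) : DD (v + c • w) = DD v + c • DD w := by
  refine boundaryFunctional_unique hR (hDD _ (add_mem hv (Submodule.smul_mem _ c hw))) fun r => ?_
  simp only [add_apply, smul_apply, map_add, map_smulₛₗ, smul_eq_mul, map_mul, RCLike.conj_conj]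
  linear_combination hDD v hv r + c * hDD w hw r

theorem re_boundary_add_smul_of_orthogonal {z u : V} (hz : z ∈ extendedDomain D0)
    (hu : u ∈ extendedDomain D0) (horth : DD u z + conj (DD z u) = 0) (c : 𝕜) :
    RCLike.re (DD (z + c • u) (z + c • u)) = RCLike.re (DD z z) + ‖c‖ ^ 2 * RCLike.re (DD u u) := by
  have hexpand : DD (z + c • u) (z + c • u)
      = DD z z + (conj c * DD z u + c * DD u z) + c * conj c * DD u u := by
    rw [boundary_add_smul hR hDD hz hu]
    simp only [add_apply, smul_apply, map_add, map_smulₛₗ, smul_eq_mul]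
    ring
  -- `b(u, z) = 0` makes the cross term purely imaginary.
  have hcross : RCLike.re (conj c * DD z u + c * DD u z) = 0 := by
    have hconj : c * DD u z = -conj (conj c * DD z u) := by
      rw [eq_neg_of_add_eq_zero_left horth, map_mul, RCLike.conj_conj, mul_neg]
    rw [hconj, map_add, map_neg, RCLike.conj_re, add_neg_cancel]
  rw [hexpand, map_add, map_add, hcross, add_zero, RCLike.mul_conj, ← RCLike.ofReal_pow,
    RCLike.re_ofReal_mul]

theorem IsAdmissible.sup_span_singleton {Z : Submodule 𝕜 V}
    (hZ : IsAdmissible R (extendedDomain D0) DD Z) {u : V} (hu : u ∈ extendedDomain D0)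
    (horth : ∀ z ∈ Z, DD u z + conj (DD z u) = 0) (huu : RCLike.re (DD u u) ≤ 0) :
    IsAdmissible R (extendedDomain D0) DD (Z ⊔ 𝕜 ∙ u) := by
  have hrep : ∀ w ∈ Z ⊔ 𝕜 ∙ u, ∃ z ∈ Z, ∃ c : 𝕜, w = z + c • u := by
    intro w hw
    obtain ⟨z, hz, y, hy, rfl⟩ := Submodule.mem_sup.1 hw
    obtain ⟨c, rfl⟩ := Submodule.mem_span_singleton.1 hy
    exact ⟨z, hz, c, rfl⟩
  refine ⟨fun w hw => ?_, hZ.2.1.trans le_sup_left, fun w hw => ?_⟩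
  · obtain ⟨z, hz, c, rfl⟩ := hrep w hw
    exact add_mem (hZ.1 hz) (Submodule.smul_mem _ c hu)
  · obtain ⟨z, hz, c, rfl⟩ := hrep w hw
    rw [re_boundary_add_smul_of_orthogonal hR hDD (hZ.1 hz) hu (horth z hz)]
    nlinarith [hZ.2.2 z hz, sq_nonneg ‖c‖]

theorem re_boundary_self_nonneg_of_maximal {Z : Submodule 𝕜 V}
    (hZ : Maximal (IsAdmissible R (extendedDomain D0) DD) Z) {u : V}
    (hu : u ∈ extendedDomain D0) (horth : ∀ z ∈ Z, DD u z + conj (DD z u) = 0) :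
    0 ≤ RCLike.re (DD u u) := by
  by_contra! hneg
  have hsup := hZ.eq_of_ge (hZ.prop.sup_span_singleton hR hDD hu horth hneg.le) le_sup_left
  have huZ : u ∈ Z := hsup ▸ Submodule.mem_sup_right (Submodule.mem_span_singleton_self u)
  -- `b(u, u) = 2 Re ⟨DD u, u⟩` vanishes because `u` is `b`-orthogonal to itself.
  have hre := congrArg RCLike.re (horth u huZ)
  rw [map_add, RCLike.conj_re, map_zero] at hre
  linarith

end ExtendedDomain

theorem stmt10_general {𝕜 V : Type*} [RCLike 𝕜]
    [NormedAddCommGroup V] [InnerProductSpace 𝕜 V]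
    (R : Submodule 𝕜 V) (hR : Dense (R : Set V))
    (D0 : R →ₗ[𝕜] (V →SL[starRingEnd 𝕜] 𝕜))
    (Wset : Set V)
    (hWset : Wset = {v : V | ∃ f : V →SL[starRingEnd 𝕜] 𝕜,
        ∀ r : R, f (r : V) + (starRingEnd 𝕜) (D0 r v) = 0})
    (DD : V → (V →SL[starRingEnd 𝕜] 𝕜))
    (hDD : ∀ v ∈ Wset, ∀ r : R, DD v (r : V) + (starRingEnd 𝕜) (D0 r v) = 0) :
    (∀ Z₀ : Submodule 𝕜 V, IsAdmissible R Wset DD Z₀ →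
      ∃ Z₁ : Submodule 𝕜 V, IsAdmissible R Wset DD Z₁ ∧ Z₀ ≤ Z₁ ∧
        ∀ Z₂ : Submodule 𝕜 V, IsAdmissible R Wset DD Z₂ → Z₁ ≤ Z₂ → Z₂ = Z₁) ∧
    (∀ Z₁ : Submodule 𝕜 V, IsAdmissible R Wset DD Z₁ →
      (∀ Z₂ : Submodule 𝕜 V, IsAdmissible R Wset DD Z₂ → Z₁ ≤ Z₂ → Z₂ = Z₁) →
      ∀ u ∈ Wset, (∀ z ∈ Z₁, DD u z + (starRingEnd 𝕜) (DD z u) = 0) →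
        0 ≤ RCLike.re (DD u u)) := by
  have hW : Wset = extendedDomain D0 := hWset
  subst hW
  refine ⟨fun Z₀ h₀ => ?_, fun Z₁ h₁ hmax => ?_⟩
  · obtain ⟨Z₁, hle, hZ₁⟩ := exists_maximal_isAdmissible_ge h₀
    exact ⟨Z₁, hZ₁.prop, hle, fun Z₂ h₂ h₁₂ => hZ₁.eq_of_ge h₂ h₁₂⟩
  · have hZ₁ : Maximal (IsAdmissible R (extendedDomain D0) DD) Z₁ :=
      ⟨h₁, fun Z₂ h₂ h₁₂ => (hmax Z₂ h₂ h₁₂).le⟩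
    exact fun u => re_boundary_self_nonneg_of_maximal hR hDD hZ₁

/-- Proposition 3.7 (Zorn): every admissible subspace `Z₀` of the extended
domain `W` of a derivation is contained in a maximal admissible subspace,
and every maximal admissible subspace is strongly admissible, i.e.
`b(u,u) ≥ 0` for every `u ∈ W` which is `b`-orthogonal to it
(`b(u,z) = ⟨DD u, z⟩ + conj⟨DD z, u⟩`). -/
theorem stmt10 {𝕜 V : Type*} [RCLike 𝕜]
    [NormedAddCommGroup V] [InnerProductSpace 𝕜 V] [CompleteSpace V]
    (R : Submodule 𝕜 V) (hR : Dense (R : Set V))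
    (D0 : R →ₗ[𝕜] (V →SL[starRingEnd 𝕜] 𝕜))
    (hder : ∀ u v : R, D0 u (v : V) + (starRingEnd 𝕜) (D0 v (u : V)) = 0)
    (Wset : Set V)
    (hWset : Wset = {v : V | ∃ f : V →SL[starRingEnd 𝕜] 𝕜,
        ∀ r : R, f (r : V) + (starRingEnd 𝕜) (D0 r v) = 0})
    (DD : V → (V →SL[starRingEnd 𝕜] 𝕜))
    (hDD : ∀ v ∈ Wset, ∀ r : R, DD v (r : V) + (starRingEnd 𝕜) (D0 r v) = 0) :
    (∀ Z₀ : Submodule 𝕜 V, IsAdmissible R Wset DD Z₀ →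
      ∃ Z₁ : Submodule 𝕜 V, IsAdmissible R Wset DD Z₁ ∧ Z₀ ≤ Z₁ ∧
        ∀ Z₂ : Submodule 𝕜 V, IsAdmissible R Wset DD Z₂ → Z₁ ≤ Z₂ → Z₂ = Z₁) ∧
    (∀ Z₁ : Submodule 𝕜 V, IsAdmissible R Wset DD Z₁ →
      (∀ Z₂ : Submodule 𝕜 V, IsAdmissible R Wset DD Z₂ → Z₁ ≤ Z₂ → Z₂ = Z₁) →
      ∀ u ∈ Wset, (∀ z ∈ Z₁, DD u z + (starRingEnd 𝕜) (DD z u) = 0) →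
        0 ≤ RCLike.re (DD u u)) :=
  stmt10_general R hR D0 Wset hWset DD hDD
end

section
/- Assume there are a Hilbert space H and operators B₀, B₁ ∈ L(W, H) with b(v,w) = ⟨B₁v, B₁w⟩_H − ⟨B₀v, B₀w⟩_H for all v,w ∈ W and ker B₀ + ker B₁ = W. Then (a) the closures of the ranges of B₀* and B₁* in W intersect only in {0}, and (b) R ⊆ ker B₀ ∩ ker B₁. -/
/-!
Since the closure of the range of an adjoint `B*` is `(ker B)ᗮ`, part (a) says
`(ker B₀)ᗮ ⊓ (ker B₁)ᗮ = (ker B₀ ⊔ ker B₁)ᗮ = Wᗮ = 0`. For (b), let `r ∈ R`. The vanishing of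
`b(·, r)` on `ker B₀` says that `B₁ r` is orthogonal to `B₁ (ker B₀)`, which is all of `B₁ W`
because `ker B₀ + ker B₁ = W`; so `B₁ r = 0`, and symmetrically `B₀ r = 0`.
-/

section

variable {𝕜 E F G : Type*} [RCLike 𝕜]
  [NormedAddCommGroup E] [InnerProductSpace 𝕜 E]
  [NormedAddCommGroup F] [InnerProductSpace 𝕜 F]
  [NormedAddCommGroup G] [InnerProductSpace 𝕜 G]

theorem ContinuousLinearMap.topologicalClosure_range_adjoint_inf_eq_bot
    [CompleteSpace E] [CompleteSpace F] [CompleteSpace G] (A : E →L[𝕜] F) (B : E →L[𝕜] G)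
    (hker : LinearMap.ker (A : E →ₗ[𝕜] F) ⊔ LinearMap.ker (B : E →ₗ[𝕜] G) = ⊤) :
    (LinearMap.range (adjoint A : F →ₗ[𝕜] E)).topologicalClosure ⊓
      (LinearMap.range (adjoint B : G →ₗ[𝕜] E)).topologicalClosure = ⊥ := by
  rw [← A.orthogonal_ker, ← B.orthogonal_ker, Submodule.inf_orthogonal, hker,
    Submodule.top_orthogonal_eq_bot]

theorem ContinuousLinearMap.apply_eq_zero_of_inner_apply_eq_zero (T : E →L[𝕜] F)
    {K : Submodule 𝕜 E} (hK : K ⊔ LinearMap.ker (T : E →ₗ[𝕜] F) = ⊤) {r : E}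
    (horth : ∀ w ∈ K, (inner 𝕜 (T w) (T r) : 𝕜) = 0) : T r = 0 := by
  obtain ⟨u, hu, v, hv, rfl⟩ := Submodule.mem_sup.mp (hK ▸ Submodule.mem_top (x := r))
  have hTv : T v = 0 := hv
  have hTr : T (u + v) = T u := by rw [map_add, hTv, add_zero]
  rw [← inner_self_eq_zero (𝕜 := 𝕜), hTr]
  simpa only [hTr] using horth u hu

end

/-- Lemma 4.3: in the boundary-operator setting (`W` the extended domain of
a derivation, a Hilbert space; `b(v,w) = ⟨B₁v,B₁w⟩_H - ⟨B₀v,B₀w⟩_H` a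
boundary form vanishing whenever one argument is in `R`, and
`ker B₀ + ker B₁ = W`): (a) the closures of the ranges of `B₀*` and `B₁*`
intersect only in `{0}`; (b) `R ⊆ ker B₀ ∩ ker B₁`. -/
theorem stmt11 {𝕜 W H : Type*} [RCLike 𝕜]
    [NormedAddCommGroup W] [InnerProductSpace 𝕜 W] [CompleteSpace W]
    [NormedAddCommGroup H] [InnerProductSpace 𝕜 H] [CompleteSpace H]
    (B₀ B₁ : W →L[𝕜] H) (R : Submodule 𝕜 W)
    (hRb : ∀ r ∈ R, ∀ w : W,
      (inner 𝕜 (B₁ w) (B₁ r) : 𝕜) - inner 𝕜 (B₀ w) (B₀ r) = 0)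
    (hker : LinearMap.ker (B₀ : W →ₗ[𝕜] H) ⊔ LinearMap.ker (B₁ : W →ₗ[𝕜] H) = ⊤) :
    ((LinearMap.range (ContinuousLinearMap.adjoint B₀ : H →ₗ[𝕜] W)).topologicalClosure ⊓
        (LinearMap.range (ContinuousLinearMap.adjoint B₁ : H →ₗ[𝕜] W)).topologicalClosure = ⊥) ∧
      R ≤ LinearMap.ker (B₀ : W →ₗ[𝕜] H) ⊓ LinearMap.ker (B₁ : W →ₗ[𝕜] H) := by
  refine ⟨B₀.topologicalClosure_range_adjoint_inf_eq_bot B₁ hker, fun r hr => ⟨?_, ?_⟩⟩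
  · refine B₀.apply_eq_zero_of_inner_apply_eq_zero ((sup_comm _ _).trans hker) fun w hw => ?_
    simpa [show B₁ w = 0 from hw] using hRb r hr w
  · refine B₁.apply_eq_zero_of_inner_apply_eq_zero hker fun w hw => ?_
    simpa [show B₀ w = 0 from hw] using hRb r hr w
end

section
/- Under the boundary-operator assumption (b(v,w) = ⟨B₁v,B₁w⟩ − ⟨B₀v,B₀w⟩ and ker B₀ + ker B₁ = W), the subspace ker B₁ is a maximal admissible subspace of W. -/
/-! Split `x ∈ W` as `u + v` with `B₀ u = 0` and `B₁ v = 0`, so that `B₁ x = B₁ u`. For `r ∈ R`,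
testing the vanishing of `b(·, r)` against `u` gives `‖B₁ r‖² = ⟨B₁ u, B₁ r⟩ = 0`. If `Z ⊇ ker B₁`
is admissible, then `u = z - v ∈ Z` for `z ∈ Z`, and `‖B₁ u‖ ≤ ‖B₀ u‖ = 0` forces `B₁ z = 0`. -/

open LinearMap

theorem LinearMap.exists_mem_ker_sub_mem_ker_of_ker_sup_ker_eq_top {R M N P : Type*} [Ring R]
    [AddCommGroup M] [Module R M] [AddCommGroup N] [Module R N] [AddCommGroup P] [Module R P]
    {f : M →ₗ[R] N} {g : M →ₗ[R] P} (hker : ker f ⊔ ker g = ⊤) (x : M) :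
    ∃ u ∈ ker f, x - u ∈ ker g := by
  obtain ⟨u, hu, v, hv, rfl⟩ := Submodule.mem_sup.mp (hker ▸ Submodule.mem_top : x ∈ ker f ⊔ ker g)
  exact ⟨u, hu, by simpa using hv⟩

section BoundaryOperators

variable {𝕜 M H : Type*} [RCLike 𝕜] [AddCommGroup M] [Module 𝕜 M]
  [NormedAddCommGroup H] [InnerProductSpace 𝕜 H] {B₀ B₁ : M →ₗ[𝕜] H}

theorem mem_ker_of_inner_sub_inner_eq_zero (hker : ker B₀ ⊔ ker B₁ = ⊤) {r : M}
    (hr : ∀ w, (inner 𝕜 (B₁ w) (B₁ r) : 𝕜) - inner 𝕜 (B₀ w) (B₀ r) = 0) : r ∈ ker B₁ := by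
  obtain ⟨u, hu, hru⟩ := exists_mem_ker_sub_mem_ker_of_ker_sup_ker_eq_top hker r
  have h := hr u
  rw [mem_ker.mp hu, inner_zero_left, sub_zero, ← sub_mem_ker_iff.mp hru] at h
  exact inner_self_eq_zero.mp h

theorem le_ker_of_ker_le_of_norm_le (hker : ker B₀ ⊔ ker B₁ = ⊤) {Z : Submodule 𝕜 M}
    (hkerZ : ker B₁ ≤ Z) (hZ : ∀ z ∈ Z, ‖B₁ z‖ ≤ ‖B₀ z‖) : Z ≤ ker B₁ := by
  intro z hz
  obtain ⟨u, hu, hzu⟩ := exists_mem_ker_sub_mem_ker_of_ker_sup_ker_eq_top hker z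
  have huZ : u ∈ Z := by simpa using Z.sub_mem hz (hkerZ hzu)
  have hB₁u : ‖B₁ u‖ ≤ 0 := by simpa [mem_ker.mp hu] using hZ u huZ
  rw [mem_ker, sub_mem_ker_iff.mp hzu, ← norm_le_zero_iff]
  exact hB₁u

end BoundaryOperators

theorem stmt12_general {𝕜 W H : Type*} [RCLike 𝕜]
    [NormedAddCommGroup W] [InnerProductSpace 𝕜 W]
    [NormedAddCommGroup H] [InnerProductSpace 𝕜 H]
    (B₀ B₁ : W →L[𝕜] H) (R : Submodule 𝕜 W)
    (hRb : ∀ r ∈ R, ∀ w : W,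
      (inner 𝕜 (B₁ w) (B₁ r) : 𝕜) - inner 𝕜 (B₀ w) (B₀ r) = 0)
    (hker : LinearMap.ker (B₀ : W →ₗ[𝕜] H) ⊔ LinearMap.ker (B₁ : W →ₗ[𝕜] H) = ⊤) :
    (R ≤ LinearMap.ker (B₁ : W →ₗ[𝕜] H) ∧ ∀ w ∈ LinearMap.ker (B₁ : W →ₗ[𝕜] H), ‖B₁ w‖ ≤ ‖B₀ w‖) ∧
    ∀ Z : Submodule 𝕜 W, (R ≤ Z ∧ ∀ w ∈ Z, ‖B₁ w‖ ≤ ‖B₀ w‖) →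
      LinearMap.ker (B₁ : W →ₗ[𝕜] H) ≤ Z → Z = LinearMap.ker (B₁ : W →ₗ[𝕜] H) := by
  refine ⟨⟨fun r hr => mem_ker_of_inner_sub_inner_eq_zero hker (hRb r hr), ?_⟩, ?_⟩
  · intro w hw
    simp [show B₁ w = 0 from hw]
  · rintro Z ⟨-, hZ⟩ hkerZ
    exact le_antisymm (le_ker_of_ker_le_of_norm_le hker hkerZ hZ) hkerZ

/-- Proposition 4.4: in the boundary-operator setting
(`b(v,w) = ⟨B₁v,B₁w⟩_H - ⟨B₀v,B₀w⟩_H` vanishes when one argument is in `R`,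
and `ker B₀ + ker B₁ = W`), the subspace `ker B₁` is maximal admissible,
where `Z` is admissible iff `R ⊆ Z` and `b(w,w) ≤ 0` (i.e.
`‖B₁w‖ ≤ ‖B₀w‖`) for all `w ∈ Z`. -/
theorem stmt12 {𝕜 W H : Type*} [RCLike 𝕜]
    [NormedAddCommGroup W] [InnerProductSpace 𝕜 W] [CompleteSpace W]
    [NormedAddCommGroup H] [InnerProductSpace 𝕜 H] [CompleteSpace H]
    (B₀ B₁ : W →L[𝕜] H) (R : Submodule 𝕜 W)
    (hRb : ∀ r ∈ R, ∀ w : W,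
      (inner 𝕜 (B₁ w) (B₁ r) : 𝕜) - inner 𝕜 (B₀ w) (B₀ r) = 0)
    (hker : LinearMap.ker (B₀ : W →ₗ[𝕜] H) ⊔ LinearMap.ker (B₁ : W →ₗ[𝕜] H) = ⊤) :
    (R ≤ LinearMap.ker (B₁ : W →ₗ[𝕜] H) ∧ ∀ w ∈ LinearMap.ker (B₁ : W →ₗ[𝕜] H), ‖B₁ w‖ ≤ ‖B₀ w‖) ∧
    ∀ Z : Submodule 𝕜 W, (R ≤ Z ∧ ∀ w ∈ Z, ‖B₁ w‖ ≤ ‖B₀ w‖) →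
      LinearMap.ker (B₁ : W →ₗ[𝕜] H) ≤ Z → Z = LinearMap.ker (B₁ : W →ₗ[𝕜] H) :=
  stmt12_general B₀ B₁ R hRb hker
end

section
/- Under the boundary-operator assumption (b(v,w) = ⟨B₁v,B₁w⟩_H − ⟨B₀v,B₀w⟩_H, ker B₀ + ker B₁ = W, where b is the boundary form of a derivation), the ranges Ran B₀ and Ran B₁ are closed subspaces of H. -/
/-!
Write `D` for the maximal extension of the derivation, with `Dv ∈ V'` identified with a vector
by the Riesz map. Its graph `Γ ⊆ V × V` is the annihilator of the graph of `D₀` under the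
Hermitian form `⟪v, Dw⟫ + ⟪Dv, w⟫`, so it is closed, and `B₀`, `B₁` become bounded operators on
the Hilbert space `Γ`. The identity `2 Re ⟪v, Dv⟫ = ‖B₁ v‖² - ‖B₀ v‖²` makes
`v ↦ (v + Dv, B₀ v)` bounded below on `Γ`, so its range is closed. Hence `v ↦ v + Dv` has
closed range on `ker B₀`; a vector `p` orthogonal to that range satisfies `Dp = p` and `B₁ p = 0`,
so `2‖p‖² = -‖B₀ p‖²` and `p = 0`. Thus every value of `B₀` is attained where `v + Dv = 0`, and
`Ran B₀` is the closed slice `{h | (0, h) ∈ Ran (v ↦ (v + Dv, B₀ v))}`. Replacing `D` by `-D`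
swaps the roles of `B₀` and `B₁`.
-/

open scoped ComplexConjugate InnerProductSpace
open Set

noncomputable section

variable {𝕜 V : Type*} [RCLike 𝕜] [NormedAddCommGroup V] [InnerProductSpace 𝕜 V]

variable (𝕜) in
/-- On pairs `(v, Dv)` from the graph of an operator this is the boundary form
`b(v, w) = ⟪v, Dw⟫ + ⟪Dv, w⟫`. -/
def boundaryForm (x y : V × V) : 𝕜 := ⟪x.1, y.2⟫_𝕜 + ⟪x.2, y.1⟫_𝕜

variable (𝕜) in
def boundaryOrthogonal (S : Set (V × V)) : Submodule 𝕜 (V × V) where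
  carrier := {y | ∀ x ∈ S, boundaryForm 𝕜 x y = 0}
  add_mem' hy hz x hx := by
    simp only [boundaryForm, Prod.fst_add, Prod.snd_add, inner_add_right] at *
    linear_combination hy x hx + hz x hx
  zero_mem' x _ := by simp [boundaryForm]
  smul_mem' c y hy x hx := by
    simp only [boundaryForm, Prod.smul_fst, Prod.smul_snd, inner_smul_right] at *
    linear_combination c * hy x hx

lemma mem_boundaryOrthogonal {S : Set (V × V)} {y : V × V} :
    y ∈ boundaryOrthogonal 𝕜 S ↔ ∀ x ∈ S, boundaryForm 𝕜 x y = 0 := Iff.rfl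

lemma isClosed_boundaryOrthogonal (S : Set (V × V)) :
    IsClosed (boundaryOrthogonal 𝕜 S : Set (V × V)) := by
  change IsClosed {y | ∀ x ∈ S, boundaryForm 𝕜 x y = 0}
  simp only [ofPred_forall]
  exact isClosed_iInter fun x => isClosed_iInter fun _ =>
    isClosed_eq (by unfold boundaryForm; fun_prop) continuous_const

lemma boundaryForm_self (x : V × V) : boundaryForm 𝕜 x x = 2 * RCLike.re ⟪x.1, x.2⟫_𝕜 := by
  rw [boundaryForm, ← inner_conj_symm x.2 x.1, RCLike.add_conj]

variable (𝕜 V) in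
def negSnd : (V × V) ≃L[𝕜] (V × V) :=
  (ContinuousLinearEquiv.refl 𝕜 V).prodCongr (ContinuousLinearEquiv.neg 𝕜)

@[simp] lemma negSnd_apply (x : V × V) : negSnd 𝕜 V x = (x.1, -x.2) := rfl

@[simp] lemma negSnd_negSnd (x : V × V) : negSnd 𝕜 V (negSnd 𝕜 V x) = x := by simp

lemma boundaryForm_negSnd (x y : V × V) :
    boundaryForm 𝕜 (negSnd 𝕜 V x) (negSnd 𝕜 V y) = -boundaryForm 𝕜 x y := by
  simp [boundaryForm]; ring

lemma map_negSnd_boundaryOrthogonal (S : Set (V × V)) :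
    (boundaryOrthogonal 𝕜 (negSnd 𝕜 V ⁻¹' S)).map (negSnd 𝕜 V : V × V →ₗ[𝕜] V × V) =
      boundaryOrthogonal 𝕜 S := by
  have hform (x y : V × V) :
      boundaryForm 𝕜 x (negSnd 𝕜 V y) = -boundaryForm 𝕜 (negSnd 𝕜 V x) y := by
    rw [← boundaryForm_negSnd, negSnd_negSnd]
  ext y
  constructor
  · rintro ⟨x, hx, rfl⟩ s hs
    change boundaryForm 𝕜 s (negSnd 𝕜 V x) = 0
    rw [hform, hx _ (by simpa using hs), neg_zero]
  · refine fun hy => ⟨negSnd 𝕜 V y, fun s hs => ?_, negSnd_negSnd y⟩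
    rw [hform, hy _ hs, neg_zero]

def graphSum (S : Set (V × V)) : boundaryOrthogonal 𝕜 S →L[𝕜] V :=
  (ContinuousLinearMap.fst 𝕜 V V + ContinuousLinearMap.snd 𝕜 V V) ∘L
    (boundaryOrthogonal 𝕜 S).subtypeL

@[simp] lemma graphSum_apply {S : Set (V × V)} (x : boundaryOrthogonal 𝕜 S) :
    graphSum S x = x.1.1 + x.1.2 := rfl

lemma norm_boundaryOrthogonal {S : Set (V × V)} (x : boundaryOrthogonal 𝕜 S) :
    ‖x‖ = max ‖x.1.1‖ ‖x.1.2‖ := rfl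

section BoundaryOperators

variable {H : Type*} [NormedAddCommGroup H] [InnerProductSpace 𝕜 H]
  {S : Set (V × V)} {B₀ B₁ : boundaryOrthogonal 𝕜 S →L[𝕜] H}
  (hB : ∀ x y : boundaryOrthogonal 𝕜 S,
    boundaryForm 𝕜 (x : V × V) y = ⟪B₁ x, B₁ y⟫_𝕜 - ⟪B₀ x, B₀ y⟫_𝕜)
include hB

lemma two_mul_re_inner_fst_snd (x : boundaryOrthogonal 𝕜 S) :
    2 * RCLike.re ⟪x.1.1, x.1.2⟫_𝕜 = ‖B₁ x‖ ^ 2 - ‖B₀ x‖ ^ 2 := by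
  have h := hB x x
  rw [boundaryForm_self, inner_self_eq_norm_sq_to_K, inner_self_eq_norm_sq_to_K] at h
  exact_mod_cast h

lemma norm_fst_add_snd_sq (x : boundaryOrthogonal 𝕜 S) :
    ‖x.1.1 + x.1.2‖ ^ 2 = ‖x.1.1‖ ^ 2 + ‖x.1.2‖ ^ 2 + (‖B₁ x‖ ^ 2 - ‖B₀ x‖ ^ 2) := by
  rw [norm_add_sq (𝕜 := 𝕜), ← two_mul_re_inner_fst_snd hB]
  ring

lemma norm_le_two_mul_norm_graphSum_prod (x : boundaryOrthogonal 𝕜 S) :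
    ‖x‖ ≤ 2 * ‖(graphSum S).prod B₀ x‖ := by
  have hsum := norm_fst_add_snd_sq hB x
  have hP : ‖x.1.1 + x.1.2‖ ≤ ‖(graphSum S).prod B₀ x‖ := norm_fst_le ((graphSum S).prod B₀ x)
  have hB₀ : ‖B₀ x‖ ≤ ‖(graphSum S).prod B₀ x‖ := norm_snd_le ((graphSum S).prod B₀ x)
  rw [norm_boundaryOrthogonal]
  apply max_le <;>
    refine (pow_le_pow_iff_left₀ (norm_nonneg _) (by positivity) two_ne_zero).mp ?_ <;>
    nlinarith [sq_nonneg ‖B₁ x‖, sq_nonneg ‖x.1.1‖, sq_nonneg ‖x.1.2‖,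
      norm_nonneg (x.1.1 + x.1.2), norm_nonneg (B₀ x)]

lemma isClosed_range_graphSum_prod [CompleteSpace V] :
    IsClosed (range ((graphSum S).prod B₀)) := by
  have : CompleteSpace (boundaryOrthogonal 𝕜 S) :=
    (isClosed_boundaryOrthogonal S).completeSpace_coe
  refine (((graphSum S).prod B₀).antilipschitz_of_bound (K := 2) fun x => ?_).isClosed_range
    ((graphSum S).prod B₀).uniformContinuous
  exact_mod_cast norm_le_two_mul_norm_graphSum_prod hB x

variable (hker : ∀ x, ∃ x₀ x₁, B₀ x₀ = 0 ∧ B₁ x₁ = 0 ∧ x₀ + x₁ = x)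
include hker

lemma map_eq_zero_of_mem (hS : S ⊆ boundaryOrthogonal 𝕜 S) {s : V × V} (hs : s ∈ S) :
    B₀ ⟨s, hS hs⟩ = 0 := by
  obtain ⟨x₀, x₁, hx₀, hx₁, hsum⟩ := hker ⟨s, hS hs⟩
  have hform : boundaryForm 𝕜 s x₁ = 0 := x₁.2 s hs
  have hB₀x₁ : B₀ x₁ = B₀ ⟨s, hS hs⟩ := by rw [← hsum, map_add, hx₀, zero_add]
  rw [hB ⟨s, hS hs⟩ x₁, hx₁, inner_zero_right, zero_sub, neg_eq_zero, hB₀x₁] at hform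
  exact inner_self_eq_zero.mp hform

lemma eq_zero_of_diag_mem {p : V} (hp : (p, p) ∈ boundaryOrthogonal 𝕜 S)
    (hperp : ∀ x, B₀ x = 0 → ⟪graphSum S x, p⟫_𝕜 = 0) : p = 0 := by
  set y : boundaryOrthogonal 𝕜 S := ⟨(p, p), hp⟩
  obtain ⟨x₀, x₁, hx₀, hx₁, hsum⟩ := hker y
  have hB₁y : B₁ y = B₁ x₀ := by rw [← hsum, map_add, hx₁, add_zero]
  have hform : boundaryForm 𝕜 (x₀ : V × V) y = ⟪graphSum S x₀, p⟫_𝕜 := by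
    simp [y, boundaryForm, inner_add_left]
  rw [hB x₀ y, hx₀, inner_zero_left, sub_zero, hperp x₀ hx₀, hB₁y] at hform
  have henergy := two_mul_re_inner_fst_snd hB y
  rw [hB₁y, inner_self_eq_zero.mp hform, norm_zero] at henergy
  change 2 * RCLike.re ⟪p, p⟫_𝕜 = _ at henergy
  rw [inner_self_eq_norm_sq] at henergy
  rw [← norm_eq_zero, ← sq_eq_zero_iff]
  nlinarith [sq_nonneg ‖p‖, sq_nonneg ‖B₀ y‖]

lemma exists_graphSum_eq_of_map_eq_zero [CompleteSpace V] (hS : S ⊆ boundaryOrthogonal 𝕜 S)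
    (v : V) : ∃ x, B₀ x = 0 ∧ graphSum S x = v := by
  let M : Submodule 𝕜 V := ((graphSum S).prod B₀).range.comap (LinearMap.inl 𝕜 V H)
  have hM (v : V) : v ∈ M ↔ ∃ x, B₀ x = 0 ∧ graphSum S x = v := by
    simp [M, Prod.ext_iff, and_comm]
  have : CompleteSpace M := ((isClosed_range_graphSum_prod hB).preimage
    (ContinuousLinearMap.inl 𝕜 V H).continuous).completeSpace_coe
  suffices Mᗮ = ⊥ from (hM v).1 (Submodule.orthogonal_eq_bot_iff.1 this ▸ Submodule.mem_top)
  refine (Submodule.eq_bot_iff _).2 fun p hp => ?_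
  have hperp (x) (hx : B₀ x = 0) : ⟪graphSum S x, p⟫_𝕜 = 0 :=
    (Submodule.mem_orthogonal _ _).1 hp _ ((hM _).2 ⟨x, hx, rfl⟩)
  refine eq_zero_of_diag_mem hB hker (fun s hs => ?_) hperp
  simpa [boundaryForm, inner_add_left] using hperp _ (map_eq_zero_of_mem hB hker hS hs)

theorem isClosed_range_B₀ [CompleteSpace V] (hS : S ⊆ boundaryOrthogonal 𝕜 S) :
    IsClosed (range B₀) := by
  have : range B₀ = ContinuousLinearMap.inr 𝕜 V H ⁻¹' range ((graphSum S).prod B₀) := by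
    ext h
    constructor
    · rintro ⟨x, rfl⟩
      obtain ⟨x₀, hx₀, hsum⟩ := exists_graphSum_eq_of_map_eq_zero hB hker hS (graphSum S x)
      exact ⟨x - x₀, by
        simp only [map_sub, ContinuousLinearMap.prod_apply, hsum, hx₀, Prod.mk_sub_mk, sub_self,
          sub_zero, ContinuousLinearMap.inr_apply]⟩
    · rintro ⟨x, hx⟩
      exact ⟨x, congrArg Prod.snd hx⟩
  rw [this]
  exact (isClosed_range_graphSum_prod hB).preimage (ContinuousLinearMap.inr 𝕜 V H).continuous

theorem isClosed_range_B₁ [CompleteSpace V] (hS : S ⊆ boundaryOrthogonal 𝕜 S) :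
    IsClosed (range B₁) := by
  let e := (negSnd 𝕜 V).ofSubmodules _ _ (map_negSnd_boundaryOrthogonal S)
  have hS' : negSnd 𝕜 V ⁻¹' S ⊆ boundaryOrthogonal 𝕜 (negSnd 𝕜 V ⁻¹' S) := fun x hx s hs => by
    rw [← neg_eq_zero, ← boundaryForm_negSnd]
    exact hS hx _ hs
  have hB' (x y : boundaryOrthogonal 𝕜 (negSnd 𝕜 V ⁻¹' S)) :
      boundaryForm 𝕜 (x : V × V) y = ⟪B₀ (e x), B₀ (e y)⟫_𝕜 - ⟪B₁ (e x), B₁ (e y)⟫_𝕜 := by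
    rw [← neg_sub, ← hB, ← neg_neg (boundaryForm 𝕜 _ _), ← boundaryForm_negSnd]
    rfl
  have hker' (x) : ∃ x₀ x₁, B₁ (e x₀) = 0 ∧ B₀ (e x₁) = 0 ∧ x₀ + x₁ = x := by
    obtain ⟨x₀, x₁, hx₀, hx₁, hsum⟩ := hker (e x)
    exact ⟨e.symm x₁, e.symm x₀, by simpa using hx₁, by simpa using hx₀,
      by rw [← map_add, add_comm, hsum, e.symm_apply_apply]⟩
  have h := isClosed_range_B₀ (B₀ := B₁ ∘L (e : _ →L[𝕜] _)) (B₁ := B₀ ∘L (e : _ →L[𝕜] _))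
    hB' hker' hS'
  rwa [ContinuousLinearMap.coe_comp, ContinuousLinearEquiv.coe_coe, e.surjective.range_comp] at h

end BoundaryOperators

section Graph

variable {H : Type*} [NormedAddCommGroup H] {W : Set V}

def graphLift [NormedSpace 𝕜 H] (Γ : Submodule 𝕜 (V × V)) (B : V → H) (hΓ : ∀ y ∈ Γ, y.1 ∈ W)
    (hlin : ∀ v ∈ W, ∀ w ∈ W, ∀ c : 𝕜, B (v + w) = B v + B w ∧ B (c • v) = c • B v)
    (hbdd : ∃ C, ∀ y ∈ Γ, ‖B y.1‖ ≤ C * ‖y‖) : Γ →L[𝕜] H :=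
  LinearMap.mkContinuousOfExistsBound
    { toFun := fun y => B y.1.1
      map_add' := fun y z => (hlin _ (hΓ _ y.2) _ (hΓ _ z.2) 1).1
      map_smul' := fun c y => (hlin _ (hΓ _ y.2) _ (hΓ _ y.2) c).2 }
    (hbdd.imp fun _ hC y => hC y y.2)

variable {Γ : Submodule 𝕜 (V × V)}

lemma range_graphLift [NormedSpace 𝕜 H] {B : V → H} (hΓ : ∀ y ∈ Γ, y.1 ∈ W) hlin hbdd
    (hW : ∀ v ∈ W, ∃ e, (v, e) ∈ Γ) : range (graphLift Γ B hΓ hlin hbdd) = B '' W := by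
  ext h
  constructor
  · rintro ⟨y, rfl⟩
    exact ⟨y.1.1, hΓ _ y.2, rfl⟩
  · rintro ⟨v, hv, rfl⟩
    obtain ⟨e, he⟩ := hW v hv
    exact ⟨⟨(v, e), he⟩, rfl⟩

lemma exists_add_eq_of_graph {B₀ B₁ : V → H} (hΓ : ∀ y ∈ Γ, y.1 ∈ W)
    (hW : ∀ v ∈ W, ∃ e, (v, e) ∈ Γ)
    (hker : ∀ w ∈ W, ∃ w₀ ∈ W, ∃ w₁ ∈ W, B₀ w₀ = 0 ∧ B₁ w₁ = 0 ∧ w = w₀ + w₁) (y : Γ) :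
    ∃ x₀ x₁ : Γ, B₀ x₀.1.1 = 0 ∧ B₁ x₁.1.1 = 0 ∧ x₀ + x₁ = y := by
  obtain ⟨w₀, hw₀, w₁, -, hBw₀, hBw₁, hsum⟩ := hker _ (hΓ _ y.2)
  obtain ⟨e, he⟩ := hW w₀ hw₀
  refine ⟨⟨(w₀, e), he⟩, y - ⟨(w₀, e), he⟩, hBw₀, ?_, add_sub_cancel _ _⟩
  simpa [hsum] using hBw₁

variable {DD : V → (V →L⋆[𝕜] 𝕜)} (hΓ : ∀ y ∈ Γ, y.1 ∈ W ∧ DD y.1 = innerSLFlip 𝕜 y.2)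
include hΓ

lemma exists_bound_of_graph {B : V → H} (hB : ∃ C, ∀ v ∈ W, ‖B v‖ ≤ C * (‖v‖ + ‖DD v‖)) :
    ∃ C, ∀ y ∈ Γ, ‖B y.1‖ ≤ C * ‖y‖ := by
  obtain ⟨C, hC⟩ := hB
  refine ⟨2 * max C 0, fun y hy => ?_⟩
  obtain ⟨hyW, hDDy⟩ := hΓ y hy
  have hDD : ‖DD y.1‖ ≤ ‖y.2‖ := by
    rw [hDDy]
    refine ContinuousLinearMap.opNorm_le_bound _ (norm_nonneg _) fun x => ?_
    rw [innerSLFlip_apply_apply, mul_comm]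
    exact norm_inner_le_norm x y.2
  have hy : ‖y.1‖ + ‖y.2‖ ≤ 2 * ‖y‖ := by linarith [norm_fst_le y, norm_snd_le y]
  calc ‖B y.1‖ ≤ C * (‖y.1‖ + ‖DD y.1‖) := hC _ hyW
    _ ≤ max C 0 * (2 * ‖y‖) :=
      mul_le_mul (le_max_left _ _) (by linarith) (by positivity) (le_max_right _ _)
    _ = 2 * max C 0 * ‖y‖ := by ring

lemma boundaryForm_eq_of_graph [InnerProductSpace 𝕜 H] {B₀ B₁ : V → H}
    (hfact : ∀ v ∈ W, ∀ w ∈ W, DD v w + conj (DD w v) = ⟪B₁ w, B₁ v⟫_𝕜 - ⟪B₀ w, B₀ v⟫_𝕜)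
    {x y : V × V} (hx : x ∈ Γ) (hy : y ∈ Γ) :
    boundaryForm 𝕜 x y = ⟪B₁ x.1, B₁ y.1⟫_𝕜 - ⟪B₀ x.1, B₀ y.1⟫_𝕜 := by
  obtain ⟨hxW, hDDx⟩ := hΓ x hx
  obtain ⟨hyW, hDDy⟩ := hΓ y hy
  rw [← hfact _ hyW _ hxW, hDDx, hDDy, innerSLFlip_apply_apply, innerSLFlip_apply_apply,
    inner_conj_symm, boundaryForm]

end Graph

section Derivation

variable [CompleteSpace V]

def antidualRep (f : V →L⋆[𝕜] 𝕜) : V :=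
  (InnerProductSpace.toDual 𝕜 V).symm ((starL 𝕜 : 𝕜 ≃L⋆[𝕜] 𝕜).toContinuousLinearMap.comp f)

@[simp] lemma inner_antidualRep (f : V →L⋆[𝕜] 𝕜) (x : V) : ⟪x, antidualRep f⟫_𝕜 = f x := by
  rw [← inner_conj_symm, antidualRep, InnerProductSpace.toDual_symm_apply]
  simp

variable {R : Submodule 𝕜 V} (D0 : R →ₗ[𝕜] (V →L⋆[𝕜] 𝕜))

def derivationGraph : Set (V × V) := range fun r : R => ((r : V), antidualRep (D0 r))

lemma mem_boundaryOrthogonal_derivationGraph {y : V × V} :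
    y ∈ boundaryOrthogonal 𝕜 (derivationGraph D0) ↔
      ∀ r : R, ⟪(r : V), y.2⟫_𝕜 + conj (D0 r y.1) = 0 := by
  simp only [mem_boundaryOrthogonal, derivationGraph, forall_mem_range, boundaryForm,
    ← inner_antidualRep (D0 _) y.1, inner_conj_symm]

lemma derivationGraph_subset_boundaryOrthogonal (hder : ∀ u v : R, D0 u (v : V) + conj (D0 v (u : V)) = 0) :
    derivationGraph D0 ⊆ boundaryOrthogonal 𝕜 (derivationGraph D0) := by
  rintro _ ⟨u, rfl⟩
  exact (mem_boundaryOrthogonal_derivationGraph D0).2 fun v => by simpa using hder u v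

variable {W : Set V} {DD : V → (V →L⋆[𝕜] 𝕜)}
  (hDD : ∀ v ∈ W, ∀ r : R, DD v (r : V) + conj (D0 r v) = 0)
include hDD

lemma exists_mem_boundaryOrthogonal_derivationGraph {v : V} (hv : v ∈ W) :
    ∃ e, (v, e) ∈ boundaryOrthogonal 𝕜 (derivationGraph D0) :=
  ⟨antidualRep (DD v), (mem_boundaryOrthogonal_derivationGraph D0).2 fun r => by
    simpa using hDD v hv r⟩

lemma fst_mem_and_eq_of_mem_boundaryOrthogonal (hR : Dense (R : Set V))
    (hW : W = {v | ∃ f : V →L⋆[𝕜] 𝕜, ∀ r : R, f r + conj (D0 r v) = 0}) {y : V × V}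
    (hy : y ∈ boundaryOrthogonal 𝕜 (derivationGraph D0)) :
    y.1 ∈ W ∧ DD y.1 = innerSLFlip 𝕜 y.2 := by
  rw [mem_boundaryOrthogonal_derivationGraph] at hy
  have hyW : y.1 ∈ W := hW ▸ ⟨innerSLFlip 𝕜 y.2, by simpa using hy⟩
  refine ⟨hyW, DFunLike.coe_injective <| Continuous.ext_on hR (DD y.1).continuous
    (innerSLFlip 𝕜 y.2).continuous fun x hx => ?_⟩
  have h := hDD _ hyW ⟨x, hx⟩
  have h' := hy ⟨x, hx⟩
  simp only [innerSLFlip_apply_apply]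
  linear_combination h - h'

end Derivation

end

theorem stmt14_general {𝕜 V H : Type*} [RCLike 𝕜]
    [NormedAddCommGroup V] [InnerProductSpace 𝕜 V] [CompleteSpace V]
    [NormedAddCommGroup H] [InnerProductSpace 𝕜 H]
    (R : Submodule 𝕜 V) (hR : Dense (R : Set V))
    (D0 : R →ₗ[𝕜] (V →SL[starRingEnd 𝕜] 𝕜))
    (hder : ∀ u v : R, D0 u (v : V) + (starRingEnd 𝕜) (D0 v (u : V)) = 0)
    (Wset : Set V)
    (hWset : Wset = {v : V | ∃ f : V →SL[starRingEnd 𝕜] 𝕜,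
        ∀ r : R, f (r : V) + (starRingEnd 𝕜) (D0 r v) = 0})
    (DD : V → (V →SL[starRingEnd 𝕜] 𝕜))
    (hDD : ∀ v ∈ Wset, ∀ r : R, DD v (r : V) + (starRingEnd 𝕜) (D0 r v) = 0)
    (B₀ B₁ : V → H)
    (hB₀lin : ∀ v ∈ Wset, ∀ w ∈ Wset, ∀ c : 𝕜,
        B₀ (v + w) = B₀ v + B₀ w ∧ B₀ (c • v) = c • B₀ v)
    (hB₁lin : ∀ v ∈ Wset, ∀ w ∈ Wset, ∀ c : 𝕜,
        B₁ (v + w) = B₁ v + B₁ w ∧ B₁ (c • v) = c • B₁ v)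
    (hB₀bdd : ∃ C : ℝ, ∀ v ∈ Wset, ‖B₀ v‖ ≤ C * (‖v‖ + ‖DD v‖))
    (hB₁bdd : ∃ C : ℝ, ∀ v ∈ Wset, ‖B₁ v‖ ≤ C * (‖v‖ + ‖DD v‖))
    (hfact : ∀ v ∈ Wset, ∀ w ∈ Wset,
        DD v w + (starRingEnd 𝕜) (DD w v) =
          (inner 𝕜 (B₁ w) (B₁ v) : 𝕜) - inner 𝕜 (B₀ w) (B₀ v))
    (hker : ∀ w ∈ Wset, ∃ w₀ ∈ Wset, ∃ w₁ ∈ Wset,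
        B₀ w₀ = 0 ∧ B₁ w₁ = 0 ∧ w = w₀ + w₁) :
    IsClosed (B₀ '' Wset) ∧ IsClosed (B₁ '' Wset) := by
  set Γ := boundaryOrthogonal 𝕜 (derivationGraph D0)
  have hΓ (y) (hy : y ∈ Γ) : y.1 ∈ Wset ∧ DD y.1 = innerSLFlip 𝕜 y.2 :=
    fst_mem_and_eq_of_mem_boundaryOrthogonal D0 hDD hR hWset hy
  have hW (v) (hv : v ∈ Wset) : ∃ e, (v, e) ∈ Γ :=
    exists_mem_boundaryOrthogonal_derivationGraph D0 hDD hv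
  have hΓW (y) (hy : y ∈ Γ) : y.1 ∈ Wset := (hΓ y hy).1
  let β₀ := graphLift Γ B₀ hΓW hB₀lin (exists_bound_of_graph hΓ hB₀bdd)
  let β₁ := graphLift Γ B₁ hΓW hB₁lin (exists_bound_of_graph hΓ hB₁bdd)
  have hform (x y : Γ) : boundaryForm 𝕜 (x : V × V) y = ⟪β₁ x, β₁ y⟫_𝕜 - ⟪β₀ x, β₀ y⟫_𝕜 :=
    boundaryForm_eq_of_graph hΓ hfact x.2 y.2
  have hsplit := exists_add_eq_of_graph hΓW hW hker
  have hcore := derivationGraph_subset_boundaryOrthogonal D0 hder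
  have hran₀ : range β₀ = B₀ '' Wset := range_graphLift hΓW hB₀lin _ hW
  have hran₁ : range β₁ = B₁ '' Wset := range_graphLift hΓW hB₁lin _ hW
  rw [← hran₀, ← hran₁]
  exact ⟨isClosed_range_B₀ hform hsplit hcore, isClosed_range_B₁ hform hsplit hcore⟩

/-- Proposition 4.6: in the boundary-operator setting over the extended
domain `Wset` of a derivation `D0 : R → V'` (with extension `DD` and
boundary form `b(v,w) = ⟨DD v, w⟩ + conj⟨DD w, v⟩`), where `B₀, B₁` are
linear maps from `W` to a Hilbert space `H`, bounded for the `W`-norm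
`‖·‖_V + ‖DD ·‖_{V'}`, satisfying
`b(v,w) = ⟨B₁v, B₁w⟩_H - ⟨B₀v, B₀w⟩_H` and `ker B₀ + ker B₁ = W`,
the ranges `B₀(W)` and `B₁(W)` are closed subsets of `H`. -/
theorem stmt14 {𝕜 V H : Type*} [RCLike 𝕜]
    [NormedAddCommGroup V] [InnerProductSpace 𝕜 V] [CompleteSpace V]
    [NormedAddCommGroup H] [InnerProductSpace 𝕜 H] [CompleteSpace H]
    (R : Submodule 𝕜 V) (hR : Dense (R : Set V))
    (D0 : R →ₗ[𝕜] (V →SL[starRingEnd 𝕜] 𝕜))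
    (hder : ∀ u v : R, D0 u (v : V) + (starRingEnd 𝕜) (D0 v (u : V)) = 0)
    (Wset : Set V)
    (hWset : Wset = {v : V | ∃ f : V →SL[starRingEnd 𝕜] 𝕜,
        ∀ r : R, f (r : V) + (starRingEnd 𝕜) (D0 r v) = 0})
    (DD : V → (V →SL[starRingEnd 𝕜] 𝕜))
    (hDD : ∀ v ∈ Wset, ∀ r : R, DD v (r : V) + (starRingEnd 𝕜) (D0 r v) = 0)
    (B₀ B₁ : V → H)
    (hB₀lin : ∀ v ∈ Wset, ∀ w ∈ Wset, ∀ c : 𝕜,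
        B₀ (v + w) = B₀ v + B₀ w ∧ B₀ (c • v) = c • B₀ v)
    (hB₁lin : ∀ v ∈ Wset, ∀ w ∈ Wset, ∀ c : 𝕜,
        B₁ (v + w) = B₁ v + B₁ w ∧ B₁ (c • v) = c • B₁ v)
    (hB₀bdd : ∃ C : ℝ, ∀ v ∈ Wset, ‖B₀ v‖ ≤ C * (‖v‖ + ‖DD v‖))
    (hB₁bdd : ∃ C : ℝ, ∀ v ∈ Wset, ‖B₁ v‖ ≤ C * (‖v‖ + ‖DD v‖))
    (hfact : ∀ v ∈ Wset, ∀ w ∈ Wset,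
        DD v w + (starRingEnd 𝕜) (DD w v) =
          (inner 𝕜 (B₁ w) (B₁ v) : 𝕜) - inner 𝕜 (B₀ w) (B₀ v))
    (hker : ∀ w ∈ Wset, ∃ w₀ ∈ Wset, ∃ w₁ ∈ Wset,
        B₀ w₀ = 0 ∧ B₁ w₁ = 0 ∧ w = w₀ + w₁) :
    IsClosed (B₀ '' Wset) ∧ IsClosed (B₁ '' Wset) :=
  stmt14_general R hR D0 hder Wset hWset DD hDD B₀ B₁ hB₀lin hB₁lin hB₀bdd hB₁bdd hfact hker
end

section
/- Let Z ⊆ W be an admissible subspace (so ‖B₁w‖ ≤ ‖B₀w‖ for w ∈ Z). Then there exists a linear contraction Φ : Ran B₀ → Ran B₁ (‖Φx‖ ≤ ‖x‖) such that Z ⊆ Z_Φ := { w ∈ W : B₁w = Φ B₀w }. -/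
/-!
On `Z`, the inequality `‖B₁ w‖ ≤ ‖B₀ w‖` shows that `B₀ w` determines `B₁ w`, so `B₀ w ↦ B₁ w` is a
well-defined contraction on `B₀(Z)`. It extends by continuity to the closure `K` of `B₀(Z)`, and
precomposing with the orthogonal projection onto `K` gives a contraction of all of `H`. Its values are
limits of values `B₁ w`, hence lie in `Ran B₁` because that range is closed.
-/

open LinearMap

namespace LinearMap

variable {𝕜 E H F : Type*}

theorem denseRange_codRestrict_topologicalClosure [Semiring 𝕜] [AddCommMonoid E] [Module 𝕜 E]
    [AddCommMonoid H] [Module 𝕜 H] [TopologicalSpace H] [ContinuousAdd H]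
    [ContinuousConstSMul 𝕜 H] (A : E →ₗ[𝕜] H) :
    DenseRange (A.codRestrict (range A).topologicalClosure
      fun x => (range A).le_topologicalClosure (mem_range_self A x)) := by
  refine Subtype.dense_iff.mpr ?_
  rw [← Set.range_comp]
  exact (Submodule.topologicalClosure_coe _).subset

theorem extendOfNorm_mem_closure_range [NontriviallyNormedField 𝕜] [AddCommGroup E] [Module 𝕜 E]
    [NormedAddCommGroup H] [NormedSpace 𝕜 H] [NormedAddCommGroup F] [NormedSpace 𝕜 F]
    [CompleteSpace F] {f : E →ₗ[𝕜] F} {e : E →ₗ[𝕜] H} (h_dense : DenseRange e) {C : ℝ}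
    (h_norm : ∀ x, ‖f x‖ ≤ C * ‖e x‖) (y : H) :
    f.extendOfNorm e y ∈ closure (range f : Set F) :=
  h_dense.induction (fun _ ⟨x, hx⟩ => hx ▸ extendOfNorm_eq h_dense ⟨C, h_norm⟩ x ▸
      subset_closure (mem_range_self f x))
    (isClosed_closure.preimage (f.extendOfNorm e).continuous) y

theorem exists_contraction_comp_eq [RCLike 𝕜] [AddCommGroup E] [Module 𝕜 E]
    [NormedAddCommGroup H] [InnerProductSpace 𝕜 H] [CompleteSpace H]
    [NormedAddCommGroup F] [NormedSpace 𝕜 F] [CompleteSpace F]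
    (A : E →ₗ[𝕜] H) (B : E →ₗ[𝕜] F) (hBA : ∀ x, ‖B x‖ ≤ ‖A x‖) :
    ∃ Φ : H →L[𝕜] F, ‖Φ‖ ≤ 1 ∧ (∀ y, Φ y ∈ closure (range B : Set F)) ∧
      ∀ x, Φ (A x) = B x := by
  set K := (range A).topologicalClosure
  set e := A.codRestrict K fun x => (range A).le_topologicalClosure (mem_range_self A x)
  have h_dense : DenseRange e := denseRange_codRestrict_topologicalClosure A
  have h_norm : ∀ x, ‖B x‖ ≤ 1 * ‖e x‖ := fun x => (hBA x).trans_eq (one_mul _).symm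
  refine ⟨(B.extendOfNorm e).comp K.orthogonalProjectionOnto, ?_,
    fun y => extendOfNorm_mem_closure_range h_dense h_norm _, fun x => ?_⟩
  · calc _ ≤ ‖B.extendOfNorm e‖ * ‖K.orthogonalProjectionOnto‖ :=
          ContinuousLinearMap.opNorm_comp_le _ _
      _ ≤ 1 * 1 := by
        gcongr
        · exact opNorm_extendOfNorm_le h_dense zero_le_one h_norm
        · exact K.orthogonalProjectionOnto_norm_le
      _ = 1 := one_mul 1
  · have hP : K.orthogonalProjectionOnto (A x) = e x :=
      K.orthogonalProjectionOnto_mem_subspace_eq_self (e x)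
    simp only [ContinuousLinearMap.comp_apply, hP, extendOfNorm_eq h_dense ⟨1, h_norm⟩]

end LinearMap

theorem stmt15_general {𝕜 W H : Type*} [RCLike 𝕜]
    [NormedAddCommGroup W] [InnerProductSpace 𝕜 W]
    [NormedAddCommGroup H] [InnerProductSpace 𝕜 H] [CompleteSpace H]
    (B₀ B₁ : W →L[𝕜] H)
    (hr₁ : IsClosed (LinearMap.range (B₁ : W →ₗ[𝕜] H) : Set H))
    (Z : Submodule 𝕜 W)
    (hadm : ∀ w ∈ Z, ‖B₁ w‖ ≤ ‖B₀ w‖) :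
    ∃ Φ : H →ₗ[𝕜] H,
      (∀ w : W, ‖Φ (B₀ w)‖ ≤ ‖B₀ w‖) ∧
      (∀ w : W, Φ (B₀ w) ∈ LinearMap.range (B₁ : W →ₗ[𝕜] H)) ∧
      ∀ w ∈ Z, B₁ w = Φ (B₀ w) := by
  obtain ⟨Φ, hΦ, hΦ_range, hΦ_comp⟩ :=
    exists_contraction_comp_eq ((B₀ : W →ₗ[𝕜] H) ∘ₗ Z.subtype) ((B₁ : W →ₗ[𝕜] H) ∘ₗ Z.subtype)
      fun w => hadm w w.2
  have h_closure : closure (range ((B₁ : W →ₗ[𝕜] H) ∘ₗ Z.subtype) : Set H) ⊆ range (B₁ : W →ₗ[𝕜] H) :=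
    closure_minimal (range_comp_le_range _ _) hr₁
  refine ⟨Φ, fun w => ?_, fun w => h_closure (hΦ_range _), fun w hw => (hΦ_comp ⟨w, hw⟩).symm⟩
  simpa using Φ.le_of_opNorm_le hΦ (B₀ w)

/-- Lemma 4.7: in the boundary-operator setting (`R ⊆ ker B₀ ∩ ker B₁`,
`ker B₀ + ker B₁ = W`, ranges of `B₀` and `B₁` closed in `H`), for every
admissible subspace `Z` (i.e. `R ⊆ Z` and `‖B₁w‖ ≤ ‖B₀w‖` on `Z`) there is
a linear contraction `Φ : Ran B₀ → Ran B₁` (encoded as a linear map on `H`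
contractive on `Ran B₀` and mapping `Ran B₀` into `Ran B₁`) with
`Z ⊆ Z_Φ = {w ∈ W : B₁w = Φ B₀w}`. -/
theorem stmt15 {𝕜 W H : Type*} [RCLike 𝕜]
    [NormedAddCommGroup W] [InnerProductSpace 𝕜 W] [CompleteSpace W]
    [NormedAddCommGroup H] [InnerProductSpace 𝕜 H] [CompleteSpace H]
    (B₀ B₁ : W →L[𝕜] H) (R : Submodule 𝕜 W)
    (hR : R ≤ LinearMap.ker (B₀ : W →ₗ[𝕜] H) ⊓ LinearMap.ker (B₁ : W →ₗ[𝕜] H))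
    (hker : LinearMap.ker (B₀ : W →ₗ[𝕜] H) ⊔ LinearMap.ker (B₁ : W →ₗ[𝕜] H) = ⊤)
    (hr₀ : IsClosed (LinearMap.range (B₀ : W →ₗ[𝕜] H) : Set H))
    (hr₁ : IsClosed (LinearMap.range (B₁ : W →ₗ[𝕜] H) : Set H))
    (Z : Submodule 𝕜 W) (hRZ : R ≤ Z)
    (hadm : ∀ w ∈ Z, ‖B₁ w‖ ≤ ‖B₀ w‖) :
    ∃ Φ : H →ₗ[𝕜] H,
      (∀ w : W, ‖Φ (B₀ w)‖ ≤ ‖B₀ w‖) ∧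
      (∀ w : W, Φ (B₀ w) ∈ LinearMap.range (B₁ : W →ₗ[𝕜] H)) ∧
      ∀ w ∈ Z, B₁ w = Φ (B₀ w) :=
  stmt15_general B₀ B₁ hr₁ Z hadm
end

section
/- In the boundary-operator setting, for every linear contraction Φ : Ran B₀ → Ran B₁ the space Z_Φ = { w ∈ W : B₁w = Φ B₀w } is maximal admissible; conversely every maximal admissible subspace of W equals Z_Φ for some such contraction Φ. -/
/-!
An admissible subspace `Z` is sent by `w ↦ (B₀ w, B₁ w)` onto the graph of a contraction from
part of `Ran B₀` into `Ran B₁`. Its closure is again such a graph, now with a complete domain, so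
composing with the orthogonal projection onto that domain gives a contraction `Φ` defined on all
of `H`, and `Z ⊆ Z_Φ`; maximality forces equality. Conversely `Z_Φ` is admissible, and since
`ker B₀ + ker B₁ = W` every pair `(B₀ w, Φ B₀ w)` is attained by some `z ∈ Z_Φ`. If `Z ⊇ Z_Φ` is
admissible and `w ∈ Z`, then `w - z ∈ Z` has `B₀ (w - z) = 0`, so `B₁ (w - z) = 0` and `w ∈ Z_Φ`.
-/

/-- `Z` is admissible (boundary-operator setting): `R ⊆ Z` and
`b(w,w) = ‖B₁w‖² - ‖B₀w‖² ≤ 0` on `Z`. -/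
def AdmissibleBd {𝕜 W H : Type*} [RCLike 𝕜]
    [NormedAddCommGroup W] [NormedSpace 𝕜 W]
    [NormedAddCommGroup H] [NormedSpace 𝕜 H]
    (B₀ B₁ : W →L[𝕜] H) (R : Submodule 𝕜 W) (Z : Submodule 𝕜 W) : Prop :=
  R ≤ Z ∧ ∀ w ∈ Z, ‖B₁ w‖ ≤ ‖B₀ w‖

open Submodule

section ContractiveGraph

variable {𝕜 E F : Type*} [NormedField 𝕜] [NormedAddCommGroup E] [NormedSpace 𝕜 E]
  [NormedAddCommGroup F] [NormedSpace 𝕜 F]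

def Submodule.IsContractiveGraph (G : Submodule 𝕜 (E × F)) : Prop :=
  ∀ p ∈ G, ‖p.2‖ ≤ ‖p.1‖

namespace Submodule.IsContractiveGraph

variable {G : Submodule 𝕜 (E × F)}

theorem snd_eq_zero (hG : G.IsContractiveGraph) {p : E × F} (hp : p ∈ G) (h : p.1 = 0) :
    p.2 = 0 :=
  norm_le_zero_iff.mp (by simpa [h] using hG p hp)

theorem snd_eq_of_fst_eq (hG : G.IsContractiveGraph) {p q : E × F} (hp : p ∈ G) (hq : q ∈ G)
    (h : p.1 = q.1) : p.2 = q.2 :=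
  sub_eq_zero.mp (hG.snd_eq_zero (G.sub_mem hp hq) (sub_eq_zero.mpr h))

theorem topologicalClosure (hG : G.IsContractiveGraph) :
    G.topologicalClosure.IsContractiveGraph := by
  have hclosed : IsClosed {p : E × F | ‖p.2‖ ≤ ‖p.1‖} :=
    isClosed_le (by fun_prop) (by fun_prop)
  intro p hp
  rw [← SetLike.mem_coe, topologicalClosure_coe] at hp
  exact closure_minimal hG hclosed hp

theorem isometry_fst (hG : G.IsContractiveGraph) :
    Isometry fun p : G ↦ (p : E × F).1 := by
  refine Isometry.of_dist_eq fun p q ↦ ?_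
  have h := hG _ (p - q).2
  simp only [Submodule.coe_sub, Prod.fst_sub, Prod.snd_sub] at h
  rw [Subtype.dist_eq, dist_eq_norm, dist_eq_norm, Prod.norm_def, Prod.fst_sub, Prod.snd_sub,
    max_eq_left h]

theorem isComplete_map_fst [CompleteSpace E] [CompleteSpace F] (hG : G.IsContractiveGraph)
    (hclosed : IsClosed (G : Set (E × F))) :
    IsComplete (G.map (LinearMap.fst 𝕜 E F) : Set E) := by
  have : CompleteSpace G := hclosed.completeSpace_coe
  have hrange : (G.map (LinearMap.fst 𝕜 E F) : Set E) = Set.range fun p : G ↦ (p : E × F).1 := by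
    rw [map_coe, LinearMap.coe_fst, Set.image_eq_range]
    rfl
  rw [hrange]
  exact hG.isometry_fst.isUniformInducing.isComplete_range

end Submodule.IsContractiveGraph

end ContractiveGraph

theorem Submodule.IsContractiveGraph.exists_contraction_extension {𝕜 E F : Type*} [RCLike 𝕜]
    [NormedAddCommGroup E] [InnerProductSpace 𝕜 E] [CompleteSpace E]
    [NormedAddCommGroup F] [NormedSpace 𝕜 F] [CompleteSpace F]
    {G : Submodule 𝕜 (E × F)} (hG : G.IsContractiveGraph) :
    ∃ Φ : E →ₗ[𝕜] F, (∀ x, ‖Φ x‖ ≤ ‖x‖) ∧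
      (∀ x, Φ x ∈ closure (Prod.snd '' (G : Set (E × F)))) ∧ ∀ p ∈ G, Φ p.1 = p.2 := by
  set Gc := G.topologicalClosure
  have hGc : Gc.IsContractiveGraph := hG.topologicalClosure
  have : CompleteSpace Gc.toLinearPMap.domain :=
    (hGc.isComplete_map_fst G.isClosed_topologicalClosure).completeSpace_coe
  have hgraph : ∀ y : Gc.toLinearPMap.domain, ((y : E), Gc.toLinearPMap y) ∈ Gc :=
    Gc.mem_graph_toLinearPMap fun p hp ↦ hGc.snd_eq_zero hp
  let P := Gc.toLinearPMap.domain.orthogonalProjectionOnto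
  refine ⟨Gc.toLinearPMap.toFun ∘ₗ P.toLinearMap, fun x ↦ ?_, fun x ↦ ?_, fun p hp ↦ ?_⟩
  · calc ‖Gc.toLinearPMap (P x)‖ ≤ ‖(P x : E)‖ := hGc _ (hgraph (P x))
      _ ≤ ‖x‖ := norm_orthogonalProjectionOnto_apply_le _ x
  · refine image_closure_subset_closure_image continuous_snd
      ⟨((P x : E), Gc.toLinearPMap (P x)), ?_, rfl⟩
    rw [← topologicalClosure_coe]
    exact hgraph (P x)
  · have hp₁ : p.1 ∈ Gc.toLinearPMap.domain := ⟨p, G.le_topologicalClosure hp, rfl⟩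
    change Gc.toLinearPMap (P p.1) = p.2
    rw [show P p.1 = ⟨p.1, hp₁⟩ from orthogonalProjectionOnto_mem_subspace_eq_self ⟨p.1, hp₁⟩]
    exact hGc.snd_eq_of_fst_eq (hgraph _) (G.le_topologicalClosure hp) rfl

section Boundary

variable {𝕜 W H : Type*} [RCLike 𝕜] [NormedAddCommGroup W] [NormedSpace 𝕜 W]
  [NormedAddCommGroup H] [NormedSpace 𝕜 H] {B₀ B₁ : W →L[𝕜] H} {R Z : Submodule 𝕜 W}

def contractionSubspace (B₀ B₁ : W →L[𝕜] H) (Φ : H →ₗ[𝕜] H) : Submodule 𝕜 W :=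
  LinearMap.ker ((B₁ : W →ₗ[𝕜] H) - Φ ∘ₗ (B₀ : W →ₗ[𝕜] H))

theorem coe_contractionSubspace (Φ : H →ₗ[𝕜] H) :
    (contractionSubspace B₀ B₁ Φ : Set W) = {w | B₁ w = Φ (B₀ w)} := by
  ext w
  simp [contractionSubspace, sub_eq_zero]

theorem mem_contractionSubspace {Φ : H →ₗ[𝕜] H} {w : W} :
    w ∈ contractionSubspace B₀ B₁ Φ ↔ B₁ w = Φ (B₀ w) := by
  rw [← SetLike.mem_coe, coe_contractionSubspace, Set.mem_ofPred_eq]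

theorem ker_inf_ker_le_contractionSubspace (Φ : H →ₗ[𝕜] H) :
    LinearMap.ker (B₀ : W →ₗ[𝕜] H) ⊓ LinearMap.ker (B₁ : W →ₗ[𝕜] H) ≤
      contractionSubspace B₀ B₁ Φ := by
  rintro w ⟨hw₀, hw₁⟩
  simp_all [mem_contractionSubspace]

theorem admissibleBd_contractionSubspace {Φ : H →ₗ[𝕜] H}
    (hΦ : ∀ w : W, ‖Φ (B₀ w)‖ ≤ ‖B₀ w‖) (hR : R ≤ contractionSubspace B₀ B₁ Φ) :
    AdmissibleBd B₀ B₁ R (contractionSubspace B₀ B₁ Φ) :=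
  ⟨hR, fun w hw ↦ mem_contractionSubspace.mp hw ▸ hΦ w⟩

theorem AdmissibleBd.isContractiveGraph_map (hZ : AdmissibleBd B₀ B₁ R Z) :
    (Z.map (B₀.prod B₁ : W →ₗ[𝕜] H × H)).IsContractiveGraph := by
  rintro _ ⟨z, hz, rfl⟩
  exact hZ.2 z hz

theorem AdmissibleBd.le_contractionSubspace {Φ : H →ₗ[𝕜] H}
    (hker : LinearMap.ker (B₀ : W →ₗ[𝕜] H) ⊔ LinearMap.ker (B₁ : W →ₗ[𝕜] H) = ⊤)
    (hΦ : ∀ w : W, Φ (B₀ w) ∈ LinearMap.range (B₁ : W →ₗ[𝕜] H))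
    (hZ : AdmissibleBd B₀ B₁ R Z) (hle : contractionSubspace B₀ B₁ Φ ≤ Z) :
    Z ≤ contractionSubspace B₀ B₁ Φ := by
  intro w hw
  have hpair : (B₀ w, Φ (B₀ w)) ∈ LinearMap.range ((B₀ : W →ₗ[𝕜] H).prod B₁) := by
    rw [LinearMap.range_prod_eq hker]
    exact ⟨LinearMap.mem_range_self _ w, hΦ w⟩
  obtain ⟨z, hz⟩ := hpair
  have h₀ : B₀ z = B₀ w := congrArg Prod.fst hz
  have h₁ : B₁ z = Φ (B₀ w) := congrArg Prod.snd hz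
  have hzZ : z ∈ Z := hle (mem_contractionSubspace.mpr (by rw [h₀, h₁]))
  have hw₁ : B₁ w = B₁ z :=
    hZ.isContractiveGraph_map.snd_eq_of_fst_eq ⟨w, hw, rfl⟩ ⟨z, hzZ, rfl⟩ h₀.symm
  exact mem_contractionSubspace.mpr (hw₁.trans h₁)

end Boundary

theorem AdmissibleBd.exists_contraction {𝕜 W H : Type*} [RCLike 𝕜]
    [NormedAddCommGroup W] [NormedSpace 𝕜 W]
    [NormedAddCommGroup H] [InnerProductSpace 𝕜 H] [CompleteSpace H]
    {B₀ B₁ : W →L[𝕜] H} {R Z : Submodule 𝕜 W}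
    (hr₁ : IsClosed (LinearMap.range (B₁ : W →ₗ[𝕜] H) : Set H)) (hZ : AdmissibleBd B₀ B₁ R Z) :
    ∃ Φ : H →ₗ[𝕜] H, (∀ x, ‖Φ x‖ ≤ ‖x‖) ∧
      (∀ x, Φ x ∈ LinearMap.range (B₁ : W →ₗ[𝕜] H)) ∧ Z ≤ contractionSubspace B₀ B₁ Φ := by
  obtain ⟨Φ, hΦ, hΦran, hΦZ⟩ := hZ.isContractiveGraph_map.exists_contraction_extension
  refine ⟨Φ, hΦ, fun x ↦ ?_, fun z hz ↦ ?_⟩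
  · refine closure_minimal ?_ hr₁ (hΦran x)
    rintro _ ⟨_, ⟨w, -, rfl⟩, rfl⟩
    exact LinearMap.mem_range_self _ w
  · exact mem_contractionSubspace.mpr (hΦZ (B₀ z, B₁ z) ⟨z, hz, rfl⟩).symm

theorem stmt16_general {𝕜 W H : Type*} [RCLike 𝕜]
    [NormedAddCommGroup W] [InnerProductSpace 𝕜 W]
    [NormedAddCommGroup H] [InnerProductSpace 𝕜 H] [CompleteSpace H]
    (B₀ B₁ : W →L[𝕜] H) (R : Submodule 𝕜 W)
    (hR : R ≤ LinearMap.ker (B₀ : W →ₗ[𝕜] H) ⊓ LinearMap.ker (B₁ : W →ₗ[𝕜] H))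
    (hker : LinearMap.ker (B₀ : W →ₗ[𝕜] H) ⊔ LinearMap.ker (B₁ : W →ₗ[𝕜] H) = ⊤)
    (hr₁ : IsClosed (LinearMap.range (B₁ : W →ₗ[𝕜] H) : Set H)) :
    (∀ Φ : H →ₗ[𝕜] H, (∀ w : W, ‖Φ (B₀ w)‖ ≤ ‖B₀ w‖) →
      (∀ w : W, Φ (B₀ w) ∈ LinearMap.range (B₁ : W →ₗ[𝕜] H)) →
      ∀ Z : Submodule 𝕜 W, (Z : Set W) = {w : W | B₁ w = Φ (B₀ w)} →
        (AdmissibleBd B₀ B₁ R Z ∧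
          ∀ Z' : Submodule 𝕜 W, AdmissibleBd B₀ B₁ R Z' → Z ≤ Z' → Z' = Z)) ∧
    (∀ Z : Submodule 𝕜 W, AdmissibleBd B₀ B₁ R Z →
      (∀ Z' : Submodule 𝕜 W, AdmissibleBd B₀ B₁ R Z' → Z ≤ Z' → Z' = Z) →
      ∃ Φ : H →ₗ[𝕜] H, (∀ w : W, ‖Φ (B₀ w)‖ ≤ ‖B₀ w‖) ∧
        (∀ w : W, Φ (B₀ w) ∈ LinearMap.range (B₁ : W →ₗ[𝕜] H)) ∧
        (Z : Set W) = {w : W | B₁ w = Φ (B₀ w)}) := by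
  refine ⟨fun Φ hΦ hΦran Z hZ ↦ ?_, fun Z hZ hmax ↦ ?_⟩
  · obtain rfl : Z = contractionSubspace B₀ B₁ Φ :=
      SetLike.coe_injective (hZ.trans (coe_contractionSubspace Φ).symm)
    refine ⟨admissibleBd_contractionSubspace hΦ
      (hR.trans (ker_inf_ker_le_contractionSubspace Φ)), fun Z' hZ' hle ↦ ?_⟩
    exact le_antisymm (hZ'.le_contractionSubspace hker hΦran hle) hle
  · obtain ⟨Φ, hΦ, hΦran, hle⟩ := hZ.exists_contraction hr₁
    have hadm := admissibleBd_contractionSubspace (fun w ↦ hΦ (B₀ w)) (hZ.1.trans hle)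
    refine ⟨Φ, fun w ↦ hΦ (B₀ w), fun w ↦ hΦran (B₀ w), ?_⟩
    rw [← hmax _ hadm hle, coe_contractionSubspace]

/-- Theorem 4.8: in the boundary-operator setting, for every linear
contraction `Φ : Ran B₀ → Ran B₁` the subspace
`Z_Φ = {w ∈ W : B₁w = Φ B₀w}` is maximal admissible; conversely every
maximal admissible subspace of `W` is of this form. -/
theorem stmt16 {𝕜 W H : Type*} [RCLike 𝕜]
    [NormedAddCommGroup W] [InnerProductSpace 𝕜 W] [CompleteSpace W]
    [NormedAddCommGroup H] [InnerProductSpace 𝕜 H] [CompleteSpace H]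
    (B₀ B₁ : W →L[𝕜] H) (R : Submodule 𝕜 W)
    (hR : R ≤ LinearMap.ker (B₀ : W →ₗ[𝕜] H) ⊓ LinearMap.ker (B₁ : W →ₗ[𝕜] H))
    (hker : LinearMap.ker (B₀ : W →ₗ[𝕜] H) ⊔ LinearMap.ker (B₁ : W →ₗ[𝕜] H) = ⊤)
    (hr₀ : IsClosed (LinearMap.range (B₀ : W →ₗ[𝕜] H) : Set H))
    (hr₁ : IsClosed (LinearMap.range (B₁ : W →ₗ[𝕜] H) : Set H)) :
    (∀ Φ : H →ₗ[𝕜] H, (∀ w : W, ‖Φ (B₀ w)‖ ≤ ‖B₀ w‖) →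
      (∀ w : W, Φ (B₀ w) ∈ LinearMap.range (B₁ : W →ₗ[𝕜] H)) →
      ∀ Z : Submodule 𝕜 W, (Z : Set W) = {w : W | B₁ w = Φ (B₀ w)} →
        (AdmissibleBd B₀ B₁ R Z ∧
          ∀ Z' : Submodule 𝕜 W, AdmissibleBd B₀ B₁ R Z' → Z ≤ Z' → Z' = Z)) ∧
    (∀ Z : Submodule 𝕜 W, AdmissibleBd B₀ B₁ R Z →
      (∀ Z' : Submodule 𝕜 W, AdmissibleBd B₀ B₁ R Z' → Z ≤ Z' → Z' = Z) →
      ∃ Φ : H →ₗ[𝕜] H, (∀ w : W, ‖Φ (B₀ w)‖ ≤ ‖B₀ w‖) ∧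
        (∀ w : W, Φ (B₀ w) ∈ LinearMap.range (B₁ : W →ₗ[𝕜] H)) ∧
        (Z : Set W) = {w : W | B₁ w = Φ (B₀ w)}) :=
  stmt16_general B₀ B₁ R hR hker hr₁
end

section
/- Let Φ : Ran B₀ → Ran B₁ be a linear contraction. Then the b-orthogonal of Z_Φ is Z_{Φ*}, i.e. {u ∈ W : b(u,z) = 0 for all z ∈ Z_Φ} = { w ∈ W : B₀w = Φ* B₁w }; consequently Z_Φ^{bb} = Z_Φ for every maximal admissible subspace Z_Φ, and distinct contractions Φ ≠ Ψ give Z_Φ ≠ Z_Ψ. -/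
/-! Since `ker B₀ + ker B₁ = W`, the pair `(B₀, B₁)` maps `W` onto `Ran B₀ × Ran B₁`, so `Z_Φ`
contains an element `z` with any prescribed value of `B₀ z`. For `z ∈ Z_Φ` the adjoint relation
turns `b(z, u)` into `⟨B₀ z, Φ* B₁ u - B₀ u⟩`; hence `u ∈ Z_Φ^b` exactly when `Φ* B₁ u - B₀ u`,
a vector of `Ran B₀`, is orthogonal to `Ran B₀`, i.e. vanishes. Exchanging the roles of `B₀, Φ`
and `B₁, Φ*` gives `Z_{Φ*}^b = Z_Φ`, and `Φ` is read off `Z_Φ` on `Ran B₀`. -/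

open scoped InnerProductSpace

namespace LinearMap

theorem exists_apply_eq_and_apply_eq_of_ker_sup_ker_eq_top {R M M₂ M₃ : Type*} [Ring R]
    [AddCommGroup M] [AddCommGroup M₂] [AddCommGroup M₃] [Module R M] [Module R M₂] [Module R M₃]
    {f : M →ₗ[R] M₂} {g : M →ₗ[R] M₃} (h : ker f ⊔ ker g = ⊤) (v w : M) :
    ∃ z, f z = f v ∧ g z = g w := by
  have hmem : (f v, g w) ∈ range (f.prod g) := by
    rw [range_prod_eq h]
    exact ⟨mem_range_self f v, mem_range_self g w⟩
  obtain ⟨z, hz⟩ := hmem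
  exact ⟨z, congrArg Prod.fst hz, congrArg Prod.snd hz⟩

section BoundaryForm

variable {𝕜 W H : Type*} [RCLike 𝕜] [AddCommGroup W] [Module 𝕜 W]
  [NormedAddCommGroup H] [InnerProductSpace 𝕜 H] {A C : W →ₗ[𝕜] H} {F G : H →ₗ[𝕜] H}

theorem inner_apply_comp_eq_inner_comp_apply_symm
    (hadj : ∀ v w, ⟪F (A v), C w⟫_𝕜 = ⟪A v, G (C w)⟫_𝕜) (v w : W) :
    ⟪G (C v), A w⟫_𝕜 = ⟪C v, F (A w)⟫_𝕜 := by
  rw [← inner_conj_symm, ← hadj, inner_conj_symm]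

theorem forall_inner_eq_inner_iff_of_ker_sup_ker_eq_top (hker : ker A ⊔ ker C = ⊤)
    (hF : ∀ w, F (A w) ∈ range C) (hG : ∀ w, G (C w) ∈ range A)
    (hadj : ∀ v w, ⟪F (A v), C w⟫_𝕜 = ⟪A v, G (C w)⟫_𝕜) (u : W) :
    (∀ z, C z = F (A z) → ⟪C z, C u⟫_𝕜 = ⟪A z, A u⟫_𝕜) ↔ A u = G (C u) := by
  refine ⟨fun h => ?_, fun hu z hz => by rw [hz, hadj, hu]⟩
  have hortho : ∀ v, ⟪A v, A u - G (C u)⟫_𝕜 = 0 := by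
    intro v
    obtain ⟨w, hw⟩ := hF v
    obtain ⟨z, hz₀, hz₁⟩ := exists_apply_eq_and_apply_eq_of_ker_sup_ker_eq_top hker v w
    have hz : C z = F (A z) := by rw [hz₁, hw, hz₀]
    have hb := h z hz
    rw [hz, hadj, hz₀] at hb
    rw [inner_sub_right, hb, sub_self]
  obtain ⟨u₀, hu₀⟩ := hG u
  have hdiff : A u - G (C u) = A (u - u₀) := by rw [map_sub, hu₀]
  have hself := hortho (u - u₀)
  rw [← hdiff, inner_self_eq_zero] at hself
  exact sub_eq_zero.mp hself

theorem apply_eq_apply_of_setOf_eq (hker : ker A ⊔ ker C = ⊤) (hF : ∀ w, F (A w) ∈ range C)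
    {F' : H →ₗ[𝕜] H} (hZ : {w | C w = F (A w)} = {w | C w = F' (A w)}) (w : W) :
    F (A w) = F' (A w) := by
  obtain ⟨w', hw'⟩ := hF w
  obtain ⟨z, hz₀, hz₁⟩ := exists_apply_eq_and_apply_eq_of_ker_sup_ker_eq_top hker w w'
  have hz : C z = F (A z) := by rw [hz₁, hw', hz₀]
  have hz' : z ∈ {w | C w = F' (A w)} := hZ ▸ hz
  rw [← hz₀, ← hz, hz']

end BoundaryForm

end LinearMap

open LinearMap in
theorem stmt17_general {𝕜 W H : Type*} [RCLike 𝕜]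
    [NormedAddCommGroup W] [InnerProductSpace 𝕜 W]
    [NormedAddCommGroup H] [InnerProductSpace 𝕜 H]
    (B₀ B₁ : W →L[𝕜] H)
    (hker : LinearMap.ker (B₀ : W →ₗ[𝕜] H) ⊔ LinearMap.ker (B₁ : W →ₗ[𝕜] H) = ⊤)
    (Φ Ψ : H →ₗ[𝕜] H)
    (hΦrange : ∀ w : W, Φ (B₀ w) ∈ LinearMap.range (B₁ : W →ₗ[𝕜] H))
    (hΨrange : ∀ w : W, Ψ (B₁ w) ∈ LinearMap.range (B₀ : W →ₗ[𝕜] H))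
    (hadj : ∀ v w : W, (inner 𝕜 (Φ (B₀ v)) (B₁ w) : 𝕜) = inner 𝕜 (B₀ v) (Ψ (B₁ w))) :
    ({u : W | ∀ z : W, B₁ z = Φ (B₀ z) →
        (inner 𝕜 (B₁ z) (B₁ u) : 𝕜) - inner 𝕜 (B₀ z) (B₀ u) = 0} =
      {w : W | B₀ w = Ψ (B₁ w)}) ∧
    ({u : W | ∀ z : W, B₀ z = Ψ (B₁ z) →
        (inner 𝕜 (B₁ z) (B₁ u) : 𝕜) - inner 𝕜 (B₀ z) (B₀ u) = 0} =
      {w : W | B₁ w = Φ (B₀ w)}) ∧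
    (∀ Φ' : H →ₗ[𝕜] H, (∀ w : W, ‖Φ' (B₀ w)‖ ≤ ‖B₀ w‖) →
      (∀ w : W, Φ' (B₀ w) ∈ LinearMap.range (B₁ : W →ₗ[𝕜] H)) →
      ({w : W | B₁ w = Φ (B₀ w)} = {w : W | B₁ w = Φ' (B₀ w)}) →
      ∀ w : W, Φ (B₀ w) = Φ' (B₀ w)) := by
  have hker' : ker (B₁ : W →ₗ[𝕜] H) ⊔ ker (B₀ : W →ₗ[𝕜] H) = ⊤ := (sup_comm _ _).trans hker
  refine ⟨?_, ?_, fun Φ' _ _ hZ => apply_eq_apply_of_setOf_eq hker hΦrange hZ⟩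
  · ext u
    exact (forall_congr' fun z => imp_congr_right fun _ => sub_eq_zero).trans
      (forall_inner_eq_inner_iff_of_ker_sup_ker_eq_top hker hΦrange hΨrange hadj u)
  · ext u
    exact (forall_congr' fun z => imp_congr_right fun _ => sub_eq_zero.trans eq_comm).trans
      (forall_inner_eq_inner_iff_of_ker_sup_ker_eq_top hker' hΨrange hΦrange
        (inner_apply_comp_eq_inner_comp_apply_symm hadj) u)

/-- Proposition 4.9 (and Lemma on `Z^{bb}`, Corollary 5.15): in the
boundary-operator setting with `b(u,z) = ⟨B₁u,B₁z⟩_H - ⟨B₀u,B₀z⟩_H`, for a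
linear contraction `Φ : Ran B₀ → Ran B₁` with adjoint `Ψ = Φ*`
(characterized by `⟨Φ B₀v, B₁w⟩ = ⟨B₀v, Ψ B₁w⟩`):
(1) the `b`-orthogonal of `Z_Φ = {w : B₁w = Φ B₀w}` is
`Z_{Φ*} = {w : B₀w = Ψ B₁w}`; (2) consequently `Z_Φ^{bb} = Z_Φ`;
(3) distinct contractions give distinct spaces: if `Z_Φ = Z_{Φ'}` then
`Φ = Φ'` on `Ran B₀`. -/
theorem stmt17 {𝕜 W H : Type*} [RCLike 𝕜]
    [NormedAddCommGroup W] [InnerProductSpace 𝕜 W] [CompleteSpace W]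
    [NormedAddCommGroup H] [InnerProductSpace 𝕜 H] [CompleteSpace H]
    (B₀ B₁ : W →L[𝕜] H)
    (hker : LinearMap.ker (B₀ : W →ₗ[𝕜] H) ⊔ LinearMap.ker (B₁ : W →ₗ[𝕜] H) = ⊤)
    (hr₀ : IsClosed (LinearMap.range (B₀ : W →ₗ[𝕜] H) : Set H))
    (hr₁ : IsClosed (LinearMap.range (B₁ : W →ₗ[𝕜] H) : Set H))
    (Φ Ψ : H →ₗ[𝕜] H)
    (hΦcontr : ∀ w : W, ‖Φ (B₀ w)‖ ≤ ‖B₀ w‖)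
    (hΦrange : ∀ w : W, Φ (B₀ w) ∈ LinearMap.range (B₁ : W →ₗ[𝕜] H))
    (hΨrange : ∀ w : W, Ψ (B₁ w) ∈ LinearMap.range (B₀ : W →ₗ[𝕜] H))
    (hadj : ∀ v w : W, (inner 𝕜 (Φ (B₀ v)) (B₁ w) : 𝕜) = inner 𝕜 (B₀ v) (Ψ (B₁ w))) :
    ({u : W | ∀ z : W, B₁ z = Φ (B₀ z) →
        (inner 𝕜 (B₁ z) (B₁ u) : 𝕜) - inner 𝕜 (B₀ z) (B₀ u) = 0} =
      {w : W | B₀ w = Ψ (B₁ w)}) ∧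
    ({u : W | ∀ z : W, B₀ z = Ψ (B₁ z) →
        (inner 𝕜 (B₁ z) (B₁ u) : 𝕜) - inner 𝕜 (B₀ z) (B₀ u) = 0} =
      {w : W | B₁ w = Φ (B₀ w)}) ∧
    (∀ Φ' : H →ₗ[𝕜] H, (∀ w : W, ‖Φ' (B₀ w)‖ ≤ ‖B₀ w‖) →
      (∀ w : W, Φ' (B₀ w) ∈ LinearMap.range (B₁ : W →ₗ[𝕜] H)) →
      ({w : W | B₁ w = Φ (B₀ w)} = {w : W | B₁ w = Φ' (B₀ w)}) →
      ∀ w : W, Φ (B₀ w) = Φ' (B₀ w)) :=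
  stmt17_general B₀ B₁ hker Φ Ψ hΦrange hΨrange hadj
end

section
/- Let Φ : Ran B₀ → Ran B₁ be a linear contraction, 𝒜 ∈ L(V, V') coercive, f ∈ V', and y₀ ∈ Ran B₀. Then there exists a unique u ∈ W such that 𝒟u + 𝒜u = f in V' and B₀u − Φ* B₁u = y₀. -/
/-!
On the homogeneous domain `D = {u ∈ W | B₀ u = Φ* B₁ u}` the boundary form gives
`2 Re ⟨𝒟 u, u⟩ = ‖B₁ u‖² - ‖B₀ u‖² ≥ 0`, because the adjoint of a contraction is again a
contraction; hence `𝒟 + 𝒜` is coercive on `D`, which gives uniqueness. Since the graph of `𝒟`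
is closed and `B₀`, `B₁` are bounded in the graph norm, the graph of `(𝒟 + 𝒜)|_D` is closed, and
coercivity makes its range closed. The range is also dense: through the Riesz isomorphism, an
element `w` annihilating it lies in `W` with `𝒟 w = 𝒜* w` and satisfies the adjoint boundary
condition `B₁ w = Φ B₀ w`, so `α ‖w‖² ≤ Re ⟨𝒜 w, w⟩ = Re ⟨𝒟 w, w⟩ ≤ 0`. Finally the datum `y₀`
is lifted to `W` using `ker B₀ + ker B₁ = W`.
-/

open RCLike Filter Topology Set ComplexConjugate
open scoped InnerProductSpace

section Coercive

variable {𝕜 V : Type*} [RCLike 𝕜] [NormedAddCommGroup V]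

section NormedSpace

variable [NormedSpace 𝕜 V]

theorem exists_antilinear_apply_eq_conj (φ : V →L[𝕜] 𝕜) :
    ∃ g : V →L⋆[𝕜] 𝕜, ∀ x, g x = conj (φ x) :=
  ⟨((starL 𝕜 : 𝕜 ≃L⋆[𝕜] 𝕜) : 𝕜 →L⋆[𝕜] 𝕜).comp φ, fun _ => rfl⟩

theorem norm_le_of_coercive_s18 {α : ℝ} {g : V →L⋆[𝕜] 𝕜} {u : V}
    (hcoer : α * ‖u‖ ^ 2 ≤ re (g u)) : α * ‖u‖ ≤ ‖g‖ := by
  rcases (norm_nonneg u).eq_or_lt with hu | hu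
  · rw [← hu, mul_zero]; exact norm_nonneg g
  refine le_of_mul_le_mul_right ?_ hu
  calc α * ‖u‖ * ‖u‖ = α * ‖u‖ ^ 2 := by ring
    _ ≤ re (g u) := hcoer
    _ ≤ ‖g u‖ := re_le_norm _
    _ ≤ ‖g‖ * ‖u‖ := g.le_opNorm u

theorem eq_zero_of_coercive {α : ℝ} (hα : 0 < α) {g : V →L⋆[𝕜] 𝕜} {u : V}
    (hcoer : α * ‖u‖ ^ 2 ≤ re (g u)) (hg : g = 0) : u = 0 := by
  have := norm_le_of_coercive_s18 hcoer
  rw [hg, norm_zero] at this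
  exact norm_le_zero_iff.1 (nonpos_of_mul_nonpos_right this hα)

theorem isClosed_range_of_coercive {E : Type*} [AddCommGroup E] [Module 𝕜 E] [CompleteSpace V]
    (ι : E →ₗ[𝕜] V) (T : E →ₗ[𝕜] V →L⋆[𝕜] 𝕜) {α : ℝ}
    (hα : 0 < α) (hcoer : ∀ u, α * ‖ι u‖ ^ 2 ≤ re (T u (ι u)))
    (hT : IsClosed (range fun u => (ι u, T u))) : IsClosed (range T) := by
  set G := range fun u => (ι u, T u)
  have : CompleteSpace G := hT.completeSpace_coe
  have hbound : ∀ u, ‖ι u‖ ≤ (α⁻¹ + 1) * ‖T u‖ := fun u =>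
    calc ‖ι u‖ = α⁻¹ * (α * ‖ι u‖) := by field_simp
      _ ≤ α⁻¹ * ‖T u‖ := by gcongr; exact norm_le_of_coercive_s18 (hcoer u)
      _ ≤ (α⁻¹ + 1) * ‖T u‖ := by gcongr; linarith
  have hanti : AntilipschitzWith ⟨α⁻¹ + 1, by positivity⟩ fun p : G => p.1.2 := by
    refine AntilipschitzWith.of_le_mul_dist ?_
    rintro ⟨_, u, rfl⟩ ⟨_, v, rfl⟩
    rw [Subtype.dist_eq, dist_eq_norm, dist_eq_norm, Prod.mk_sub_mk, Prod.norm_mk, ← map_sub,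
      ← map_sub]
    exact max_le (hbound _)
      (le_mul_of_one_le_left (norm_nonneg _) (show (1 : ℝ) ≤ α⁻¹ + 1 by linarith [inv_pos.2 hα]))
  have hrange : range T = range fun p : G => p.1.2 := by
    ext g
    constructor
    · rintro ⟨u, rfl⟩
      exact ⟨⟨_, u, rfl⟩, rfl⟩
    · rintro ⟨⟨_, u, rfl⟩, rfl⟩
      exact ⟨u, rfl⟩
  rw [hrange]
  exact hanti.isClosed_range (uniformContinuous_snd.comp uniformContinuous_subtype_val)

end NormedSpace

variable [InnerProductSpace 𝕜 V] [CompleteSpace V] {E : Type*} [AddCommGroup E] [Module 𝕜 E]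

theorem innerSLFlip_surjective : Function.Surjective (innerSLFlip 𝕜 : V →L[𝕜] V →L⋆[𝕜] 𝕜) := by
  intro g
  refine ⟨(InnerProductSpace.toDual 𝕜 V).symm (((starL 𝕜 : 𝕜 ≃L⋆[𝕜] 𝕜) : 𝕜 →L⋆[𝕜] 𝕜).comp g), ?_⟩
  ext x
  rw [innerSLFlip_apply_apply, ← inner_conj_symm, InnerProductSpace.toDual_symm_apply]
  simp

theorem surjective_of_coercive (ι : E →ₗ[𝕜] V) (T : E →ₗ[𝕜] V →L⋆[𝕜] 𝕜) {α : ℝ}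
    (hα : 0 < α) (hcoer : ∀ u, α * ‖ι u‖ ^ 2 ≤ re (T u (ι u)))
    (hT : IsClosed (range fun u => (ι u, T u))) (hann : ∀ w : V, (∀ u, T u w = 0) → w = 0) :
    Function.Surjective T := by
  set K := (LinearMap.range T).comap (innerSLFlip 𝕜 : V →L[𝕜] V →L⋆[𝕜] 𝕜).toLinearMap
  have hK : IsClosed (K : Set V) :=
    (isClosed_range_of_coercive ι T hα hcoer hT).preimage (innerSLFlip 𝕜).continuous
  have : CompleteSpace K := hK.completeSpace_coe
  have hKtop : K = ⊤ := by
    rw [← Submodule.orthogonal_eq_bot_iff, Submodule.eq_bot_iff]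
    refine fun w hw => hann w fun u => ?_
    obtain ⟨z, hz⟩ := innerSLFlip_surjective (T u)
    have hzK : z ∈ K := ⟨u, hz.symm⟩
    rw [← hz, innerSLFlip_apply_apply, inner_eq_zero_symm]
    exact Submodule.inner_right_of_mem_orthogonal hzK hw
  intro g
  obtain ⟨z, rfl⟩ := innerSLFlip_surjective g
  obtain ⟨u, hu⟩ : z ∈ K := hKtop ▸ Submodule.mem_top
  exact ⟨u, hu⟩

end Coercive

section ClosedGraph

variable {𝕜 E V F G : Type*} [RCLike 𝕜] [AddCommGroup E] [Module 𝕜 E]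
  [NormedAddCommGroup V] [NormedSpace 𝕜 V] [NormedAddCommGroup F] [NormedSpace 𝕜 F]
  [NormedAddCommGroup G] [NormedSpace 𝕜 G]

theorem isClosed_range_ker_of_norm_le (ι : E →ₗ[𝕜] V) (T : E →ₗ[𝕜] F) (L : E →ₗ[𝕜] G)
    (hT : IsClosed (range fun v => (ι v, T v))) {C : ℝ}
    (hL : ∀ v, ‖L v‖ ≤ C * (‖ι v‖ + ‖T v‖)) :
    IsClosed (range fun u : LinearMap.ker L => (ι u, T u)) := by
  refine IsSeqClosed.isClosed fun x p hx hxp => ?_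
  choose u hu using hx
  obtain ⟨v, rfl⟩ : p ∈ range fun v => (ι v, T v) :=
    hT.mem_of_tendsto hxp (Eventually.of_forall fun n => ⟨u n, hu n⟩)
  have hιu : Tendsto (fun n => ‖ι (u n) - ι v‖) atTop (𝓝 0) := by
    rw [← tendsto_iff_norm_sub_tendsto_zero, funext fun n => congrArg Prod.fst (hu n)]
    exact (continuous_fst.tendsto _).comp hxp
  have hTu : Tendsto (fun n => ‖T (u n) - T v‖) atTop (𝓝 0) := by
    rw [← tendsto_iff_norm_sub_tendsto_zero, funext fun n => congrArg Prod.snd (hu n)]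
    exact (continuous_snd.tendsto _).comp hxp
  have hLv : ‖L v‖ ≤ 0 := by
    refine ge_of_tendsto' (by simpa using (hιu.add hTu).const_mul C) fun n => ?_
    calc ‖L v‖ = ‖L (u n - v)‖ := by
          rw [map_sub, LinearMap.mem_ker.1 (u n).2, zero_sub, norm_neg]
      _ ≤ C * (‖ι (u n - v)‖ + ‖T (u n - v)‖) := hL _
      _ = C * (‖ι (u n) - ι v‖ + ‖T (u n) - T v‖) := by simp only [map_sub]
  exact ⟨⟨v, LinearMap.mem_ker.2 (norm_le_zero_iff.1 hLv)⟩, rfl⟩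

theorem IsClosed.range_add_comp {X : Type*} {ι : X → V} {T : X → F} {A : V → F}
    (hT : IsClosed (range fun v => (ι v, T v))) (hA : Continuous A) :
    IsClosed (range fun v => (ι v, T v + A (ι v))) := by
  have : (range fun v => (ι v, T v + A (ι v))) =
      (fun p : V × F => (p.1, p.2 - A p.1)) ⁻¹' range fun v => (ι v, T v) := by
    ext ⟨x, g⟩
    simp only [mem_range, mem_preimage, Prod.mk.injEq]
    constructor
    · rintro ⟨v, rfl, rfl⟩
      exact ⟨v, rfl, (add_sub_cancel_right _ _).symm⟩
    · rintro ⟨v, rfl, hv⟩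
      exact ⟨v, rfl, by rw [hv, sub_add_cancel]⟩
  rw [this]
  exact hT.preimage (continuous_fst.prodMk (continuous_snd.sub (hA.comp continuous_fst)))

end ClosedGraph

section ExtendedDomain

variable {𝕜 V : Type*} [RCLike 𝕜] [NormedAddCommGroup V] [NormedSpace 𝕜 V] {R : Submodule 𝕜 V}
  (D0 : R →ₗ[𝕜] V →L⋆[𝕜] 𝕜)

-- The graph of the paper's extension `𝒟 : W → V'` of `D0`; `extDomain D0` is `W`.
def extGraph : Submodule 𝕜 (V × (V →L⋆[𝕜] 𝕜)) where
  carrier := {p | ∀ r : R, p.2 r + conj (D0 r p.1) = 0}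
  add_mem' {p q} hp hq r := by
    simp only [Prod.fst_add, Prod.snd_add, add_apply, map_add]
    linear_combination hp r + hq r
  zero_mem' r := by simp
  smul_mem' c p hp r := by
    simp only [Prod.smul_fst, Prod.smul_snd, smul_apply, map_smulₛₗ,
      smul_eq_mul, map_mul, conj_conj]
    linear_combination c * hp r

def extDomain : Submodule 𝕜 V where
  carrier := {v | ∃ g, (v, g) ∈ extGraph D0}
  add_mem' := fun ⟨g, hg⟩ ⟨g', hg'⟩ => ⟨g + g', add_mem hg hg'⟩
  zero_mem' := ⟨0, zero_mem _⟩
  smul_mem' c _ := fun ⟨g, hg⟩ => ⟨c • g, Submodule.smul_mem _ c hg⟩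

theorem isClosed_extGraph : IsClosed (extGraph D0 : Set (V × (V →L⋆[𝕜] 𝕜))) := by
  have : (extGraph D0 : Set (V × (V →L⋆[𝕜] 𝕜))) =
      ⋂ r : R, {p | p.2 r + conj (D0 r p.1) = 0} := by
    ext p; simp [extGraph]
  rw [this]
  exact isClosed_iInter fun r =>
    isClosed_eq (((continuous_eval_const (r : V)).comp continuous_snd).add
      (continuous_conj.comp ((D0 r).continuous.comp continuous_fst))) continuous_const

variable {D0}

theorem extGraph_unique (hR : Dense (R : Set V)) {v : V} {g g' : V →L⋆[𝕜] 𝕜}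
    (h : (v, g) ∈ extGraph D0) (h' : (v, g') ∈ extGraph D0) : g = g' := by
  refine ContinuousLinearMap.ext_on (s := R) (by rwa [Submodule.span_eq]) fun x hx => ?_
  linear_combination h ⟨x, hx⟩ - h' ⟨x, hx⟩

theorem mk_mem_extGraph (hder : ∀ u v : R, D0 u v + conj (D0 v u) = 0) (r : R) :
    ((r : V), D0 r) ∈ extGraph D0 :=
  hder r

def extDerivation (hR : Dense (R : Set V)) (DD : V → V →L⋆[𝕜] 𝕜)
    (hDD : ∀ v ∈ extDomain D0, (v, DD v) ∈ extGraph D0) :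
    extDomain D0 →ₗ[𝕜] V →L⋆[𝕜] 𝕜 where
  toFun v := DD v
  map_add' v w := extGraph_unique hR (hDD _ (v + w).2) (add_mem (hDD v v.2) (hDD w w.2))
  map_smul' c v := extGraph_unique hR (hDD _ (c • v).2) (Submodule.smul_mem _ c (hDD v v.2))

theorem isClosed_range_extDerivation (hR : Dense (R : Set V))
    {𝒟 : extDomain D0 →ₗ[𝕜] V →L⋆[𝕜] 𝕜} (h𝒟 : ∀ v : extDomain D0, ((v : V), 𝒟 v) ∈ extGraph D0) :
    IsClosed (range fun v : extDomain D0 => ((v : V), 𝒟 v)) := by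
  convert isClosed_extGraph D0
  refine Subset.antisymm (range_subset_iff.2 h𝒟) fun p hp => ?_
  exact ⟨⟨p.1, p.2, hp⟩, Prod.ext rfl (extGraph_unique hR (h𝒟 _) hp)⟩

end ExtendedDomain

section Boundary

variable {𝕜 H : Type*} [RCLike 𝕜] [NormedAddCommGroup H] [InnerProductSpace 𝕜 H]

theorem norm_apply_le_of_inner_apply_eq {X Y : Type*} {B₀ : X → H} {B₁ : Y → H} {Φ Ψ : H → H}
    (hΦ : ∀ x, ‖Φ (B₀ x)‖ ≤ ‖B₀ x‖) (hΨ : ∀ y, ∃ x, Ψ (B₁ y) = B₀ x)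
    (hadj : ∀ x y, ⟪Φ (B₀ x), B₁ y⟫_𝕜 = ⟪B₀ x, Ψ (B₁ y)⟫_𝕜) (y : Y) :
    ‖Ψ (B₁ y)‖ ≤ ‖B₁ y‖ := by
  obtain ⟨x, hx⟩ := hΨ y
  have : ‖Ψ (B₁ y)‖ ^ 2 ≤ ‖Ψ (B₁ y)‖ * ‖B₁ y‖ :=
    calc ‖Ψ (B₁ y)‖ ^ 2 = re ⟪B₀ x, Ψ (B₁ y)⟫_𝕜 := by rw [← hx, inner_self_eq_norm_sq]
      _ = re ⟪Φ (B₀ x), B₁ y⟫_𝕜 := by rw [hadj]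
      _ ≤ ‖Φ (B₀ x)‖ * ‖B₁ y‖ := re_inner_le_norm _ _
      _ ≤ ‖Ψ (B₁ y)‖ * ‖B₁ y‖ := by rw [hx]; gcongr; exact hΦ x
  nlinarith [norm_nonneg (Ψ (B₁ y)), norm_nonneg (B₁ y)]

theorem LinearMap.exists_apply_eq_and_apply_eq {R M N₀ N₁ : Type*} [Ring R] [AddCommGroup M]
    [Module R M] [AddCommGroup N₀] [Module R N₀] [AddCommGroup N₁] [Module R N₁]
    {B₀ : M →ₗ[R] N₀} {B₁ : M →ₗ[R] N₁} (h : ker B₀ ⊔ ker B₁ = ⊤) (v w : M) :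
    ∃ u, B₀ u = B₀ v ∧ B₁ u = B₁ w := by
  obtain ⟨a, ha, b, hb, hab⟩ :=
    Submodule.mem_sup.1 (h ▸ Submodule.mem_top : v - w ∈ ker B₀ ⊔ ker B₁)
  refine ⟨w + b, ?_, by rw [map_add, mem_ker.1 hb, add_zero]⟩
  have := congrArg B₀ hab
  rw [map_add, map_sub, mem_ker.1 ha, zero_add] at this
  rw [map_add, this, add_sub_cancel]

variable {M : Type*} [AddCommGroup M] [Module 𝕜 M] {B₀ B₁ : M →ₗ[𝕜] H} {Φ Ψ : H →ₗ[𝕜] H}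

theorem apply_eq_of_forall_inner_eq (hker : LinearMap.ker B₀ ⊔ LinearMap.ker B₁ = ⊤)
    (hΦ : ∀ v, ∃ w, Φ (B₀ v) = B₁ w) (hΨ : ∀ v, ∃ w, Ψ (B₁ v) = B₀ w)
    (hadj : ∀ v w, ⟪Φ (B₀ v), B₁ w⟫_𝕜 = ⟪B₀ v, Ψ (B₁ w)⟫_𝕜) {w : M}
    (hw : ∀ u ∈ LinearMap.ker (B₀ - Ψ ∘ₗ B₁), ⟪B₁ w, B₁ u⟫_𝕜 = ⟪B₀ w, B₀ u⟫_𝕜) :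
    B₁ w = Φ (B₀ w) := by
  have horth : ∀ v, ⟪B₁ w - Φ (B₀ w), B₁ v⟫_𝕜 = 0 := fun v => by
    obtain ⟨v', hv'⟩ := hΨ v
    obtain ⟨u, hu₀, hu₁⟩ := LinearMap.exists_apply_eq_and_apply_eq hker v' v
    have hu : u ∈ LinearMap.ker (B₀ - Ψ ∘ₗ B₁) := by
      simp [hu₀, hu₁, hv']
    rw [inner_sub_left, ← hu₁, hw u hu, hu₀, ← hv', hu₁, hadj, sub_self]
  obtain ⟨w', hw'⟩ := hΦ w
  rw [← sub_eq_zero, ← inner_self_eq_zero (𝕜 := 𝕜)]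
  nth_rw 2 [hw']
  rw [← map_sub]
  exact horth _

end Boundary

def Submodule.linearMapOfAddSMul {𝕜 V H : Type*} [Semiring 𝕜] [AddCommMonoid V] [Module 𝕜 V]
    [AddCommMonoid H] [Module 𝕜 H] (W : Submodule 𝕜 V) (B : V → H)
    (hB : ∀ v ∈ W, ∀ w ∈ W, ∀ c : 𝕜, B (v + w) = B v + B w ∧ B (c • v) = c • B v) :
    W →ₗ[𝕜] H where
  toFun v := B v
  map_add' v w := (hB v v.2 w w.2 0).1
  map_smul' c v := (hB v v.2 v v.2 c).2

section BoundaryProblem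

variable {𝕜 V H : Type*} [RCLike 𝕜] [NormedAddCommGroup V] [InnerProductSpace 𝕜 V]
  [NormedAddCommGroup H] [InnerProductSpace 𝕜 H]

theorem two_mul_re_apply_self {W : Submodule 𝕜 V} {𝒟 : W →ₗ[𝕜] V →L⋆[𝕜] 𝕜} {B₀ B₁ : W →ₗ[𝕜] H}
    (hfact : ∀ v w : W, 𝒟 v w + conj (𝒟 w v) = ⟪B₁ w, B₁ v⟫_𝕜 - ⟪B₀ w, B₀ v⟫_𝕜) (v : W) :
    2 * re (𝒟 v v) = ‖B₁ v‖ ^ 2 - ‖B₀ v‖ ^ 2 := by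
  simpa [inner_self_eq_norm_sq, two_mul] using congrArg re (hfact v v)

theorem re_apply_self_nonneg_of_mem_ker {W : Submodule 𝕜 V} {𝒟 : W →ₗ[𝕜] V →L⋆[𝕜] 𝕜}
    {B₀ B₁ : W →ₗ[𝕜] H}
    (hfact : ∀ v w : W, 𝒟 v w + conj (𝒟 w v) = ⟪B₁ w, B₁ v⟫_𝕜 - ⟪B₀ w, B₀ v⟫_𝕜) {Ψ : H →ₗ[𝕜] H}
    (hΨ : ∀ v, ‖Ψ (B₁ v)‖ ≤ ‖B₁ v‖) {u : W} (hu : u ∈ LinearMap.ker (B₀ - Ψ ∘ₗ B₁)) :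
    0 ≤ re (𝒟 u u) := by
  have h := two_mul_re_apply_self hfact u
  have hB : ‖B₀ u‖ ≤ ‖B₁ u‖ := by
    rw [sub_eq_zero.1 (LinearMap.mem_ker.1 hu)]
    exact hΨ u
  nlinarith [norm_nonneg (B₀ u)]

variable {R : Submodule 𝕜 V} {D0 : R →ₗ[𝕜] V →L⋆[𝕜] 𝕜}

theorem exists_conj_apply_eq_of_forall_apply_eq_zero (hR : Dense (R : Set V))
    (hder : ∀ u v : R, D0 u v + conj (D0 v u) = 0) {𝒟 : extDomain D0 →ₗ[𝕜] V →L⋆[𝕜] 𝕜}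
    (h𝒟 : ∀ v : extDomain D0, ((v : V), 𝒟 v) ∈ extGraph D0) {D : Submodule 𝕜 (extDomain D0)}
    (hRD : ∀ v : extDomain D0, (v : V) ∈ R → v ∈ D) (𝒜 : V →L[𝕜] V →L⋆[𝕜] 𝕜) {w : V}
    (hw : ∀ u ∈ D, 𝒟 u w + 𝒜 u w = 0) :
    ∃ w' : extDomain D0, (w' : V) = w ∧ ∀ u : extDomain D0, conj (𝒟 w' u) = 𝒜 u w := by
  have hRw : ∀ r : R, 𝒜 r w + D0 r w = 0 := fun r => by
    let v : extDomain D0 := ⟨r, D0 r, mk_mem_extGraph hder r⟩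
    rw [← extGraph_unique hR (h𝒟 v) (mk_mem_extGraph hder r), add_comm]
    exact hw v (hRD v r.2)
  obtain ⟨g, hg⟩ := exists_antilinear_apply_eq_conj (𝒜.flip w)
  have hgw : (w, g) ∈ extGraph D0 := fun r => by
    change g r + conj (D0 r w) = 0
    rw [hg, ContinuousLinearMap.flip_apply, ← map_add, hRw, map_zero]
  refine ⟨⟨w, g, hgw⟩, rfl, fun u => ?_⟩
  rw [extGraph_unique hR (h𝒟 _) hgw, hg, conj_conj, ContinuousLinearMap.flip_apply]

variable {𝒟 : extDomain D0 →ₗ[𝕜] V →L⋆[𝕜] 𝕜} {B₀ B₁ : extDomain D0 →ₗ[𝕜] H} {Φ Ψ : H →ₗ[𝕜] H}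

theorem isClosed_range_ker_sub_comp (hR : Dense (R : Set V))
    (h𝒟 : ∀ v : extDomain D0, ((v : V), 𝒟 v) ∈ extGraph D0)
    (hB₀ : ∃ C, ∀ v, ‖B₀ v‖ ≤ C * (‖(v : V)‖ + ‖𝒟 v‖))
    (hB₁ : ∃ C, ∀ v, ‖B₁ v‖ ≤ C * (‖(v : V)‖ + ‖𝒟 v‖)) (hΨ : ∀ v, ‖Ψ (B₁ v)‖ ≤ ‖B₁ v‖)
    (𝒜 : V →L[𝕜] V →L⋆[𝕜] 𝕜) :
    IsClosed (range fun u : LinearMap.ker (B₀ - Ψ ∘ₗ B₁) => ((u : V), 𝒟 u + 𝒜 u)) := by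
  obtain ⟨C₀, hC₀⟩ := hB₀
  obtain ⟨C₁, hC₁⟩ := hB₁
  refine IsClosed.range_add_comp (A := 𝒜) ?_ 𝒜.continuous
  refine isClosed_range_ker_of_norm_le (extDomain D0).subtype 𝒟 _
    (isClosed_range_extDerivation hR h𝒟) (C := C₀ + C₁) fun v => ?_
  calc ‖B₀ v - Ψ (B₁ v)‖ ≤ ‖B₀ v‖ + ‖B₁ v‖ := (norm_sub_le _ _).trans (by gcongr; exact hΨ v)
    _ ≤ (C₀ + C₁) * (‖(v : V)‖ + ‖𝒟 v‖) := by linarith [hC₀ v, hC₁ v]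

theorem eq_zero_of_forall_apply_eq_zero (hR : Dense (R : Set V))
    (hder : ∀ u v : R, D0 u v + conj (D0 v u) = 0)
    (h𝒟 : ∀ v : extDomain D0, ((v : V), 𝒟 v) ∈ extGraph D0)
    (hBR : ∀ v : extDomain D0, (v : V) ∈ R → B₀ v = 0 ∧ B₁ v = 0)
    (hfact : ∀ v w : extDomain D0, 𝒟 v w + conj (𝒟 w v) = ⟪B₁ w, B₁ v⟫_𝕜 - ⟪B₀ w, B₀ v⟫_𝕜)
    (hker : LinearMap.ker B₀ ⊔ LinearMap.ker B₁ = ⊤) (hΦ : ∀ v, ‖Φ (B₀ v)‖ ≤ ‖B₀ v‖)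
    (hΦrange : ∀ v, ∃ w, Φ (B₀ v) = B₁ w) (hΨrange : ∀ v, ∃ w, Ψ (B₁ v) = B₀ w)
    (hadj : ∀ v w, ⟪Φ (B₀ v), B₁ w⟫_𝕜 = ⟪B₀ v, Ψ (B₁ w)⟫_𝕜) {𝒜 : V →L[𝕜] V →L⋆[𝕜] 𝕜}
    {α : ℝ} (hα : 0 < α) (hcoer : ∀ u, α * ‖u‖ ^ 2 ≤ re (𝒜 u u)) {w : V}
    (hw : ∀ u ∈ LinearMap.ker (B₀ - Ψ ∘ₗ B₁), 𝒟 u w + 𝒜 u w = 0) : w = 0 := by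
  obtain ⟨w, rfl, hw𝒜⟩ := exists_conj_apply_eq_of_forall_apply_eq_zero hR hder h𝒟
    (fun v hv => by simp [(hBR v hv).1, (hBR v hv).2]) 𝒜 hw
  have hbdry : ∀ u ∈ LinearMap.ker (B₀ - Ψ ∘ₗ B₁), ⟪B₁ w, B₁ u⟫_𝕜 = ⟪B₀ w, B₀ u⟫_𝕜 :=
    fun u hu => sub_eq_zero.1 <| by rw [← hfact u w, hw𝒜, hw u hu]
  have hB₁w := apply_eq_of_forall_inner_eq hker hΦrange hΨrange hadj hbdry
  have hre : re (𝒜 w w) ≤ 0 := by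
    have h := two_mul_re_apply_self hfact w
    rw [← hw𝒜, conj_re]
    rw [hB₁w] at h
    nlinarith [hΦ w, norm_nonneg (Φ (B₀ w))]
  by_contra hne
  exact (mul_pos hα (pow_pos (norm_pos_iff.2 hne) 2)).not_ge ((hcoer w).trans hre)

theorem existsUnique_extDerivation_add_eq [CompleteSpace V] (hR : Dense (R : Set V))
    (hder : ∀ u v : R, D0 u v + conj (D0 v u) = 0)
    (h𝒟 : ∀ v : extDomain D0, ((v : V), 𝒟 v) ∈ extGraph D0)
    (hB₀ : ∃ C, ∀ v, ‖B₀ v‖ ≤ C * (‖(v : V)‖ + ‖𝒟 v‖))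
    (hB₁ : ∃ C, ∀ v, ‖B₁ v‖ ≤ C * (‖(v : V)‖ + ‖𝒟 v‖))
    (hBR : ∀ v : extDomain D0, (v : V) ∈ R → B₀ v = 0 ∧ B₁ v = 0)
    (hfact : ∀ v w : extDomain D0, 𝒟 v w + conj (𝒟 w v) = ⟪B₁ w, B₁ v⟫_𝕜 - ⟪B₀ w, B₀ v⟫_𝕜)
    (hker : LinearMap.ker B₀ ⊔ LinearMap.ker B₁ = ⊤) (hΦ : ∀ v, ‖Φ (B₀ v)‖ ≤ ‖B₀ v‖)
    (hΦrange : ∀ v, ∃ w, Φ (B₀ v) = B₁ w) (hΨrange : ∀ v, ∃ w, Ψ (B₁ v) = B₀ w)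
    (hadj : ∀ v w, ⟪Φ (B₀ v), B₁ w⟫_𝕜 = ⟪B₀ v, Ψ (B₁ w)⟫_𝕜) {𝒜 : V →L[𝕜] V →L⋆[𝕜] 𝕜}
    {α : ℝ} (hα : 0 < α) (hcoer : ∀ u, α * ‖u‖ ^ 2 ≤ re (𝒜 u u)) (f : V →L⋆[𝕜] 𝕜) {y₀ : H}
    (hy₀ : y₀ ∈ LinearMap.range B₀) :
    ∃! u : extDomain D0, 𝒟 u + 𝒜 u = f ∧ B₀ u - Ψ (B₁ u) = y₀ := by
  have hΨ := norm_apply_le_of_inner_apply_eq hΦ hΨrange hadj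
  set K := LinearMap.ker (B₀ - Ψ ∘ₗ B₁)
  set T := (𝒟 + 𝒜.toLinearMap ∘ₗ (extDomain D0).subtype) ∘ₗ K.subtype
  have hTcoer : ∀ u : K, α * ‖(u : V)‖ ^ 2 ≤ re (T u u) := fun u => by
    have := re_apply_self_nonneg_of_mem_ker hfact hΨ u.2
    change α * _ ≤ re (𝒟 u u + 𝒜 u u)
    rw [map_add]
    linarith [hcoer u]
  have hT : Function.Surjective T := surjective_of_coercive
    ((extDomain D0).subtype ∘ₗ K.subtype) T hα hTcoer
    (isClosed_range_ker_sub_comp hR h𝒟 hB₀ hB₁ hΨ 𝒜)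
    fun w hw => eq_zero_of_forall_apply_eq_zero hR hder h𝒟 hBR hfact hker hΦ hΦrange hΨrange
      hadj hα hcoer fun u hu => hw ⟨u, hu⟩
  obtain ⟨v, rfl⟩ := hy₀
  obtain ⟨w, hw₀, hw₁⟩ := LinearMap.exists_apply_eq_and_apply_eq hker v 0
  obtain ⟨d, hd⟩ := hT (f - (𝒟 w + 𝒜 w))
  set u₀ : extDomain D0 := d + w
  have hu₀ : 𝒟 u₀ + 𝒜 u₀ = f ∧ B₀ u₀ - Ψ (B₁ u₀) = B₀ v := by
    constructor
    · have hd' : 𝒟 d + 𝒜 d = f - (𝒟 w + 𝒜 w) := hd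
      calc 𝒟 u₀ + 𝒜 u₀ = (𝒟 d + 𝒜 d) + (𝒟 w + 𝒜 w) := by
            simp only [u₀, map_add, Submodule.coe_add]; abel
        _ = f := by rw [hd', sub_add_cancel]
    · have hdK : B₀ d - Ψ (B₁ d) = 0 := LinearMap.mem_ker.1 d.2
      simp only [u₀, map_add, hw₀, hw₁, map_zero, add_zero]
      rw [add_sub_right_comm, hdK, zero_add]
  refine ⟨u₀, hu₀, fun u hu => ?_⟩
  have he : u - u₀ ∈ K :=
    LinearMap.mem_ker.2 (by rw [map_sub]; exact sub_eq_zero.2 (hu.2.trans hu₀.2.symm))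
  have hTe : T ⟨u - u₀, he⟩ = 0 :=
    calc 𝒟 (u - u₀) + 𝒜 ↑(u - u₀) = (𝒟 u + 𝒜 u) - (𝒟 u₀ + 𝒜 u₀) := by
          simp only [map_sub, Submodule.coe_sub]; abel
      _ = 0 := by rw [hu.1, hu₀.1, sub_self]
  exact sub_eq_zero.1 (Subtype.ext (eq_zero_of_coercive hα (hTcoer ⟨_, he⟩) hTe))

end BoundaryProblem

theorem stmt18_general {𝕜 V H : Type*} [RCLike 𝕜]
    [NormedAddCommGroup V] [InnerProductSpace 𝕜 V] [CompleteSpace V]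
    [NormedAddCommGroup H] [InnerProductSpace 𝕜 H]
    (R : Submodule 𝕜 V) (hR : Dense (R : Set V))
    (D0 : R →ₗ[𝕜] (V →SL[starRingEnd 𝕜] 𝕜))
    (hder : ∀ u v : R, D0 u (v : V) + (starRingEnd 𝕜) (D0 v (u : V)) = 0)
    (Wset : Set V)
    (hWset : Wset = {v : V | ∃ f : V →SL[starRingEnd 𝕜] 𝕜,
        ∀ r : R, f (r : V) + (starRingEnd 𝕜) (D0 r v) = 0})
    (DD : V → (V →SL[starRingEnd 𝕜] 𝕜))
    (hDD : ∀ v ∈ Wset, ∀ r : R, DD v (r : V) + (starRingEnd 𝕜) (D0 r v) = 0)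
    (B₀ B₁ : V → H)
    (hB₀lin : ∀ v ∈ Wset, ∀ w ∈ Wset, ∀ c : 𝕜,
        B₀ (v + w) = B₀ v + B₀ w ∧ B₀ (c • v) = c • B₀ v)
    (hB₁lin : ∀ v ∈ Wset, ∀ w ∈ Wset, ∀ c : 𝕜,
        B₁ (v + w) = B₁ v + B₁ w ∧ B₁ (c • v) = c • B₁ v)
    (hB₀bdd : ∃ C : ℝ, ∀ v ∈ Wset, ‖B₀ v‖ ≤ C * (‖v‖ + ‖DD v‖))
    (hB₁bdd : ∃ C : ℝ, ∀ v ∈ Wset, ‖B₁ v‖ ≤ C * (‖v‖ + ‖DD v‖))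
    (hBR : ∀ r : R, B₀ (r : V) = 0 ∧ B₁ (r : V) = 0)
    (hfact : ∀ v ∈ Wset, ∀ w ∈ Wset,
        DD v w + (starRingEnd 𝕜) (DD w v) =
          (inner 𝕜 (B₁ w) (B₁ v) : 𝕜) - inner 𝕜 (B₀ w) (B₀ v))
    (hker : ∀ w ∈ Wset, ∃ w₀ ∈ Wset, ∃ w₁ ∈ Wset,
        B₀ w₀ = 0 ∧ B₁ w₁ = 0 ∧ w = w₀ + w₁)
    (Φ Ψ : H →ₗ[𝕜] H)
    (hΦcontr : ∀ v ∈ Wset, ‖Φ (B₀ v)‖ ≤ ‖B₀ v‖)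
    (hΦrange : ∀ v ∈ Wset, ∃ w ∈ Wset, Φ (B₀ v) = B₁ w)
    (hΨrange : ∀ v ∈ Wset, ∃ w ∈ Wset, Ψ (B₁ v) = B₀ w)
    (hadj : ∀ v ∈ Wset, ∀ w ∈ Wset,
        (inner 𝕜 (Φ (B₀ v)) (B₁ w) : 𝕜) = inner 𝕜 (B₀ v) (Ψ (B₁ w)))
    (𝒜 : V →L[𝕜] (V →SL[starRingEnd 𝕜] 𝕜)) (α : ℝ) (hα : 0 < α)
    (hcoer : ∀ u : V, α * ‖u‖ ^ 2 ≤ RCLike.re (𝒜 u u))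
    (f : V →SL[starRingEnd 𝕜] 𝕜)
    (y₀ : H) (hy₀ : ∃ v ∈ Wset, B₀ v = y₀) :
    ∃! u : V, u ∈ Wset ∧ DD u + 𝒜 u = f ∧ B₀ u - Ψ (B₁ u) = y₀ := by
  subst hWset
  set b₀ := (extDomain D0).linearMapOfAddSMul B₀ hB₀lin
  set b₁ := (extDomain D0).linearMapOfAddSMul B₁ hB₁lin
  have hker' : LinearMap.ker b₀ ⊔ LinearMap.ker b₁ = ⊤ := Submodule.eq_top_iff'.2 fun w => by
    obtain ⟨w₀, h₀, w₁, h₁, hw₀, hw₁, hw⟩ := hker w w.2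
    exact Submodule.mem_sup.2 ⟨⟨w₀, h₀⟩, hw₀, ⟨w₁, h₁⟩, hw₁, Subtype.ext hw.symm⟩
  obtain ⟨v₀, hv₀, rfl⟩ := hy₀
  obtain ⟨C₀, hC₀⟩ := hB₀bdd
  obtain ⟨C₁, hC₁⟩ := hB₁bdd
  obtain ⟨u, hu, huniq⟩ := existsUnique_extDerivation_add_eq (𝒟 := extDerivation hR DD hDD)
    (B₀ := b₀) (B₁ := b₁) hR hder (fun v => hDD v v.2) ⟨C₀, fun v => hC₀ v v.2⟩
    ⟨C₁, fun v => hC₁ v v.2⟩ (fun v hv => hBR ⟨v, hv⟩) (fun v w => hfact v v.2 w w.2) hker'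
    (fun v => hΦcontr v v.2) (fun v => let ⟨w, hw, h⟩ := hΦrange v v.2; ⟨⟨w, hw⟩, h⟩)
    (fun v => let ⟨w, hw, h⟩ := hΨrange v v.2; ⟨⟨w, hw⟩, h⟩) (fun v w => hadj v v.2 w w.2) hα
    hcoer f ⟨⟨v₀, hv₀⟩, rfl⟩
  exact ⟨u, ⟨u.2, hu⟩, fun v ⟨hv, hv'⟩ => congrArg Subtype.val (huniq ⟨v, hv⟩ hv')⟩

/-- Theorem 4.12: well-posedness of the derivation problem with boundary
condition `B₀u - Φ* B₁u = y₀`. Setting: `D0 : R → V'` a derivation on a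
Hilbert space `V` with extended domain `Wset` and extension `DD`; `B₀, B₁`
boundary operators into a Hilbert space `H` (linear and bounded on `W` for
the `W`-norm, contained in the kernels on `R`, factorizing the boundary
form and with `ker B₀ + ker B₁ = W`); `Φ : Ran B₀ → Ran B₁` a linear
contraction with adjoint `Ψ = Φ*`; `𝒜 ∈ L(V,V')` coercive; `f ∈ V'`;
`y₀ ∈ Ran B₀`. Then there is a unique `u ∈ W` with `𝒟u + 𝒜u = f` and
`B₀u - Φ* B₁u = y₀`. -/
theorem stmt18 {𝕜 V H : Type*} [RCLike 𝕜]
    [NormedAddCommGroup V] [InnerProductSpace 𝕜 V] [CompleteSpace V]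
    [NormedAddCommGroup H] [InnerProductSpace 𝕜 H] [CompleteSpace H]
    (R : Submodule 𝕜 V) (hR : Dense (R : Set V))
    (D0 : R →ₗ[𝕜] (V →SL[starRingEnd 𝕜] 𝕜))
    (hder : ∀ u v : R, D0 u (v : V) + (starRingEnd 𝕜) (D0 v (u : V)) = 0)
    (Wset : Set V)
    (hWset : Wset = {v : V | ∃ f : V →SL[starRingEnd 𝕜] 𝕜,
        ∀ r : R, f (r : V) + (starRingEnd 𝕜) (D0 r v) = 0})
    (DD : V → (V →SL[starRingEnd 𝕜] 𝕜))
    (hDD : ∀ v ∈ Wset, ∀ r : R, DD v (r : V) + (starRingEnd 𝕜) (D0 r v) = 0)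
    (B₀ B₁ : V → H)
    (hB₀lin : ∀ v ∈ Wset, ∀ w ∈ Wset, ∀ c : 𝕜,
        B₀ (v + w) = B₀ v + B₀ w ∧ B₀ (c • v) = c • B₀ v)
    (hB₁lin : ∀ v ∈ Wset, ∀ w ∈ Wset, ∀ c : 𝕜,
        B₁ (v + w) = B₁ v + B₁ w ∧ B₁ (c • v) = c • B₁ v)
    (hB₀bdd : ∃ C : ℝ, ∀ v ∈ Wset, ‖B₀ v‖ ≤ C * (‖v‖ + ‖DD v‖))
    (hB₁bdd : ∃ C : ℝ, ∀ v ∈ Wset, ‖B₁ v‖ ≤ C * (‖v‖ + ‖DD v‖))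
    (hBR : ∀ r : R, B₀ (r : V) = 0 ∧ B₁ (r : V) = 0)
    (hfact : ∀ v ∈ Wset, ∀ w ∈ Wset,
        DD v w + (starRingEnd 𝕜) (DD w v) =
          (inner 𝕜 (B₁ w) (B₁ v) : 𝕜) - inner 𝕜 (B₀ w) (B₀ v))
    (hker : ∀ w ∈ Wset, ∃ w₀ ∈ Wset, ∃ w₁ ∈ Wset,
        B₀ w₀ = 0 ∧ B₁ w₁ = 0 ∧ w = w₀ + w₁)
    (Φ Ψ : H →ₗ[𝕜] H)
    (hΦcontr : ∀ v ∈ Wset, ‖Φ (B₀ v)‖ ≤ ‖B₀ v‖)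
    (hΦrange : ∀ v ∈ Wset, ∃ w ∈ Wset, Φ (B₀ v) = B₁ w)
    (hΨrange : ∀ v ∈ Wset, ∃ w ∈ Wset, Ψ (B₁ v) = B₀ w)
    (hadj : ∀ v ∈ Wset, ∀ w ∈ Wset,
        (inner 𝕜 (Φ (B₀ v)) (B₁ w) : 𝕜) = inner 𝕜 (B₀ v) (Ψ (B₁ w)))
    (𝒜 : V →L[𝕜] (V →SL[starRingEnd 𝕜] 𝕜)) (α : ℝ) (hα : 0 < α)
    (hcoer : ∀ u : V, α * ‖u‖ ^ 2 ≤ RCLike.re (𝒜 u u))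
    (f : V →SL[starRingEnd 𝕜] 𝕜)
    (y₀ : H) (hy₀ : ∃ v ∈ Wset, B₀ v = y₀) :
    ∃! u : V, u ∈ Wset ∧ DD u + 𝒜 u = f ∧ B₀ u - Ψ (B₁ u) = y₀ :=
  stmt18_general R hR D0 hder Wset hWset DD hDD B₀ B₁ hB₀lin hB₁lin hB₀bdd hB₁bdd hBR hfact hker Φ Ψ
    hΦcontr hΦrange hΨrange hadj 𝒜 α hα hcoer f y₀ hy₀
end
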